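/- arXiv:1303.2951 — 11 statements merged into one kernel-verified Lean document; each statement's English description precedes it below -/
import Mathlib

section
/- Let a 2-coloring of the edges of the complete graph on t vertices be given, with t ≥ 2^16, and suppose each vertex i has weights (α_i, β_i) with α_i, β_i > 0. Let γ = min_i α_i·β_i. Then there exist a red clique S and a blue clique U such that (Σ_{s∈S} α_s)·(Σ_{u∈U} β_u) ≥ (γ/32)·(log₂ t)². -/
/-!
By Erdős–Szekeres, every vertex set `W` contains a red clique `R` and a blue clique `U` with
`|W| < C(|R| + |U|, |R|) ≤ 2 ^ (3 √(|R| |U|))`. Unless a single product `α i * β j` already beats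
the bound, all ratios `α i * max β / γ` lie in `[1, 2 ^ K)` with `log₂ K ≤ (log₂ t) / 4`, so one
dyadic class `W` of them has `|W| ≥ t / K ≥ t ^ (3/4)`, giving `|R| |U| ≥ (log₂ t)² / 16`. Inside a
class `α` varies by less than a factor `2`, hence `α i * β j > α j * β j / 2 ≥ γ / 2` there, and the
weighted product is at least `(γ / 2) |R| |U|`.
-/

open Finset Real

theorem Nat.choose_mul_pow_mul_pow_le_add_pow {R : Type*} [CommSemiring R] [PartialOrder R]
    [IsOrderedRing R] {x y : R} (hx : 0 ≤ x) (hy : 0 ≤ y) (r s : ℕ) :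
    ((r + s).choose r : R) * x ^ r * y ^ s ≤ (x + y) ^ (r + s) := by
  rw [add_pow]
  convert single_le_sum (f := fun m ↦ x ^ m * y ^ (r + s - m) * ((r + s).choose m : R))
    (fun _ _ ↦ by positivity) (mem_range.2 (Nat.lt_succ_of_le (Nat.le_add_right r s))) using 1
  simp only [Nat.add_sub_cancel_left]
  ring

theorem Nat.choose_le_exp_mul_add_div (r s : ℕ) {y : ℝ} (hy : 0 < y) :
    ((r + s).choose r : ℝ) ≤ exp (r * y + s / y) := by
  have hbin := r.choose_mul_pow_mul_pow_le_add_pow zero_le_one hy.le s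
  rw [one_pow, mul_one, ← le_div_iff₀ (by positivity), pow_add, mul_div_assoc, ← div_pow,
    add_div, div_self hy.ne', one_div, add_comm _ 1] at hbin
  have hexp : exp (r * y + s / y) = exp y ^ r * exp y⁻¹ ^ s := by
    rw [exp_add, ← exp_nat_mul, ← exp_nat_mul, div_eq_mul_inv]
  calc ((r + s).choose r : ℝ) ≤ (1 + y) ^ r * (1 + y⁻¹) ^ s := hbin
    _ ≤ exp (r * y + s / y) := by
        rw [hexp]
        gcongr <;> linarith [add_one_le_exp y, add_one_le_exp y⁻¹]

theorem Nat.choose_le_exp_two_mul_sqrt (r s : ℕ) :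
    ((r + s).choose r : ℝ) ≤ exp (2 * √(r * s)) := by
  rcases Nat.eq_zero_or_pos r with rfl | hr
  · simp
  rcases Nat.eq_zero_or_pos s with rfl | hs
  · simp
  have hr' : (0 : ℝ) < √r := Real.sqrt_pos.2 (by exact_mod_cast hr)
  have hs' : (0 : ℝ) < √s := Real.sqrt_pos.2 (by exact_mod_cast hs)
  -- `y = √(s / r)` balances the two terms `r y` and `s / y`
  convert r.choose_le_exp_mul_add_div s (y := √s / √r) (by positivity) using 2
  rw [sqrt_mul (Nat.cast_nonneg r)]
  field_simp
  rw [sq_sqrt (Nat.cast_nonneg _), sq_sqrt (Nat.cast_nonneg _)]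
  ring

theorem Nat.choose_le_two_rpow_three_mul_sqrt (r s : ℕ) :
    ((r + s).choose r : ℝ) ≤ 2 ^ (3 * √(r * s)) := by
  refine (r.choose_le_exp_two_mul_sqrt s).trans ?_
  rw [rpow_def_of_pos two_pos, exp_le_exp, ← mul_assoc]
  have := log_two_gt_d9
  exact mul_le_mul_of_nonneg_right (by norm_num at this ⊢; linarith) (sqrt_nonneg _)

namespace SimpleGraph

variable {V : Type*} (G : SimpleGraph V)

theorem card_le_card_filter_adj_add_card_filter_compl_adj [DecidableEq V] [DecidableRel G.Adj]
    (W : Finset V) (v : V) : #W ≤ #{w ∈ W | G.Adj v w} + #{w ∈ W | Gᶜ.Adj v w} + 1 := by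
  have hW : W ⊆ insert v ({w ∈ W | G.Adj v w} ∪ {w ∈ W | Gᶜ.Adj v w}) := by
    intro w hw
    by_cases hvw : v = w
    · simp [hvw]
    · by_cases hadj : G.Adj v w <;> simp [hw, hadj, hvw]
  calc #W ≤ #(insert v ({w ∈ W | G.Adj v w} ∪ {w ∈ W | Gᶜ.Adj v w})) := card_le_card hW
    _ ≤ _ := (card_insert_le _ _).trans (by gcongr; exact card_union_le _ _)

theorem exists_isNClique_or_exists_isNClique_compl (a b : ℕ) (W : Finset V)
    (hW : (a + b).choose a ≤ #W) :
    (∃ S ⊆ W, G.IsNClique (a + 1) S) ∨ ∃ S ⊆ W, Gᶜ.IsNClique (b + 1) S := by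
  classical
  have hone {H : SimpleGraph V} {W : Finset V} (hW : W.Nonempty) :
      ∃ S ⊆ W, H.IsNClique 1 S :=
    let ⟨v, hv⟩ := hW; ⟨{v}, singleton_subset_iff.2 hv, isNClique_one.2 ⟨v, rfl⟩⟩
  induction a generalizing b W with
  | zero => exact Or.inl (hone (card_pos.1 (by simpa using hW)))
  | succ a iha =>
  induction b generalizing W with
  | zero => exact Or.inr (hone (card_pos.1 (by simpa using hW)))
  | succ b ihb =>
  obtain ⟨v, hv⟩ : W.Nonempty := card_pos.1 ((Nat.choose_pos (by omega)).trans_le hW)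
  have hpascal : (a + 1 + (b + 1)).choose (a + 1) =
      (a + (b + 1)).choose a + (a + 1 + b).choose (a + 1) := by
    rw [show a + 1 + (b + 1) = a + (b + 1) + 1 by omega, Nat.choose_succ_succ',
      show a + (b + 1) = a + 1 + b by omega]
  have hsplit := G.card_le_card_filter_adj_add_card_filter_compl_adj W v
  by_cases hN : (a + (b + 1)).choose a ≤ #{w ∈ W | G.Adj v w}
  · rcases iha (b + 1) _ hN with ⟨S, hSN, hS⟩ | ⟨S, hSN, hS⟩
    · refine Or.inl ⟨insert v S, insert_subset hv (hSN.trans (filter_subset _ _)), ?_⟩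
      exact hS.insert fun w hw ↦ (mem_filter.1 (hSN hw)).2
    · exact Or.inr ⟨S, hSN.trans (filter_subset _ _), hS⟩
  · rcases ihb {w ∈ W | Gᶜ.Adj v w} (by omega) with ⟨S, hSM, hS⟩ | ⟨S, hSM, hS⟩
    · exact Or.inl ⟨S, hSM.trans (filter_subset _ _), hS⟩
    · refine Or.inr ⟨insert v S, insert_subset hv (hSM.trans (filter_subset _ _)), ?_⟩
      exact hS.insert fun w hw ↦ (mem_filter.1 (hSM hw)).2

theorem exists_isClique_isClique_compl_card_lt_choose (W : Finset V) :
    ∃ R ⊆ W, ∃ U ⊆ W, G.IsClique (R : Set V) ∧ Gᶜ.IsClique (U : Set V) ∧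
      #W < (#R + #U).choose #R := by
  classical
  obtain ⟨R, hR, hRmax⟩ :=
    exists_max_image (W.powerset.filter fun S : Finset V ↦ G.IsClique (S : Set V)) (#·)
      ⟨∅, by simp⟩
  obtain ⟨U, hU, hUmax⟩ :=
    exists_max_image (W.powerset.filter fun S : Finset V ↦ Gᶜ.IsClique (S : Set V)) (#·)
      ⟨∅, by simp⟩
  rw [mem_filter, mem_powerset] at hR hU
  refine ⟨R, hR.1, U, hU.1, hR.2, hU.2, lt_of_not_ge fun hW ↦ ?_⟩
  rcases G.exists_isNClique_or_exists_isNClique_compl _ _ W hW with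
    ⟨S, hSW, hS⟩ | ⟨S, hSW, hS⟩
  · have := hRmax S (mem_filter.2 ⟨mem_powerset.2 hSW, hS.isClique⟩)
    exact absurd hS.card_eq (by omega)
  · have := hUmax S (mem_filter.2 ⟨mem_powerset.2 hSW, hS.isClique⟩)
    exact absurd hS.card_eq (by omega)

end SimpleGraph

namespace Finset

variable {ι : Type*}

theorem exists_subset_card_le_mul_card_lt_two_mul (s : Finset ι) (f : ι → ℝ) (K : ℕ)
    (hf : ∀ i ∈ s, 1 ≤ f i ∧ f i < 2 ^ K) :
    ∃ W ⊆ s, #s ≤ K * #W ∧ ∀ i ∈ W, ∀ j ∈ W, f j < 2 * f i := by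
  classical
  rcases s.eq_empty_or_nonempty with rfl | ⟨i₀, hi₀⟩
  · exact ⟨∅, subset_refl _, by simp, by simp⟩
  set k : ι → ℕ := fun i ↦ ⌊logb 2 (f i)⌋₊
  have hk (i) (hi : i ∈ s) : 2 ^ k i ≤ f i ∧ f i < 2 ^ (k i + 1) := by
    have hlog : 0 ≤ logb 2 (f i) := logb_nonneg one_lt_two (hf i hi).1
    have hpos : 0 < f i := zero_lt_one.trans_le (hf i hi).1
    constructor
    · rw [← rpow_natCast, ← le_logb_iff_rpow_le one_lt_two hpos]
      exact Nat.floor_le hlog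
    · rw [← rpow_natCast, ← logb_lt_iff_lt_rpow one_lt_two hpos, Nat.cast_add_one]
      exact Nat.lt_floor_add_one _
  have hmaps : ∀ i ∈ s, k i ∈ range K := by
    intro i hi
    rw [mem_range, ← pow_lt_pow_iff_right₀ (one_lt_two (α := ℝ))]
    exact (hk i hi).1.trans_lt (hf i hi).2
  have hK : (0 : ℝ) < K := by exact_mod_cast (mem_range.1 (hmaps i₀ hi₀)).pos
  obtain ⟨n, -, hn⟩ := exists_le_card_fiber_of_nsmul_le_card_of_maps_to hmaps
    ⟨k i₀, hmaps i₀ hi₀⟩ (b := (#s : ℝ) / K)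
    (by rw [card_range, nsmul_eq_mul, mul_div_cancel₀ _ hK.ne'])
  refine ⟨{i ∈ s | k i = n}, filter_subset _ _, ?_, ?_⟩
  · rw [div_le_iff₀' hK] at hn
    exact_mod_cast hn
  · intro i hi j hj
    rw [mem_filter] at hi hj
    calc f j < 2 ^ (k j + 1) := (hk j hj.1).2
      _ = 2 * 2 ^ k i := by rw [hi.2, hj.2, pow_succ']
      _ ≤ 2 * f i := by gcongr; exact (hk i hi.1).1

theorem exists_subset_card_le_mul_card_half_le_mul (s : Finset ι) (α β : ι → ℝ) {γ : ℝ}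
    (K : ℕ) (hγ : 0 < γ) (hβ : ∀ i ∈ s, 0 < β i) (hγle : ∀ i ∈ s, γ ≤ α i * β i)
    (hK : ∀ i ∈ s, ∀ j ∈ s, α i * β j < 2 ^ K * γ) :
    ∃ W ⊆ s, #s ≤ K * #W ∧ ∀ i ∈ W, ∀ j ∈ W, γ / 2 ≤ α i * β j := by
  rcases s.eq_empty_or_nonempty with rfl | hs
  · exact ⟨∅, subset_refl _, by simp, by simp⟩
  obtain ⟨b, hb, hbmax⟩ := s.exists_max_image β hs
  have hα (i) (hi : i ∈ s) : 0 < α i :=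
    pos_of_mul_pos_left (hγ.trans_le (hγle i hi)) (hβ i hi).le
  obtain ⟨W, hWs, hcard, hW⟩ := s.exists_subset_card_le_mul_card_lt_two_mul
    (fun i ↦ α i * β b / γ) K fun i hi ↦ by
      rw [le_div_iff₀ hγ, one_mul, div_lt_iff₀ hγ]
      exact ⟨(hγle i hi).trans (by gcongr; exacts [(hα i hi).le, hbmax i hi]), hK i hi b hb⟩
  refine ⟨W, hWs, hcard, fun i hi j hj ↦ ?_⟩
  have hji : α j < 2 * α i := by
    have := hW i hi j hj
    rw [← mul_div_assoc, div_lt_div_iff_of_pos_right hγ, ← mul_assoc] at this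
    exact lt_of_mul_lt_mul_right this (hβ b hb).le
  nlinarith [hγle j (hWs hj), hβ j (hWs hj)]

theorem card_mul_card_mul_le_sum_mul_sum (R U : Finset ι) (α β : ι → ℝ) {c : ℝ}
    (hc : ∀ i ∈ R, ∀ j ∈ U, c ≤ α i * β j) :
    #R * #U * c ≤ (∑ i ∈ R, α i) * ∑ j ∈ U, β j := by
  rw [sum_mul_sum, mul_assoc, ← nsmul_eq_mul, ← nsmul_eq_mul]
  exact card_nsmul_le_sum _ _ _ fun i hi ↦ card_nsmul_le_sum _ _ _ (hc i hi)

end Finset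

theorem Real.logb_two_le_div_four {x : ℝ} (hx : 16 ≤ x) : logb 2 x ≤ x / 4 := by
  have hlog2 : 2 / 3 < log 2 := by have := log_two_gt_d9; norm_num at this ⊢; linarith
  have hsplit : logb 2 x = logb 2 (x / 16) + 4 := by
    rw [logb_div (by positivity) (by norm_num), show (16 : ℝ) = 2 ^ (4 : ℕ) by norm_num,
      logb_pow, logb_self_eq_one one_lt_two]
    ring
  have hle : logb 2 (x / 16) ≤ (x / 16 - 1) * (3 / 2) := by
    rw [logb, div_le_iff₀ (log_pos one_lt_two)]
    nlinarith [log_le_sub_one_of_pos (show 0 < x / 16 by positivity),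
      log_nonneg (show 1 ≤ x / 16 by linarith)]
  linarith

theorem exists_sq_div_lt_two_pow_logb_le {L : ℝ} (hL : 16 ≤ L) :
    ∃ K : ℕ, L ^ 2 / 32 < 2 ^ K ∧ logb 2 K ≤ L / 4 := by
  have hy : logb 2 (L ^ 2 / 32) = 2 * logb 2 L - 5 := by
    rw [logb_div (by positivity) (by norm_num), show (32 : ℝ) = 2 ^ (5 : ℕ) by norm_num,
      logb_pow, logb_pow, logb_self_eq_one one_lt_two]
    ring
  have hyL := logb_two_le_div_four hL
  have hy0 : 0 ≤ logb 2 (L ^ 2 / 32) := logb_nonneg one_lt_two (by nlinarith)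
  refine ⟨⌊logb 2 (L ^ 2 / 32)⌋₊ + 1, ?_, ?_⟩
  · rw [← rpow_natCast 2, ← logb_lt_iff_lt_rpow one_lt_two (by positivity), Nat.cast_add_one]
    exact Nat.lt_floor_add_one _
  · have hK : ((⌊logb 2 (L ^ 2 / 32)⌋₊ + 1 : ℕ) : ℝ) ≤ L := by
      push_cast
      linarith [Nat.floor_le hy0]
    exact (logb_le_logb_of_le one_lt_two (by positivity) hK).trans hyL

theorem sq_logb_le_sixteen_mul {t K w : ℕ} {x : ℝ} (ht : 0 < t) (hL : 0 ≤ logb 2 t)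
    (hK : logb 2 K ≤ logb 2 t / 4) (htKw : t ≤ K * w) (hw : (w : ℝ) ≤ 2 ^ (3 * √x))
    (hx : 0 ≤ x) : logb 2 t ^ 2 ≤ 16 * x := by
  have hKw : 0 < K * w := ht.trans_le htKw
  have hK0 : (0 : ℝ) < K := by exact_mod_cast Nat.pos_of_mul_pos_right hKw
  have hw0 : (0 : ℝ) < w := by exact_mod_cast Nat.pos_of_mul_pos_left hKw
  have hlogw : logb 2 w ≤ 3 * √x := by
    simpa [logb_rpow] using logb_le_logb_of_le one_lt_two hw0 hw
  have hlogt : logb 2 t ≤ logb 2 K + logb 2 w := by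
    rw [← logb_mul hK0.ne' hw0.ne']
    exact logb_le_logb_of_le one_lt_two (by exact_mod_cast ht) (by exact_mod_cast htKw)
  have hsqrt : logb 2 t ≤ 4 * √x := by linarith
  calc logb 2 t ^ 2 ≤ (4 * √x) ^ 2 := pow_le_pow_left₀ hL hsqrt 2
    _ = 16 * x := by rw [mul_pow, sq_sqrt hx]; norm_num

/-- Weighted Ramsey theorem: in a 2-coloring (red = `true`, blue = `false`) of `K_t`
with `t ≥ 2^16` and vertex weights `(α i, β i)`, taking `γ = min_i α i * β i`,
there is a red clique `S` and a blue clique `U` with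
`(Σ_{s∈S} α s)·(Σ_{u∈U} β u) ≥ (γ/32)·(log₂ t)²`. -/
theorem weighted_ramsey (t : ℕ) (ht : 2 ^ 16 ≤ t) (F : Fin t → Fin t → Bool)
    (hsym : ∀ u v, F u v = F v u)
    (α β : Fin t → ℝ) (hα : ∀ i, 0 < α i) (hβ : ∀ i, 0 < β i)
    (γ : ℝ) (hγ : IsLeast {x : ℝ | ∃ i, x = α i * β i} γ) :
    ∃ S U : Finset (Fin t),
      (∀ u ∈ S, ∀ v ∈ S, u ≠ v → F u v = true) ∧
      (∀ u ∈ U, ∀ v ∈ U, u ≠ v → F u v = false) ∧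
      (∑ s ∈ S, α s) * (∑ u ∈ U, β u) ≥ (γ / 32) * (Real.logb 2 t) ^ 2 := by
  obtain ⟨⟨i₀, hi₀⟩, hγle⟩ := hγ
  have hγ0 : 0 < γ := hi₀ ▸ mul_pos (hα i₀) (hβ i₀)
  by_cases hbig : ∃ i j, γ / 32 * logb 2 t ^ 2 ≤ α i * β j
  · obtain ⟨i, j, h⟩ := hbig
    exact ⟨{i}, {j}, by simp, by simp, by simpa using h⟩
  simp only [not_exists, not_le] at hbig
  have hL : 16 ≤ logb 2 t := by
    rw [le_logb_iff_rpow_le one_lt_two (by positivity)]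
    exact_mod_cast ht
  obtain ⟨K, hK, hKL⟩ := exists_sq_div_lt_two_pow_logb_le hL
  obtain ⟨W, -, hWK, hW⟩ := univ.exists_subset_card_le_mul_card_half_le_mul α β K hγ0
    (fun i _ ↦ hβ i) (fun i _ ↦ hγle ⟨i, rfl⟩) fun i _ j _ ↦ by nlinarith [hbig i j]
  let G : SimpleGraph (Fin t) := SimpleGraph.fromRel fun u v ↦ F u v = true
  obtain ⟨R, hRW, U, hUW, hR, hU, hWRU⟩ := G.exists_isClique_isClique_compl_card_lt_choose W
  refine ⟨R, U, fun u hu v hv huv ↦ ?_, fun u hu v hv huv ↦ ?_, ?_⟩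
  · exact ((SimpleGraph.fromRel_adj _ _ _).1 (hR hu hv huv)).2.elim id ((hsym u v).trans ·)
  · exact Bool.eq_false_iff.2 fun h ↦
      (hU hu hv huv).2 ((SimpleGraph.fromRel_adj _ _ _).2 ⟨huv, .inl h⟩)
  · have hRU := sq_logb_le_sixteen_mul (by positivity) (by linarith) hKL (by simpa using hWK)
      ((Nat.cast_lt.2 hWRU).le.trans (Nat.choose_le_two_rpow_three_mul_sqrt _ _)) (by positivity)
    have hsum := card_mul_card_mul_le_sum_mul_sum R U α β (c := γ / 2)
      fun i hi j hj ↦ hW i (hRW hi) j (hUW hj)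
    nlinarith
end

section
/- For edge-colorings F₁ of K_{n₁} and F₂ of K_{n₂} using colors from a set R, and any subset S ⊆ R of colors, the maximum size of an S-subchromatic set in the lexicographic product coloring F₁ ⊗ F₂ equals the product of the maximum sizes of S-subchromatic sets in F₁ and in F₂. -/
/-- The lexicographic product coloring `F₁ ⊗ F₂`. -/
def lexProd {n₁ n₂ : ℕ} {R : Type*} (F₁ : Fin n₁ → Fin n₁ → R)
    (F₂ : Fin n₂ → Fin n₂ → R) :
    Fin n₁ × Fin n₂ → Fin n₁ × Fin n₂ → R :=
  fun x y => if x.1 ≠ y.1 then F₁ x.1 y.1 else F₂ x.2 y.2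

/-- The maximum size of an `S`-subchromatic set in `F₁ ⊗ F₂` is the product of the
maximum sizes of `S`-subchromatic sets in `F₁` and in `F₂`. -/
theorem lexProd_subchromatic {n₁ n₂ : ℕ} {R : Type*}
    (F₁ : Fin n₁ → Fin n₁ → R) (F₂ : Fin n₂ → Fin n₂ → R) (S : Set R)
    (g₁ g₂ : ℕ)
    (h₁ : IsGreatest {k : ℕ | ∃ Z : Finset (Fin n₁),
      (∀ u ∈ Z, ∀ v ∈ Z, u ≠ v → F₁ u v ∈ S) ∧ Z.card = k} g₁)
    (h₂ : IsGreatest {k : ℕ | ∃ Z : Finset (Fin n₂),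
      (∀ u ∈ Z, ∀ v ∈ Z, u ≠ v → F₂ u v ∈ S) ∧ Z.card = k} g₂) :
    IsGreatest {k : ℕ | ∃ Z : Finset (Fin n₁ × Fin n₂),
      (∀ u ∈ Z, ∀ v ∈ Z, u ≠ v → lexProd F₁ F₂ u v ∈ S) ∧ Z.card = k} (g₁ * g₂) := by
  obtain ⟨⟨Z₁, hZ₁, hc₁⟩, hub₁⟩ := h₁
  obtain ⟨⟨Z₂, hZ₂, hc₂⟩, hub₂⟩ := h₂
  constructor
  · refine ⟨Z₁ ×ˢ Z₂, ?_, by simp [hc₁, hc₂]⟩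
    rintro ⟨u₁, u₂⟩ hu ⟨v₁, v₂⟩ hv hne
    simp only [Finset.mem_product] at hu hv
    unfold lexProd
    by_cases h : u₁ = v₁
    · subst h
      have h2 : u₂ ≠ v₂ := by simpa using hne
      simpa using hZ₂ u₂ hu.2 v₂ hv.2 h2
    · simpa [h] using hZ₁ u₁ hu.1 v₁ hv.1 h
  · rintro k ⟨Z, hZ, rfl⟩
    set P : Finset (Fin n₁) := Z.image Prod.fst with hP
    have hcard : Z.card = ∑ u ∈ P, (Z.filter (fun z => z.1 = u)).card := by
      apply Finset.card_eq_sum_card_fiberwise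
      intro x hx; exact Finset.mem_image_of_mem _ hx
    have hPsub : P.card ≤ g₁ := by
      apply hub₁
      refine ⟨P, ?_, rfl⟩
      intro u hu v hv huv
      simp only [hP, Finset.mem_image] at hu hv
      obtain ⟨x, hx, rfl⟩ := hu
      obtain ⟨y, hy, rfl⟩ := hv
      have := hZ x hx y hy (fun h => huv (by rw [h]))
      simpa [lexProd, huv] using this
    have hfib : ∀ u ∈ P, (Z.filter (fun z => z.1 = u)).card ≤ g₂ := by
      intro u _
      apply hub₂
      refine ⟨(Z.filter (fun z => z.1 = u)).image Prod.snd, ?_, ?_⟩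
      · intro a ha b hb hab
        simp only [Finset.mem_image, Finset.mem_filter] at ha hb
        obtain ⟨x, ⟨hx, hx1⟩, rfl⟩ := ha
        obtain ⟨y, ⟨hy, hy1⟩, rfl⟩ := hb
        have hxy : x ≠ y := fun h => hab (by rw [h])
        have := hZ x hx y hy hxy
        have h1 : x.1 = y.1 := hx1.trans hy1.symm
        simpa [lexProd, h1] using this
      · apply Finset.card_image_of_injOn
        intro x hx y hy hxy
        simp only [Finset.coe_filter, Set.mem_setOf_eq] at hx hy
        exact Prod.ext (hx.2.trans hy.2.symm) hxy
    calc Z.card = ∑ u ∈ P, (Z.filter (fun z => z.1 = u)).card := hcard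
      _ ≤ ∑ _u ∈ P, g₂ := Finset.sum_le_sum hfib
      _ = P.card * g₂ := by rw [Finset.sum_const, smul_eq_mul]
      _ ≤ g₁ * g₂ := Nat.mul_le_mul_right _ hPsub
end

section
/- If F₁ and F₂ are Gallai colorings of E(K_{n₁}) and E(K_{n₂}) respectively, then the lexicographic product coloring F₁ ⊗ F₂ is a Gallai coloring of E(K_{n₁·n₂}). -/
/-- `F` has no rainbow triangle: among any three distinct vertices, two of the
three connecting edges share a color. -/
def IsRainbowFree {V C : Type*} (F : V → V → C) : Prop :=
  ∀ u v w : V, u ≠ v → u ≠ w → v ≠ w →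
    F u v = F u w ∨ F u v = F v w ∨ F u w = F v w

/-- The lexicographic product of two Gallai colorings is a Gallai coloring. -/
theorem lexProd_gallai {n₁ n₂ : ℕ} {R : Type*}
    (F₁ : Fin n₁ → Fin n₁ → R) (F₂ : Fin n₂ → Fin n₂ → R)
    (hsym₁ : ∀ u v, F₁ u v = F₁ v u) (hsym₂ : ∀ u v, F₂ u v = F₂ v u)
    (hG₁ : IsRainbowFree F₁) (hG₂ : IsRainbowFree F₂) :
    IsRainbowFree (lexProd F₁ F₂) := by
  intro u v w huv huw hvw
  by_cases h1 : u.1 = v.1 <;> by_cases h2 : u.1 = w.1 <;> by_cases h3 : v.1 = w.1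
  · have hu2 : u.2 ≠ v.2 := fun h => huv (Prod.ext h1 h)
    have hu3 : u.2 ≠ w.2 := fun h => huw (Prod.ext h2 h)
    have hv3 : v.2 ≠ w.2 := fun h => hvw (Prod.ext h3 h)
    simpa [lexProd, h1, h2, h3] using hG₂ u.2 v.2 w.2 hu2 hu3 hv3
  · exact absurd (h1.symm.trans h2) h3
  · exact absurd (h1.trans h3) h2
  · right; right
    simp only [lexProd, if_pos h2, if_pos h3]
    rw [h1]
  · exact absurd (h2.trans h3.symm) h1
  · right; left
    simp only [lexProd, if_pos h1, if_pos h3]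
    rw [h2, hsym₁]
  · left
    simp only [lexProd, if_pos h1, if_pos h2]
    rw [h3]
  · simpa [lexProd, h1, h2, h3] using hG₁ u.1 v.1 w.1 h1 h2 h3
end

section
/- In any Gallai 3-coloring of the edges of a complete graph, the edge set can be partitioned into three graphs, each of which is a cograph and each of which uses only two of the three colors (one graph for each pair of colors). -/
/-- A graph is a cograph iff it has no induced path on four vertices. -/
def IsCograph {V : Type*} (G : SimpleGraph V) : Prop :=
  ¬ ∃ a b x y : V, a ≠ b ∧ a ≠ x ∧ a ≠ y ∧ b ≠ x ∧ b ≠ y ∧ x ≠ y ∧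
      G.Adj a b ∧ G.Adj b x ∧ G.Adj x y ∧ ¬ G.Adj a x ∧ ¬ G.Adj a y ∧ ¬ G.Adj b y

open Finset Relation SimpleGraph

namespace SimpleGraph

variable {V : Type*} {G : SimpleGraph V}

def IsInducedP4 (G : SimpleGraph V) (a b x y : V) : Prop :=
  a ≠ b ∧ a ≠ x ∧ a ≠ y ∧ b ≠ x ∧ b ≠ y ∧ x ≠ y ∧
    G.Adj a b ∧ G.Adj b x ∧ G.Adj x y ∧ ¬ G.Adj a x ∧ ¬ G.Adj a y ∧ ¬ G.Adj b y

theorem IsInducedP4.of_compl {a b x y : V} (h : Gᶜ.IsInducedP4 a b x y) :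
    G.IsInducedP4 x a y b := by
  obtain ⟨hab, hax, hay, hbx, hby, hxy, eab, ebx, exy, nax, nay, nby⟩ := h
  simp only [compl_adj, not_and, not_not] at *
  exact ⟨hax.symm, hxy, hbx.symm, hay, hab, hby.symm, (nax hax).symm, nay hay, (nby hby).symm,
    exy.2, fun h => ebx.2 h.symm, eab.2⟩

theorem isInducedP4_induce_iff {s : Set V} {a b x y : s} :
    (G.induce s).IsInducedP4 a b x y ↔ G.IsInducedP4 a b x y := by
  simp [IsInducedP4, Subtype.ext_iff]

end SimpleGraph

section Cograph

variable {V : Type*} {G : SimpleGraph V} {s t : Set V}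

theorem isCograph_induce_iff :
    IsCograph (G.induce s) ↔
      ∀ a ∈ s, ∀ b ∈ s, ∀ x ∈ s, ∀ y ∈ s, ¬ G.IsInducedP4 a b x y := by
  refine ⟨fun h a ha b hb x hx y hy hP => h ⟨⟨a, ha⟩, ⟨b, hb⟩, ⟨x, hx⟩, ⟨y, hy⟩, ?_⟩,
    fun h ⟨a, b, x, y, hP⟩ => h a a.2 b b.2 x x.2 y y.2 (isInducedP4_induce_iff.1 hP)⟩
  exact isInducedP4_induce_iff.2 hP

theorem isCograph_of_forall_isCograph_induce_finset
    (h : ∀ S : Finset V, IsCograph (G.induce S)) : IsCograph G := by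
  classical
  rintro ⟨a, b, x, y, hP⟩
  exact isCograph_induce_iff.1 (h {a, b, x, y}) a (by simp) b (by simp) x (by simp) y (by simp) hP

theorem IsCograph.induce_mono (h : IsCograph (G.induce t)) (hst : s ⊆ t) :
    IsCograph (G.induce s) := by
  rw [isCograph_induce_iff] at h ⊢
  exact fun a ha b hb x hx y hy => h a (hst ha) b (hst hb) x (hst hx) y (hst hy)

theorem isCograph_induce_of_subsingleton (hs : s.Subsingleton) : IsCograph (G.induce s) :=
  isCograph_induce_iff.2 fun _ ha _ hb _ _ _ _ hP => hP.1 (hs ha hb)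

theorem isCograph_induce_compl_iff : IsCograph (Gᶜ.induce s) ↔ IsCograph (G.induce s) := by
  have key : ∀ H : SimpleGraph V, IsCograph (H.induce s) → IsCograph (Hᶜ.induce s) := by
    simp only [isCograph_induce_iff]
    exact fun H h a ha b hb x hx y hy hP => h x hx a ha y hy b hb hP.of_compl
  exact ⟨fun h => compl_compl G ▸ key _ h, key G⟩

theorem IsCograph.induce_union (hs : IsCograph (G.induce s)) (ht : IsCograph (G.induce t))
    (hst : ∀ a ∈ s, ∀ b ∈ t, ¬ G.Adj a b) : IsCograph (G.induce (s ∪ t)) := by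
  rw [isCograph_induce_iff] at *
  intro a ha b hb x hx y hy hP
  have step : ∀ {u w}, G.Adj u w → w ∈ s ∪ t → (u ∈ s → w ∈ s) ∧ (u ∈ t → w ∈ t) := by
    rintro u w huw (hw | hw)
    · exact ⟨fun _ => hw, fun hu => (hst w hw u hu huw.symm).elim⟩
    · exact ⟨fun hu => (hst u hu w hw huw).elim, fun _ => hw⟩
  obtain ⟨eab, ebx, exy, -⟩ := hP.2.2.2.2.2.2
  rcases ha with ha | ha
  · have hb := (step eab hb).1 ha
    have hx := (step ebx hx).1 hb
    exact hs a ha b hb x hx y ((step exy hy).1 hx) hP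
  · have hb := (step eab hb).2 ha
    have hx := (step ebx hx).2 hb
    exact ht a ha b hb x hx y ((step exy hy).2 hx) hP

theorem IsCograph.induce_union_of_adj (hs : IsCograph (G.induce s))
    (ht : IsCograph (G.induce t)) (hst : ∀ a ∈ s, ∀ b ∈ t, a ≠ b → G.Adj a b) :
    IsCograph (G.induce (s ∪ t)) := by
  rw [← isCograph_induce_compl_iff] at *
  exact hs.induce_union ht fun a ha b hb hab => ((compl_adj G a b).1 hab).2 (hst a ha b hb hab.ne)

end Cograph

/-- Tychonoff: in `ι → α` with `α` finite and discrete, a condition on finitely many coordinates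
defines a closed set, and directed families of nonempty closed sets meet. -/
theorem exists_forall_of_forall_exists_of_local {ι α σ : Type*} [Finite α] [Preorder σ]
    [IsDirected σ (· ≤ ·)] [Nonempty σ] (P : σ → (ι → α) → Prop) (supp : σ → Finset ι)
    (hloc : ∀ s f g, (∀ i ∈ supp s, f i = g i) → P s f → P s g)
    (hanti : ∀ s t f, s ≤ t → P t f → P s f) (hsat : ∀ s, ∃ f, P s f) :
    ∃ f, ∀ s, P s f := by
  let _ : TopologicalSpace α := ⊥
  have : DiscreteTopology α := ⟨rfl⟩
  have hclosed : ∀ s, IsClosed {f | P s f} := by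
    intro s
    let restrict : (ι → α) → (supp s → α) := fun f i => f i
    have hpre : {f | P s f} = restrict ⁻¹' (restrict '' {f | P s f}) := by
      refine (Set.subset_preimage_image _ _).antisymm ?_
      rintro f ⟨g, hg, hgf⟩
      exact hloc s g f (fun i hi => congrFun hgf ⟨i, hi⟩) hg
    rw [hpre]
    exact (isClosed_discrete _).preimage (by fun_prop)
  have hdir : Directed (· ⊇ ·) fun s => {f | P s f} := fun s t =>
    let ⟨u, hsu, htu⟩ := directed_of (· ≤ ·) s t
    ⟨u, fun f => hanti s u f hsu, fun f => hanti t u f htu⟩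
  obtain ⟨f, hf⟩ := IsCompact.nonempty_iInter_of_directed_nonempty_isCompact_isClosed _ hdir
    hsat (fun s => (hclosed s).isCompact) hclosed
  exact ⟨f, Set.mem_iInter.1 hf⟩

section ColorReach

variable {V C : Type*} {F : V → V → C} {g : C} {S : Finset V} {u v x y : V}

def ColorReach (F : V → V → C) (g : C) (S : Finset V) : V → V → Prop :=
  ReflTransGen fun x y => x ∈ S ∧ y ∈ S ∧ F x y = g

theorem colorReach_of_color_eq (hx : x ∈ S) (hy : y ∈ S) (hxy : F x y = g) :
    ColorReach F g S x y :=
  .single ⟨hx, hy, hxy⟩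

theorem ColorReach.symm (hsym : ∀ u v, F u v = F v u) (h : ColorReach F g S x y) :
    ColorReach F g S y x :=
  have : Std.Symm fun x y => x ∈ S ∧ y ∈ S ∧ F x y = g :=
    ⟨fun _ _ ⟨hx, hy, hxy⟩ => ⟨hy, hx, hsym _ _ ▸ hxy⟩⟩
  ReflTransGen.stdSymm.symm _ _ h

theorem ColorReach.mem (h : ColorReach F g S x y) (hx : x ∈ S) : y ∈ S := by
  induction h with
  | refl => exact hx
  | tail _ hst => exact hst.2.1

theorem ColorReach.mem_of_closed [DecidableEq V] {A : Finset V}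
    (hA : ∀ a ∈ A, ∀ b ∈ S \ A, F a b ≠ g) (h : ColorReach F g S x y) (hx : x ∈ A) : y ∈ A := by
  induction h with
  | refl => exact hx
  | tail _ hst ih => exact by_contra fun hc => hA _ ih _ (mem_sdiff.2 ⟨hst.2.1, hc⟩) hst.2.2

/-- Along an edge `bc` of colour `g`, a vertex `u` outside the component sees `b` and `c` in the
same colour, as `F b u ≠ g ≠ F c u` and the triangle `bcu` is not rainbow. -/
theorem ColorReach.color_eq (hG : IsRainbowFree F) (h : ColorReach F g S x y) (hu : u ∈ S)
    (hxu : ¬ ColorReach F g S x u) : F x u = F y u := by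
  induction h with
  | refl => rfl
  | @tail b c hxb hbc ih =>
    obtain ⟨hb, hc, hbcg⟩ := hbc
    have hxc : ColorReach F g S x c := hxb.tail ⟨hb, hc, hbcg⟩
    have hbu : F b u ≠ g := fun h => hxu (hxb.tail ⟨hb, hu, h⟩)
    have hcu : F c u ≠ g := fun h => hxu (hxc.tail ⟨hc, hu, h⟩)
    rw [ih]
    obtain rfl | hne := eq_or_ne b c
    · rfl
    rcases hG b c u hne (fun h => hxu (h ▸ hxb)) (fun h => hxu (h ▸ hxc)) with h | h | h
    · exact absurd (h ▸ hbcg) hbu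
    · exact absurd (h ▸ hbcg) hcu
    · exact h

/-- Take a `g`-neighbour `z` of `v` in the component of `u`: the triangle `v y z` is not rainbow,
and `y` sees `u` and `z` in the same colour. -/
theorem color_eq_of_not_colorReach (hsym : ∀ u v, F u v = F v u) (hG : IsRainbowFree F)
    (hv : v ∉ S) (hneigh : ∀ u ∈ S, ∃ z, ColorReach F g S u z ∧ F v z = g) (hy : y ∈ S)
    (hu : u ∈ S) (hyu : ¬ ColorReach F g S y u) (hvy : F v y ≠ g) : F y u = F v y := by
  obtain ⟨z, huz, hvz⟩ := hneigh u hu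
  have hz : z ∈ S := huz.mem hu
  have hyz : ¬ ColorReach F g S y z := fun h => hyu (h.trans (huz.symm hsym))
  have hyz_color : F y z ≠ g := fun h => hyz (colorReach_of_color_eq hy hz h)
  have hyz_eq : F y z = F v y := by
    rcases hG v y z (fun h => hv (h ▸ hy)) (fun h => hv (h ▸ hz))
      (fun h => hyz (h ▸ .refl)) with h | h | h
    · exact absurd (h.trans hvz) hvy
    · exact h.symm
    · exact absurd (h.symm.trans hvz) hyz_color
  calc F y u = F u y := hsym y u
    _ = F z y := huz.color_eq hG hy fun h => hyu (h.symm hsym)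
    _ = F y z := hsym z y
    _ = F v y := hyz_eq

theorem colorReach_of_ne_color (hsym : ∀ u v, F u v = F v u) (hG : IsRainbowFree F)
    (hv : v ∉ S) (hneigh : ∀ u ∈ S, ∃ z, ColorReach F g S u z ∧ F v z = g) (hx : x ∈ S)
    (hy : y ∈ S) (hvx : F v x ≠ g) (hvy : F v y ≠ g) (hxy : F v x ≠ F v y) {a b : V}
    (ha : a ∈ S) (hb : b ∈ S) : ColorReach F g S a b := by
  by_contra hab
  have key : ∀ {y u}, y ∈ S → u ∈ S → ¬ ColorReach F g S y u → F v y ≠ g → F y u = F v y :=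
    color_eq_of_not_colorReach hsym hG hv hneigh
  by_cases hconn : ColorReach F g S x y
  · obtain ⟨w, hw, hxw⟩ : ∃ w ∈ S, ¬ ColorReach F g S x w := by
      by_cases hxa : ColorReach F g S x a
      · exact ⟨b, hb, fun hxb => hab ((hxa.symm hsym).trans hxb)⟩
      · exact ⟨a, ha, hxa⟩
    have hyw : ¬ ColorReach F g S y w := fun h => hxw (hconn.trans h)
    exact hxy ((key hx hw hxw hvx).symm.trans
      ((hconn.color_eq hG hw hxw).trans (key hy hw hyw hvy)))
  · exact hxy ((key hx hy hconn hvx).symm.trans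
      ((hsym x y).trans (key hy hx (fun h => hconn (h.symm hsym)) hvy)))

end ColorReach

theorem exists_pair_ne_of_three {C : Type*} (hC : ∃ a b c : C, a ≠ b ∧ a ≠ c ∧ b ≠ c) (g : C) :
    ∃ r b : C, r ≠ g ∧ b ≠ g ∧ r ≠ b := by
  obtain ⟨a, b, c, hab, hac, hbc⟩ := hC
  by_cases ha : a = g
  · exact ⟨b, c, ha ▸ hab.symm, ha ▸ hac.symm, hbc⟩
  by_cases hb : b = g
  · exact ⟨a, c, ha, hb ▸ hbc.symm, hac⟩
  exact ⟨a, b, ha, hb, hab⟩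

section Cut

variable {V C : Type*} [DecidableEq V] {F : V → V → C} {g : C} {S : Finset V} {v : V}

/-- Witnesses that the graph of colour `m` on `S` is disconnected. -/
def IsColorCut (F : V → V → C) (m : C) (S A : Finset V) : Prop :=
  A ⊆ S ∧ A.Nonempty ∧ (S \ A).Nonempty ∧ ∀ a ∈ A, ∀ b ∈ S \ A, F a b ≠ m

theorem isColorCut_singleton_insert (hS : (insert v S).Nontrivial) (hv : v ∉ S) {m : C}
    (hm : ∀ u ∈ S, F v u ≠ m) : IsColorCut F m (insert v S) {v} := by
  obtain ⟨u, hu⟩ : S.Nonempty := by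
    obtain ⟨p, hp, q, hq, hpq⟩ := hS
    rcases eq_or_ne p v with rfl | hpv
    · exact ⟨q, (mem_insert.1 hq).resolve_left hpq.symm⟩
    · exact ⟨p, (mem_insert.1 hp).resolve_left hpv⟩
  refine ⟨by simp, singleton_nonempty v, ⟨u, by simp [hu, ne_of_mem_of_not_mem hu hv]⟩, ?_⟩
  simp only [mem_singleton, mem_sdiff, mem_insert]
  rintro a rfl b ⟨hb | hb, hbv⟩
  · exact absurd hb hbv
  · exact hm b hb

theorem isColorCut_insert_of_colorReach (hsym : ∀ u v, F u v = F v u) (hv : v ∉ S) {w : V}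
    (hw : w ∈ S) (hcomp : ∀ z, ColorReach F g S w z → F v z ≠ g) :
    ∃ A, IsColorCut F g (insert v S) A := by
  classical
  refine ⟨S.filter (ColorReach F g S w), (filter_subset _ _).trans (subset_insert v S),
    ⟨w, mem_filter.2 ⟨hw, .refl⟩⟩, ⟨v, mem_sdiff.2 ⟨mem_insert_self v S,
      fun h => hv (mem_filter.1 h).1⟩⟩, ?_⟩
  simp only [mem_filter, mem_sdiff, mem_insert, not_and]
  rintro a ⟨ha, hwa⟩ b ⟨rfl | hb, hwb⟩
  · exact hsym a b ▸ hcomp a hwa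
  · exact fun hab => hwb hb (hwa.tail ⟨ha, hb, hab⟩)

/-- A vertex `v` added to a set with a disconnected colour `g` is cut off, or so is a `g`-component,
unless `v` sees every colour and has a `g`-neighbour in every `g`-component; but then the
`g`-components merge. -/
theorem exists_isColorCut (hsym : ∀ u v, F u v = F v u) (hG : IsRainbowFree F)
    (hC : ∃ a b c : C, a ≠ b ∧ a ≠ c ∧ b ≠ c) (hS : S.Nontrivial) :
    ∃ m A, IsColorCut F m S A := by
  induction S using Finset.induction_on with
  | empty => exact absurd hS (by simp)
  | insert v S hv ih =>
  by_cases hmiss : ∃ m, ∀ u ∈ S, F v u ≠ m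
  · obtain ⟨m, hm⟩ := hmiss
    exact ⟨m, {v}, isColorCut_singleton_insert hS hv hm⟩
  push Not at hmiss
  have hSnt : S.Nontrivial := by
    obtain ⟨a, b, -, hab, -⟩ := hC
    obtain ⟨x, hx, rfl⟩ := hmiss a
    obtain ⟨y, hy, rfl⟩ := hmiss b
    exact ⟨x, hx, y, hy, fun h => hab (h ▸ rfl)⟩
  obtain ⟨g, A, hAS, ⟨a, ha⟩, ⟨b, hb⟩, hcross⟩ := ih hSnt
  by_cases hcomp : ∃ w ∈ S, ∀ z, ColorReach F g S w z → F v z ≠ g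
  · obtain ⟨w, hw, hcomp⟩ := hcomp
    exact ⟨g, isColorCut_insert_of_colorReach hsym hv hw hcomp⟩
  push Not at hcomp
  obtain ⟨r, r', hrg, hr'g, hrr'⟩ := exists_pair_ne_of_three hC g
  obtain ⟨x, hx, rfl⟩ := hmiss r
  obtain ⟨y, hy, rfl⟩ := hmiss r'
  have hab : ColorReach F g S a b :=
    colorReach_of_ne_color hsym hG hv hcomp hx hy hrg hr'g hrr' (hAS ha) (mem_sdiff.1 hb).1
  exact absurd (hab.mem_of_closed hcross ha) (mem_sdiff.1 hb).2

end Cut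

section Labeling

variable {V C : Type*} {F : V → V → C} {S T : Finset V}

/-- A labelling `h` of the pairs of vertices splits the complete graph into the graphs
`labelGraph h c`, one for each label `c`. -/
def labelGraph (h : Sym2 V → C) (c : C) : SimpleGraph V :=
  SimpleGraph.fromEdgeSet {e | h e = c}

theorem labelGraph_adj {h : Sym2 V → C} {c : C} {u w : V} :
    (labelGraph h c).Adj u w ↔ h s(u, w) = c ∧ u ≠ w :=
  SimpleGraph.fromEdgeSet_adj _

theorem induce_labelGraph_congr {h₁ h₂ : Sym2 V → C} {s : Set V}
    (heq : ∀ u ∈ s, ∀ w ∈ s, h₁ s(u, w) = h₂ s(u, w)) (c : C) :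
    (labelGraph h₁ c).induce s = (labelGraph h₂ c).induce s := by
  ext ⟨u, hu⟩ ⟨w, hw⟩
  simp [labelGraph_adj, heq u hu w hw]

def IsCographPartitionOn (F : V → V → C) (S : Finset V) (h : Sym2 V → C) : Prop :=
  (∀ u ∈ S, ∀ w ∈ S, u ≠ w → h s(u, w) ≠ F u w) ∧ ∀ c, IsCograph ((labelGraph h c).induce S)

theorem IsCographPartitionOn.congr {h₁ h₂ : Sym2 V → C} (h : IsCographPartitionOn F S h₁)
    (heq : ∀ u ∈ S, ∀ w ∈ S, h₁ s(u, w) = h₂ s(u, w)) : IsCographPartitionOn F S h₂ :=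
  ⟨fun u hu w hw huw => heq u hu w hw ▸ h.1 u hu w hw huw,
    fun c => induce_labelGraph_congr heq c ▸ h.2 c⟩

theorem IsCographPartitionOn.mono {h : Sym2 V → C} (hT : IsCographPartitionOn F T h)
    (hST : S ⊆ T) : IsCographPartitionOn F S h :=
  ⟨fun u hu w hw => hT.1 u (hST hu) w (hST hw), fun c => (hT.2 c).induce_mono hST⟩

theorem isCographPartitionOn_of_subsingleton (hS : (S : Set V).Subsingleton) (h : Sym2 V → C) :
    IsCographPartitionOn F S h :=
  ⟨fun _ hu _ hw huw => absurd (hS hu hw) huw, fun _ => isCograph_induce_of_subsingleton hS⟩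

/-- Labelling all pairs across a cut by a colour `m` that they avoid turns the label-`m` graph
into the join, and every other label graph into the disjoint union, of those on the sides. -/
theorem IsCographPartitionOn.union [DecidableEq V] (hsym : ∀ u v, F u v = F v u)
    {A B : Finset V} {hA hB : Sym2 V → C} {m : C} (hAB : Disjoint A B)
    (hcross : ∀ a ∈ A, ∀ b ∈ B, F a b ≠ m) (hA' : IsCographPartitionOn F A hA)
    (hB' : IsCographPartitionOn F B hB) :
    IsCographPartitionOn F (A ∪ B)
      (fun e => if e ∈ A.sym2 then hA e else if e ∈ B.sym2 then hB e else m) := by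
  set h : Sym2 V → C := fun e => if e ∈ A.sym2 then hA e else if e ∈ B.sym2 then hB e else m
  have notB : ∀ {u}, u ∈ A → u ∉ B := fun hu => disjoint_left.1 hAB hu
  have onA : ∀ u ∈ A, ∀ w ∈ A, h s(u, w) = hA s(u, w) := by
    intro u hu w hw
    simp [h, hu, hw]
  have onB : ∀ u ∈ B, ∀ w ∈ B, h s(u, w) = hB s(u, w) := by
    intro u hu w hw
    simp [h, hu, hw, disjoint_right.1 hAB hu]
  have onAB : ∀ a ∈ A, ∀ b ∈ B, h s(a, b) = m := by
    intro a ha b hb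
    simp [h, notB ha, disjoint_right.1 hAB hb]
  refine ⟨?_, fun c => ?_⟩
  · intro u hu w hw huw
    rcases mem_union.1 hu with hu | hu <;> rcases mem_union.1 hw with hw | hw
    · exact onA u hu w hw ▸ hA'.1 u hu w hw huw
    · exact onAB u hu w hw ▸ (hcross u hu w hw).symm
    · rw [Sym2.eq_swap, onAB w hw u hu, hsym]
      exact (hcross w hw u hu).symm
    · exact onB u hu w hw ▸ hB'.1 u hu w hw huw
  have hAc := induce_labelGraph_congr onA c ▸ hA'.2 c
  have hBc := induce_labelGraph_congr onB c ▸ hB'.2 c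
  rw [coe_union]
  obtain rfl | hcm := eq_or_ne c m
  · exact hAc.induce_union_of_adj hBc fun a ha b hb hab => labelGraph_adj.2 ⟨onAB a ha b hb, hab⟩
  · exact hAc.induce_union hBc fun a ha b hb hab => hcm ((labelGraph_adj.1 hab).1 ▸ onAB a ha b hb)

theorem exists_isCographPartitionOn (hsym : ∀ u v, F u v = F v u) (hG : IsRainbowFree F)
    (hC : ∃ a b c : C, a ≠ b ∧ a ≠ c ∧ b ≠ c) (S : Finset V) :
    ∃ h, IsCographPartitionOn F S h := by
  classical
  induction S using Finset.strongInduction with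
  | H S ih =>
  rcases (S : Set V).subsingleton_or_nontrivial with hS | hS
  · obtain ⟨c, -⟩ := hC
    exact ⟨fun _ => c, isCographPartitionOn_of_subsingleton hS _⟩
  obtain ⟨m, A, hAS, hA, hSA, hcross⟩ := exists_isColorCut hsym hG hC hS
  obtain ⟨lA, hlA⟩ := ih A (hAS.ssubset_of_not_subset (sdiff_nonempty.1 hSA))
  obtain ⟨lB, hlB⟩ := ih (S \ A) (sdiff_ssubset hAS hA)
  exact ⟨_, union_sdiff_of_subset hAS ▸ hlA.union hsym disjoint_sdiff hcross hlB⟩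

/-- The finite case extends to all of `V` by compactness, since being a partition on `S` only
depends on the labels of pairs in `S`. -/
theorem exists_labeling_isCograph [Finite C] (hsym : ∀ u v, F u v = F v u)
    (hG : IsRainbowFree F) (hC : ∃ a b c : C, a ≠ b ∧ a ≠ c ∧ b ≠ c) :
    ∃ h : Sym2 V → C,
      (∀ u w, u ≠ w → h s(u, w) ≠ F u w) ∧ ∀ c, IsCograph (labelGraph h c) := by
  classical
  obtain ⟨h, hh⟩ := exists_forall_of_forall_exists_of_local (IsCographPartitionOn F) Finset.sym2
    (fun _ _ _ heq hf => hf.congr fun u hu w hw => heq _ (mk_mem_sym2_iff.2 ⟨hu, hw⟩))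
    (fun _ _ _ hST hf => hf.mono hST) (exists_isCographPartitionOn hsym hG hC)
  exact ⟨h, fun u w => (hh {u, w}).1 u (by simp) w (by simp),
    fun c => isCograph_of_forall_isCograph_induce_finset fun S => (hh S).2 c⟩

end Labeling

/-- In any Gallai 3-coloring of a complete graph, the edge set can be partitioned
into three cographs, the graph indexed by color `c` using only the two colors
different from `c` (one graph for each pair of colors). -/
theorem gallai_partition_cographs {V : Type*} (F : V → V → Fin 3)
    (hsym : ∀ u v, F u v = F v u) (hG : IsRainbowFree F) :
    ∃ G : Fin 3 → SimpleGraph V,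
      (∀ c : Fin 3, ∀ u v : V, (G c).Adj u v → F u v ≠ c) ∧
      (∀ u v : V, u ≠ v → ∃! c : Fin 3, (G c).Adj u v) ∧
      (∀ c : Fin 3, IsCograph (G c)) := by
  obtain ⟨h, havoid, hcograph⟩ := exists_labeling_isCograph hsym hG ⟨0, 1, 2, by decide⟩
  refine ⟨labelGraph h, fun c u w huw => ?_, fun u w huw => ?_, hcograph⟩
  · obtain ⟨rfl, hne⟩ := labelGraph_adj.1 huw
    exact (havoid u w hne).symm
  · exact ⟨h s(u, w), labelGraph_adj.2 ⟨rfl, huw⟩, fun c hc => (labelGraph_adj.1 hc).1.symm⟩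
end

section
/- Every Gallai 3-coloring of the edges of the complete graph on n vertices contains a set of at least n^{1/3} vertices using at most two colors. -/
lemma numineq (x1 x2 x3 y1 y2 y3 z1 z2 z3 : ℕ) :
    1 + x1*x2*x3 + y1*y2*y3 + z1*z2*z3 ≤
      max x1 (y1+z1+1) * max y2 (x2+z2+1) * max z3 (x3+y3+1) := by
  rcases max_cases x1 (y1+z1+1) with ⟨e1,h1⟩|⟨e1,h1⟩ <;>
  rcases max_cases y2 (x2+z2+1) with ⟨e2,h2⟩|⟨e2,h2⟩ <;>
  rcases max_cases z3 (x3+y3+1) with ⟨e3,h3⟩|⟨e3,h3⟩ <;>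
  rw [e1,e2,e3]
  · obtain ⟨a, rfl⟩ := Nat.exists_eq_add_of_le h1
    obtain ⟨b, rfl⟩ := Nat.exists_eq_add_of_le h2
    obtain ⟨c, rfl⟩ := Nat.exists_eq_add_of_le h3
    refine le_trans (show _ ≤ 1 + (y1+z1+1+a)*x2*x3 + y1*(x2+z2+1+b)*y3 + z1*z2*(x3+y3+1+c) by rfl) ?_
    exact Nat.le.intro (k := c + b + b*c + a + a*c + a*b + a*b*c + y3 + y3*b + y3*a + y3*a*b + x3 + x3*b + x3*a + x3*a*b + z2 + z2*c + z2*a + z2*a*c + z2*y3 + z2*y3*a + z2*x3 + z2*x3*a + x2 + x2*c + x2*a + x2*a*c + x2*y3 + x2*y3*a + z1 + z1*c + z1*b + z1*b*c + z1*y3 + z1*y3*b + z1*x3 + z1*x3*b + z1*x2 + z1*x2*c + z1*x2*y3 + y1 + y1*c + y1*b + y1*b*c + y1*x3 + y1*x3*b + y1*z2 + y1*z2*c + y1*z2*x3 + y1*x2 + y1*x2*c) (by ring)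
  · obtain ⟨a, rfl⟩ := Nat.exists_eq_add_of_le h1
    obtain ⟨b, rfl⟩ := Nat.exists_eq_add_of_le h2
    refine le_trans (show _ ≤ 1 + (y1+z1+1+a)*x2*x3 + y1*(x2+z2+1+b)*y3 + z1*z2*(x3+y3) by gcongr <;> omega) ?_
    exact Nat.le.intro (k := b + a + a*b + y3 + y3*b + y3*a + y3*a*b + x3 + x3*b + x3*a + x3*a*b + z2 + z2*a + z2*y3 + z2*y3*a + z2*x3 + z2*x3*a + x2 + x2*a + x2*y3 + x2*y3*a + z1 + z1*b + z1*y3 + z1*y3*b + z1*x3 + z1*x3*b + z1*z2 + z1*x2 + z1*x2*y3 + y1 + y1*b + y1*x3 + y1*x3*b + y1*z2 + y1*z2*x3 + y1*x2) (by ring)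
  · obtain ⟨a, rfl⟩ := Nat.exists_eq_add_of_le h1
    obtain ⟨c, rfl⟩ := Nat.exists_eq_add_of_le h3
    refine le_trans (show _ ≤ 1 + (y1+z1+1+a)*x2*x3 + y1*(x2+z2)*y3 + z1*z2*(x3+y3+1+c) by gcongr <;> omega) ?_
    exact Nat.le.intro (k := c + a + a*c + y3 + y3*a + x3 + x3*a + z2 + z2*c + z2*a + z2*a*c + z2*y3 + z2*y3*a + z2*x3 + z2*x3*a + x2 + x2*c + x2*a + x2*a*c + x2*y3 + x2*y3*a + z1 + z1*c + z1*y3 + z1*x3 + z1*x2 + z1*x2*c + z1*x2*y3 + y1 + y1*c + y1*y3 + y1*x3 + y1*z2 + y1*z2*c + y1*z2*x3 + y1*x2 + y1*x2*c) (by ring)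
  · obtain ⟨a, rfl⟩ := Nat.exists_eq_add_of_le h1
    refine le_trans (show _ ≤ 1 + (y1+z1+1+a)*x2*x3 + y1*(x2+z2)*y3 + z1*z2*(x3+y3) by gcongr <;> omega) ?_
    exact Nat.le.intro (k := a + y3 + y3*a + x3 + x3*a + z2 + z2*a + z2*y3 + z2*y3*a + z2*x3 + z2*x3*a + x2 + x2*a + x2*y3 + x2*y3*a + z1 + z1*y3 + z1*x3 + z1*z2 + z1*x2 + z1*x2*y3 + y1 + y1*y3 + y1*x3 + y1*z2 + y1*z2*x3 + y1*x2) (by ring)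
  · obtain ⟨b, rfl⟩ := Nat.exists_eq_add_of_le h2
    obtain ⟨c, rfl⟩ := Nat.exists_eq_add_of_le h3
    refine le_trans (show _ ≤ 1 + (y1+z1)*x2*x3 + y1*(x2+z2+1+b)*y3 + z1*z2*(x3+y3+1+c) by gcongr <;> omega) ?_
    exact Nat.le.intro (k := c + b + b*c + y3 + y3*b + x3 + x3*b + z2 + z2*c + z2*y3 + z2*x3 + x2 + x2*c + x2*y3 + x2*x3 + z1 + z1*c + z1*b + z1*b*c + z1*y3 + z1*y3*b + z1*x3 + z1*x3*b + z1*x2 + z1*x2*c + z1*x2*y3 + y1 + y1*c + y1*b + y1*b*c + y1*x3 + y1*x3*b + y1*z2 + y1*z2*c + y1*z2*x3 + y1*x2 + y1*x2*c) (by ring)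
  · obtain ⟨b, rfl⟩ := Nat.exists_eq_add_of_le h2
    refine le_trans (show _ ≤ 1 + (y1+z1)*x2*x3 + y1*(x2+z2+1+b)*y3 + z1*z2*(x3+y3) by gcongr <;> omega) ?_
    exact Nat.le.intro (k := b + y3 + y3*b + x3 + x3*b + z2 + z2*y3 + z2*x3 + x2 + x2*y3 + x2*x3 + z1 + z1*b + z1*y3 + z1*y3*b + z1*x3 + z1*x3*b + z1*z2 + z1*x2 + z1*x2*y3 + y1 + y1*b + y1*x3 + y1*x3*b + y1*z2 + y1*z2*x3 + y1*x2) (by ring)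
  · obtain ⟨c, rfl⟩ := Nat.exists_eq_add_of_le h3
    refine le_trans (show _ ≤ 1 + (y1+z1)*x2*x3 + y1*(x2+z2)*y3 + z1*z2*(x3+y3+1+c) by gcongr <;> omega) ?_
    exact Nat.le.intro (k := c + y3 + x3 + z2 + z2*c + z2*y3 + z2*x3 + x2 + x2*c + x2*y3 + x2*x3 + z1 + z1*c + z1*y3 + z1*x3 + z1*x2 + z1*x2*c + z1*x2*y3 + y1 + y1*c + y1*y3 + y1*x3 + y1*z2 + y1*z2*c + y1*z2*x3 + y1*x2 + y1*x2*c) (by ring)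
  · refine le_trans (show _ ≤ 1 + (y1+z1)*x2*x3 + y1*(x2+z2)*y3 + z1*z2*(x3+y3) by gcongr <;> omega) ?_
    exact Nat.le.intro (k := y3 + x3 + z2 + z2*y3 + z2*x3 + x2 + x2*y3 + x2*x3 + z1 + z1*y3 + z1*x3 + z1*z2 + z1*x2 + z1*x2*y3 + y1 + y1*y3 + y1*x3 + y1*z2 + y1*z2*x3 + y1*x2) (by ring)


def ColorFree {n : ℕ} (F : Fin n → Fin n → Fin 3) (i : Fin 3) (S : Finset (Fin n)) : Prop :=
  ∀ u ∈ S, ∀ v ∈ S, u ≠ v → F u v ≠ i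

lemma branch {n : ℕ} (F : Fin n → Fin n → Fin 3) (hsym : ∀ u v, F u v = F v u)
    (hG : IsRainbowFree F) (s : Finset (Fin n)) (v : Fin n) (hv : v ∈ s)
    (i j k : Fin 3) (hij : i ≠ j) (hik : i ≠ k) (hjk : j ≠ k)
    (P Q : Finset (Fin n))
    (hP : P ⊆ (s.erase v).filter (fun u => F v u = j))
    (hQ : Q ⊆ (s.erase v).filter (fun u => F v u = k))
    (hPf : ColorFree F i P) (hQf : ColorFree F i Q) :
    ∃ S, S ⊆ s ∧ ColorFree F i S ∧ S.card = P.card + Q.card + 1 := by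
  have hPm : ∀ u ∈ P, u ≠ v ∧ F v u = j := by
    intro u hu
    have := hP hu
    simp only [Finset.mem_filter, Finset.mem_erase] at this
    exact ⟨this.1.1, this.2⟩
  have hQm : ∀ u ∈ Q, u ≠ v ∧ F v u = k := by
    intro u hu
    have := hQ hu
    simp only [Finset.mem_filter, Finset.mem_erase] at this
    exact ⟨this.1.1, this.2⟩
  have hdisj : Disjoint P Q := by
    rw [Finset.disjoint_left]
    intro u hu hu'
    exact hjk ((hPm u hu).2 ▸ (hQm u hu').2 ▸ rfl)
  have hvPQ : v ∉ P ∪ Q := by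
    simp only [Finset.mem_union]
    rintro (h | h)
    · exact (hPm v h).1 rfl
    · exact (hQm v h).1 rfl
  refine ⟨insert v (P ∪ Q), ?_, ?_, ?_⟩
  · refine Finset.insert_subset hv (Finset.union_subset ?_ ?_)
    · exact hP.trans ((Finset.filter_subset _ _).trans (Finset.erase_subset _ _))
    · exact hQ.trans ((Finset.filter_subset _ _).trans (Finset.erase_subset _ _))
  · intro u hu w hw huw
    simp only [Finset.mem_insert, Finset.mem_union] at hu hw
    -- helper for the cross case
    have cross : ∀ u ∈ P, ∀ w ∈ Q, F u w ≠ i := by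
      intro u hu w hw
      obtain ⟨huv, hufj⟩ := hPm u hu
      obtain ⟨hwv, hwfk⟩ := hQm w hw
      have huw' : u ≠ w := by
        intro h; exact hjk (hufj ▸ h ▸ hwfk)
      rcases hG v u w (Ne.symm huv) (Ne.symm hwv) huw' with h | h | h
      · exact absurd (hufj ▸ hwfk ▸ h) hjk
      · rw [← h, hufj]; exact fun e => hij e.symm
      · rw [← h, hwfk]; exact fun e => hik e.symm
    rcases hu with rfl | hu | hu <;> rcases hw with rfl | hw | hw
    · exact absurd rfl huw
    · rw [(hPm w hw).2]; exact fun e => hij e.symm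
    · rw [(hQm w hw).2]; exact fun e => hik e.symm
    · rw [hsym, (hPm u hu).2]; exact fun e => hij e.symm
    · exact hPf u hu w hw huw
    · exact cross u hu w hw
    · rw [hsym, (hQm u hu).2]; exact fun e => hik e.symm
    · rw [hsym]; exact fun e => cross w hw u hu (hsym u w ▸ e)
    · exact hQf u hu w hw huw
  · rw [Finset.card_insert_of_notMem hvPQ, Finset.card_union_of_disjoint hdisj]

lemma key (n : ℕ) (F : Fin n → Fin n → Fin 3) (hsym : ∀ u v, F u v = F v u)
    (hG : IsRainbowFree F) (s : Finset (Fin n)) :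
    ∃ S0 S1 S2 : Finset (Fin n),
      S0 ⊆ s ∧ S1 ⊆ s ∧ S2 ⊆ s ∧
      ColorFree F 0 S0 ∧ ColorFree F 1 S1 ∧ ColorFree F 2 S2 ∧
      s.card ≤ S0.card * S1.card * S2.card := by
  induction s using Finset.strongInduction with
  | _ s ih =>
    rcases s.eq_empty_or_nonempty with rfl | ⟨v, hv⟩
    · exact ⟨∅, ∅, ∅, le_rfl, le_rfl, le_rfl,
        fun u hu => absurd hu (Finset.notMem_empty u),
        fun u hu => absurd hu (Finset.notMem_empty u),
        fun u hu => absurd hu (Finset.notMem_empty u), by simp⟩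
    set t := s.erase v with ht
    set A : Fin 3 → Finset (Fin n) := fun i => t.filter (fun u => F v u = i) with hA
    have hAss : ∀ i, A i ⊂ s := fun i =>
      (Finset.filter_subset _ _).trans_ssubset (Finset.erase_ssubset hv)
    obtain ⟨B00, B01, B02, h00s, h01s, h02s, h00f, h01f, h02f, h0c⟩ := ih (A 0) (hAss 0)
    obtain ⟨B10, B11, B12, h10s, h11s, h12s, h10f, h11f, h12f, h1c⟩ := ih (A 1) (hAss 1)
    obtain ⟨B20, B21, B22, h20s, h21s, h22s, h20f, h21f, h22f, h2c⟩ := ih (A 2) (hAss 2)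
    have hAsub : ∀ i, A i ⊆ s := fun i => (hAss i).subset
    obtain ⟨T0, hT0s, hT0f, hT0c⟩ := branch F hsym hG s v hv 0 1 2 (by decide) (by decide)
      (by decide) B10 B20 h10s h20s h10f h20f
    obtain ⟨T1, hT1s, hT1f, hT1c⟩ := branch F hsym hG s v hv 1 0 2 (by decide) (by decide)
      (by decide) B01 B21 h01s h21s h01f h21f
    obtain ⟨T2, hT2s, hT2f, hT2c⟩ := branch F hsym hG s v hv 2 0 1 (by decide) (by decide)
      (by decide) B02 B12 h02s h12s h02f h12f
    have hscard : s.card = 1 + (A 0).card + (A 1).card + (A 2).card := by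
      have h1 : t.card = ∑ c : Fin 3, (A c).card :=
        Finset.card_eq_sum_card_fiberwise (f := fun u => F v u) (t := Finset.univ)
          (fun x _ => Finset.mem_univ _)
      have h2 : s.card = t.card + 1 := by
        have hpos : 1 ≤ s.card := Finset.card_pos.mpr ⟨v, hv⟩
        rw [ht, Finset.card_erase_of_mem hv]
        omega
      rw [h2, h1, Fin.sum_univ_three]
      ring
    -- choose S0
    have hchoose : ∀ (W T : Finset (Fin n)) (c : Fin 3), W ⊆ s → T ⊆ s →
        ColorFree F c W → ColorFree F c T → ∀ m : ℕ, T.card = m →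
        ∃ S, S ⊆ s ∧ ColorFree F c S ∧ max W.card m ≤ S.card := by
      intro W T c hWs hTs hWf hTf m hm
      rcases le_total W.card m with h | h
      · exact ⟨T, hTs, hTf, by rw [hm]; exact max_le h le_rfl⟩
      · exact ⟨W, hWs, hWf, max_le le_rfl h⟩
    obtain ⟨S0, hS0s, hS0f, hS0c⟩ := hchoose B00 T0 0 (h00s.trans (hAsub 0)) hT0s h00f hT0f
      (B10.card + B20.card + 1) hT0c
    obtain ⟨S1, hS1s, hS1f, hS1c⟩ := hchoose B11 T1 1 (h11s.trans (hAsub 1)) hT1s h11f hT1f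
      (B01.card + B21.card + 1) hT1c
    obtain ⟨S2, hS2s, hS2f, hS2c⟩ := hchoose B22 T2 2 (h22s.trans (hAsub 2)) hT2s h22f hT2f
      (B02.card + B12.card + 1) hT2c
    refine ⟨S0, S1, S2, hS0s, hS1s, hS2s, hS0f, hS1f, hS2f, ?_⟩
    calc s.card = 1 + (A 0).card + (A 1).card + (A 2).card := hscard
      _ ≤ 1 + B00.card * B01.card * B02.card + B10.card * B11.card * B12.card
          + B20.card * B21.card * B22.card := by omega
      _ ≤ max B00.card (B10.card + B20.card + 1) * max B11.card (B01.card + B21.card + 1)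
          * max B22.card (B02.card + B12.card + 1) :=
            numineq B00.card B01.card B02.card B10.card B11.card B12.card
              B20.card B21.card B22.card
      _ ≤ S0.card * S1.card * S2.card :=
          Nat.mul_le_mul (Nat.mul_le_mul hS0c hS1c) hS2c

/-- Every Gallai 3-coloring of `E(K_n)` contains a set of at least `n^{1/3}`
vertices using at most two colors. -/
theorem gallai_two_colored_set (n : ℕ) (F : Fin n → Fin n → Fin 3)
    (hsym : ∀ u v, F u v = F v u) (hG : IsRainbowFree F) :
    ∃ (Z : Finset (Fin n)) (c₁ c₂ : Fin 3),
      (∀ u ∈ Z, ∀ v ∈ Z, u ≠ v → F u v = c₁ ∨ F u v = c₂) ∧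
      (n : ℝ) ^ ((1 : ℝ) / 3) ≤ (Z.card : ℝ) := by
  obtain ⟨S0, S1, S2, _, _, _, h0f, h1f, h2f, hc⟩ := key n F hsym hG Finset.univ
  rw [Finset.card_univ, Fintype.card_fin] at hc
  have aux : ∀ (a i : Fin 3), a ≠ i → a = i + 1 ∨ a = i + 2 := by decide
  have main : ∀ (Z : Finset (Fin n)) (i : Fin 3), ColorFree F i Z →
      n ≤ Z.card * Z.card * Z.card →
      ∃ (Z' : Finset (Fin n)) (c₁ c₂ : Fin 3), (∀ u ∈ Z', ∀ v ∈ Z', u ≠ v → F u v = c₁ ∨ F u v = c₂) ∧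
        (n:ℝ) ^ ((1:ℝ)/3) ≤ (Z'.card : ℝ) := by
    intro Z i hf hcard
    refine ⟨Z, i + 1, i + 2, fun u hu v hv huv => aux _ i (hf u hu v hv huv), ?_⟩
    have h1 : (n:ℝ) ≤ (Z.card:ℝ) ^ (3:ℕ) := by
      calc (n:ℝ) ≤ ((Z.card * Z.card * Z.card : ℕ) : ℝ) := by exact_mod_cast hcard
        _ = (Z.card:ℝ) ^ (3:ℕ) := by push_cast; ring
    calc (n:ℝ) ^ ((1:ℝ)/3) ≤ ((Z.card:ℝ) ^ (3:ℕ)) ^ ((1:ℝ)/3) :=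
          Real.rpow_le_rpow (Nat.cast_nonneg n) h1 (by norm_num)
      _ = (Z.card:ℝ) := by
          rw [← Real.rpow_natCast (Z.card:ℝ) 3, ← Real.rpow_mul (Nat.cast_nonneg _)]
          norm_num
  rcases le_total S0.card S1.card with h01 | h01 <;>
    rcases le_total S1.card S2.card with h12 | h12 <;>
    rcases le_total S0.card S2.card with h02 | h02
  all_goals first
    | exact main S0 0 h0f (hc.trans (Nat.mul_le_mul (Nat.mul_le_mul le_rfl h01) h02))
    | exact main S1 1 h1f (hc.trans (Nat.mul_le_mul (Nat.mul_le_mul h01 le_rfl) h12))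
    | exact main S2 2 h2f (hc.trans (Nat.mul_le_mul (Nat.mul_le_mul h02 h12) le_rfl))
    | exact main S2 2 h2f (hc.trans (Nat.mul_le_mul (Nat.mul_le_mul (h01.trans h12) h12) le_rfl))
    | exact main S0 0 h0f (hc.trans (Nat.mul_le_mul (Nat.mul_le_mul le_rfl (h12.trans h02)) h02))
    | exact main S1 1 h1f (hc.trans (Nat.mul_le_mul (Nat.mul_le_mul h01 le_rfl) (h02.trans h01)))
    | exact main S0 0 h0f (hc.trans (Nat.mul_le_mul (Nat.mul_le_mul le_rfl h01) (h12.trans h01)))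
end

section
/- For any Gallai 3-coloring F of E(K_m) with colors {1,2,3}, the product over the three 2-element color sets S of g(F,S) is at least m, where g(F,S) is the size of the largest vertex set all of whose internal edges have colors in S. -/
open Classical in
/-- `maxSub F S` is the size of the largest vertex set all of whose internal
edges have colors in `S`. -/
noncomputable def maxSub {m r : ℕ} (F : Fin m → Fin m → Fin r)
    (S : Finset (Fin r)) : ℕ :=
  ((Finset.univ : Finset (Fin m)).powerset.filter
    fun Z => ∀ u ∈ Z, ∀ v ∈ Z, u ≠ v → F u v ∈ S).sup Finset.card

theorem arith_key (p q r a b c d e f g h i : ℕ)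
  (hp1 : a + d + 1 ≤ p) (hp2 : g ≤ p)
  (hq1 : b + h + 1 ≤ q) (hq2 : e ≤ q)
  (hr1 : f + i + 1 ≤ r) (hr2 : c ≤ r) :
  1 + a * b * c + d * e * f + g * h * i ≤ p * q * r := by
  rcases le_or_gt c (f + i + 1) with hc | hc
  · rcases le_or_gt e (b + h + 1) with he | he
    · rcases le_or_gt g (a + d + 1) with hg | hg
      · have hP : a + d + 1 ≤ p := hp1
        have key : (a+d+1)*(b+h+1)*(f+i+1) ≤ p*q*r := Nat.mul_le_mul (Nat.mul_le_mul hp1 hq1) hr1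
        have t1 : a*b*c ≤ a*b*(f+i+1) := Nat.mul_le_mul_left _ hc
        have t2 : d*e*f ≤ d*(b+h+1)*f := Nat.mul_le_mul_right _ (Nat.mul_le_mul_left _ he)
        have t3 : g*h*i ≤ (a+d+1)*h*i := Nat.mul_le_mul_right _ (Nat.mul_le_mul_right _ hg)
        have expand : (a+d+1)*(b+h+1)*(f+i+1) = (1 + a*b*(f+i+1) + d*(b+h+1)*f + (a+d+1)*h*i) + (a + a*f + a*f*h + a*h + a*i + b + b*d + b*d*i + b*f + b*i + d + d*h + d*i + f + f*h + h + i) := by ring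
        have hJ : 0 ≤ a + a*f + a*f*h + a*h + a*i + b + b*d + b*d*i + b*f + b*i + d + d*h + d*i + f + f*h + h + i := Nat.zero_le _
        linarith
      · obtain ⟨x, rfl⟩ : ∃ x, g = a+d+2+x := ⟨g - (a+d+2), by omega⟩
        have key : (a+d+2+x)*(b+h+1)*(f+i+1) ≤ p*q*r := Nat.mul_le_mul (Nat.mul_le_mul hp2 hq1) hr1
        have t1 : a*b*c ≤ a*b*(f+i+1) := Nat.mul_le_mul_left _ hc
        have t2 : d*e*f ≤ d*(b+h+1)*f := Nat.mul_le_mul_right _ (Nat.mul_le_mul_left _ he)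
        have expand : (a+d+2+x)*(b+h+1)*(f+i+1) = (1 + a*b*(f+i+1) + d*(b+h+1)*f + (a+d+2+x)*h*i) + (1 + a + a*f + a*f*h + a*h + a*i + 2*b + b*d + b*d*i + 2*b*f + b*f*x + 2*b*i + b*i*x + b*x + d + d*h + d*i + 2*f + 2*f*h + f*h*x + f*x + 2*h + h*x + 2*i + i*x + x) := by ring
        have hJ : 0 ≤ 1 + a + a*f + a*f*h + a*h + a*i + 2*b + b*d + b*d*i + 2*b*f + b*f*x + 2*b*i + b*i*x + b*x + d + d*h + d*i + 2*f + 2*f*h + f*h*x + f*x + 2*h + h*x + 2*i + i*x + x := Nat.zero_le _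
        linarith
    · obtain ⟨y, rfl⟩ : ∃ y, e = b+h+2+y := ⟨e - (b+h+2), by omega⟩
      rcases le_or_gt g (a + d + 1) with hg | hg
      · have hP : a + d + 1 ≤ p := hp1
        have key : (a+d+1)*(b+h+2+y)*(f+i+1) ≤ p*q*r := Nat.mul_le_mul (Nat.mul_le_mul hp1 hq2) hr1
        have t1 : a*b*c ≤ a*b*(f+i+1) := Nat.mul_le_mul_left _ hc
        have t3 : g*h*i ≤ (a+d+1)*h*i := Nat.mul_le_mul_right _ (Nat.mul_le_mul_right _ hg)
        have expand : (a+d+1)*(b+h+2+y)*(f+i+1) = (1 + a*b*(f+i+1) + d*(b+h+2+y)*f + (a+d+1)*h*i) + (1 + 2*a + 2*a*f + a*f*h + a*f*y + a*h + 2*a*i + a*i*y + a*y + b + b*d + b*d*i + b*f + b*i + 2*d + d*h + 2*d*i + d*i*y + d*y + 2*f + f*h + f*y + h + 2*i + i*y + y) := by ring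
        have hJ : 0 ≤ 1 + 2*a + 2*a*f + a*f*h + a*f*y + a*h + 2*a*i + a*i*y + a*y + b + b*d + b*d*i + b*f + b*i + 2*d + d*h + 2*d*i + d*i*y + d*y + 2*f + f*h + f*y + h + 2*i + i*y + y := Nat.zero_le _
        linarith
      · obtain ⟨x, rfl⟩ : ∃ x, g = a+d+2+x := ⟨g - (a+d+2), by omega⟩
        have key : (a+d+2+x)*(b+h+2+y)*(f+i+1) ≤ p*q*r := Nat.mul_le_mul (Nat.mul_le_mul hp2 hq2) hr1
        have t1 : a*b*c ≤ a*b*(f+i+1) := Nat.mul_le_mul_left _ hc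
        have expand : (a+d+2+x)*(b+h+2+y)*(f+i+1) = (1 + a*b*(f+i+1) + d*(b+h+2+y)*f + (a+d+2+x)*h*i) + (3 + 2*a + 2*a*f + a*f*h + a*f*y + a*h + 2*a*i + a*i*y + a*y + 2*b + b*d + b*d*i + 2*b*f + b*f*x + 2*b*i + b*i*x + b*x + 2*d + d*h + 2*d*i + d*i*y + d*y + 4*f + 2*f*h + f*h*x + 2*f*x + f*x*y + 2*f*y + 2*h + h*x + 4*i + 2*i*x + i*x*y + 2*i*y + 2*x + x*y + 2*y) := by ring
        have hJ : 0 ≤ 3 + 2*a + 2*a*f + a*f*h + a*f*y + a*h + 2*a*i + a*i*y + a*y + 2*b + b*d + b*d*i + 2*b*f + b*f*x + 2*b*i + b*i*x + b*x + 2*d + d*h + 2*d*i + d*i*y + d*y + 4*f + 2*f*h + f*h*x + 2*f*x + f*x*y + 2*f*y + 2*h + h*x + 4*i + 2*i*x + i*x*y + 2*i*y + 2*x + x*y + 2*y := Nat.zero_le _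
        linarith
  · obtain ⟨z, rfl⟩ : ∃ z, c = f+i+2+z := ⟨c - (f+i+2), by omega⟩
    rcases le_or_gt e (b + h + 1) with he | he
    · rcases le_or_gt g (a + d + 1) with hg | hg
      · have hP : a + d + 1 ≤ p := hp1
        have key : (a+d+1)*(b+h+1)*(f+i+2+z) ≤ p*q*r := Nat.mul_le_mul (Nat.mul_le_mul hp1 hq1) hr2
        have t2 : d*e*f ≤ d*(b+h+1)*f := Nat.mul_le_mul_right _ (Nat.mul_le_mul_left _ he)
        have t3 : g*h*i ≤ (a+d+1)*h*i := Nat.mul_le_mul_right _ (Nat.mul_le_mul_right _ hg)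
        have expand : (a+d+1)*(b+h+1)*(f+i+2+z) = (1 + a*b*(f+i+2+z) + d*(b+h+1)*f + (a+d+1)*h*i) + (1 + 2*a + a*f + a*f*h + 2*a*h + a*h*z + a*i + a*z + 2*b + 2*b*d + b*d*i + b*d*z + b*f + b*i + b*z + 2*d + 2*d*h + d*h*z + d*i + d*z + f + f*h + 2*h + h*z + i + z) := by ring
        have hJ : 0 ≤ 1 + 2*a + a*f + a*f*h + 2*a*h + a*h*z + a*i + a*z + 2*b + 2*b*d + b*d*i + b*d*z + b*f + b*i + b*z + 2*d + 2*d*h + d*h*z + d*i + d*z + f + f*h + 2*h + h*z + i + z := Nat.zero_le _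
        linarith
      · obtain ⟨x, rfl⟩ : ∃ x, g = a+d+2+x := ⟨g - (a+d+2), by omega⟩
        have key : (a+d+2+x)*(b+h+1)*(f+i+2+z) ≤ p*q*r := Nat.mul_le_mul (Nat.mul_le_mul hp2 hq1) hr2
        have t2 : d*e*f ≤ d*(b+h+1)*f := Nat.mul_le_mul_right _ (Nat.mul_le_mul_left _ he)
        have expand : (a+d+2+x)*(b+h+1)*(f+i+2+z) = (1 + a*b*(f+i+2+z) + d*(b+h+1)*f + (a+d+2+x)*h*i) + (3 + 2*a + a*f + a*f*h + 2*a*h + a*h*z + a*i + a*z + 4*b + 2*b*d + b*d*i + b*d*z + 2*b*f + b*f*x + 2*b*i + b*i*x + 2*b*x + b*x*z + 2*b*z + 2*d + 2*d*h + d*h*z + d*i + d*z + 2*f + 2*f*h + f*h*x + f*x + 4*h + 2*h*x + h*x*z + 2*h*z + 2*i + i*x + 2*x + x*z + 2*z) := by ring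
        have hJ : 0 ≤ 3 + 2*a + a*f + a*f*h + 2*a*h + a*h*z + a*i + a*z + 4*b + 2*b*d + b*d*i + b*d*z + 2*b*f + b*f*x + 2*b*i + b*i*x + 2*b*x + b*x*z + 2*b*z + 2*d + 2*d*h + d*h*z + d*i + d*z + 2*f + 2*f*h + f*h*x + f*x + 4*h + 2*h*x + h*x*z + 2*h*z + 2*i + i*x + 2*x + x*z + 2*z := Nat.zero_le _
        linarith
    · obtain ⟨y, rfl⟩ : ∃ y, e = b+h+2+y := ⟨e - (b+h+2), by omega⟩
      rcases le_or_gt g (a + d + 1) with hg | hg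
      · have hP : a + d + 1 ≤ p := hp1
        have key : (a+d+1)*(b+h+2+y)*(f+i+2+z) ≤ p*q*r := Nat.mul_le_mul (Nat.mul_le_mul hp1 hq2) hr2
        have t3 : g*h*i ≤ (a+d+1)*h*i := Nat.mul_le_mul_right _ (Nat.mul_le_mul_right _ hg)
        have expand : (a+d+1)*(b+h+2+y)*(f+i+2+z) = (1 + a*b*(f+i+2+z) + d*(b+h+2+y)*f + (a+d+1)*h*i) + (3 + 4*a + 2*a*f + a*f*h + a*f*y + 2*a*h + a*h*z + 2*a*i + a*i*y + 2*a*y + a*y*z + 2*a*z + 2*b + 2*b*d + b*d*i + b*d*z + b*f + b*i + b*z + 4*d + 2*d*h + d*h*z + 2*d*i + d*i*y + 2*d*y + d*y*z + 2*d*z + 2*f + f*h + f*y + 2*h + h*z + 2*i + i*y + 2*y + y*z + 2*z) := by ring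
        have hJ : 0 ≤ 3 + 4*a + 2*a*f + a*f*h + a*f*y + 2*a*h + a*h*z + 2*a*i + a*i*y + 2*a*y + a*y*z + 2*a*z + 2*b + 2*b*d + b*d*i + b*d*z + b*f + b*i + b*z + 4*d + 2*d*h + d*h*z + 2*d*i + d*i*y + 2*d*y + d*y*z + 2*d*z + 2*f + f*h + f*y + 2*h + h*z + 2*i + i*y + 2*y + y*z + 2*z := Nat.zero_le _
        linarith
      · obtain ⟨x, rfl⟩ : ∃ x, g = a+d+2+x := ⟨g - (a+d+2), by omega⟩
        have key : (a+d+2+x)*(b+h+2+y)*(f+i+2+z) ≤ p*q*r := Nat.mul_le_mul (Nat.mul_le_mul hp2 hq2) hr2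
        have expand : (a+d+2+x)*(b+h+2+y)*(f+i+2+z) = (1 + a*b*(f+i+2+z) + d*(b+h+2+y)*f + (a+d+2+x)*h*i) + (7 + 4*a + 2*a*f + a*f*h + a*f*y + 2*a*h + a*h*z + 2*a*i + a*i*y + 2*a*y + a*y*z + 2*a*z + 4*b + 2*b*d + b*d*i + b*d*z + 2*b*f + b*f*x + 2*b*i + b*i*x + 2*b*x + b*x*z + 2*b*z + 4*d + 2*d*h + d*h*z + 2*d*i + d*i*y + 2*d*y + d*y*z + 2*d*z + 4*f + 2*f*h + f*h*x + 2*f*x + f*x*y + 2*f*y + 4*h + 2*h*x + h*x*z + 2*h*z + 4*i + 2*i*x + i*x*y + 2*i*y + 4*x + 2*x*y + x*y*z + 2*x*z + 4*y + 2*y*z + 4*z) := by ring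
        have hJ : 0 ≤ 7 + 4*a + 2*a*f + a*f*h + a*f*y + 2*a*h + a*h*z + 2*a*i + a*i*y + 2*a*y + a*y*z + 2*a*z + 4*b + 2*b*d + b*d*i + b*d*z + 2*b*f + b*f*x + 2*b*i + b*i*x + 2*b*x + b*x*z + 2*b*z + 4*d + 2*d*h + d*h*z + 2*d*i + d*i*y + 2*d*y + d*y*z + 2*d*z + 4*f + 2*f*h + f*h*x + 2*f*x + f*x*y + 2*f*y + 4*h + 2*h*x + h*x*z + 2*h*z + 4*i + 2*i*x + i*x*y + 2*i*y + 4*x + 2*x*y + x*y*z + 2*x*z + 4*y + 2*y*z + 4*z := Nat.zero_le _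
        linarith

lemma card_le_maxSub {m r : ℕ} (F : Fin m → Fin m → Fin r) (S : Finset (Fin r))
    {Z : Finset (Fin m)} (hZ : ∀ u ∈ Z, ∀ v ∈ Z, u ≠ v → F u v ∈ S) :
    Z.card ≤ maxSub F S := by
  classical
  apply Finset.le_sup
  exact Finset.mem_filter.mpr ⟨Finset.mem_powerset.mpr (Finset.subset_univ _), hZ⟩

lemma exists_maxSub {m r : ℕ} (F : Fin m → Fin m → Fin r) (S : Finset (Fin r)) :
    ∃ Z : Finset (Fin m), (∀ u ∈ Z, ∀ v ∈ Z, u ≠ v → F u v ∈ S) ∧ Z.card = maxSub F S := by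
  classical
  have hne : (((Finset.univ : Finset (Fin m)).powerset.filter
      fun Z => ∀ u ∈ Z, ∀ v ∈ Z, u ≠ v → F u v ∈ S)).Nonempty :=
    ⟨∅, Finset.mem_filter.mpr ⟨by simp, by simp⟩⟩
  obtain ⟨Z, hZ, hsup⟩ := Finset.exists_mem_eq_sup _ hne Finset.card
  exact ⟨Z, (Finset.mem_filter.mp hZ).2, hsup.symm⟩

section Main

variable {m : ℕ} (F : Fin m → Fin m → Fin 3)

theorem gallai_aux : ∀ m : ℕ, ∀ F : Fin m → Fin m → Fin 3,
    (∀ u v, F u v = F v u) → IsRainbowFree F →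
    m ≤ ∏ S ∈ Finset.powersetCard 2 (Finset.univ : Finset (Fin 3)), maxSub F S := by
  intro m
  induction m using Nat.strong_induction_on with
  | _ m IH =>
  intro F hsym hG
  rcases Nat.eq_zero_or_pos m with rfl | hm
  · exact Nat.zero_le _
  classical
  set v : Fin m := ⟨0, hm⟩ with hv
  set N : Fin 3 → Finset (Fin m) :=
    fun c => Finset.univ.filter (fun u => F v u = c ∧ u ≠ v) with hN
  -- basic membership
  have hmemN : ∀ c u, u ∈ N c ↔ (F v u = c ∧ u ≠ v) := by
    intro c u; simp [hN]
  -- induced colorings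
  have hcards : ∀ c, (N c).card = (N c).card := fun _ => rfl
  let e : ∀ c : Fin 3, Fin (N c).card ↪o Fin m := fun c => (N c).orderEmbOfFin rfl
  let F' : ∀ c : Fin 3, Fin (N c).card → Fin (N c).card → Fin 3 :=
    fun c a b => F (e c a) (e c b)
  have hemem : ∀ c a, e c a ∈ N c := fun c a => (N c).orderEmbOfFin_mem rfl a
  have hsym' : ∀ c, ∀ a b, F' c a b = F' c b a := fun c a b => hsym _ _
  have hG' : ∀ c, IsRainbowFree (F' c) := by
    intro c a b d hab had hbd
    exact hG _ _ _ (fun h => hab ((e c).injective h)) (fun h => had ((e c).injective h))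
      (fun h => hbd ((e c).injective h))
  -- bound (B)
  have boundB : ∀ c S, maxSub (F' c) S ≤ maxSub F S := by
    intro c S
    obtain ⟨Z, hZ, hcard⟩ := exists_maxSub (F' c) S
    rw [← hcard, ← Finset.card_map (e c).toEmbedding]
    apply card_le_maxSub
    intro u hu w hw huw
    simp only [Finset.mem_map, RelEmbedding.coe_toEmbedding] at hu hw
    obtain ⟨a, ha, rfl⟩ := hu
    obtain ⟨b, hb, rfl⟩ := hw
    exact hZ a ha b hb (fun h => huw (congrArg _ h))
  -- bound (A)
  have boundA : ∀ c1 c2 : Fin 3, c1 ≠ c2 →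
      maxSub (F' c1) {c1, c2} + maxSub (F' c2) {c1, c2} + 1 ≤ maxSub F {c1, c2} := by
    intro c1 c2 hc12
    obtain ⟨Z1, hZ1, hcard1⟩ := exists_maxSub (F' c1) {c1, c2}
    obtain ⟨Z2, hZ2, hcard2⟩ := exists_maxSub (F' c2) {c1, c2}
    set M1 := Z1.map (e c1).toEmbedding with hM1
    set M2 := Z2.map (e c2).toEmbedding with hM2
    have hM1sub : ∀ u ∈ M1, u ∈ N c1 := by
      intro u hu
      simp only [hM1, Finset.mem_map, RelEmbedding.coe_toEmbedding] at hu
      obtain ⟨a, _, rfl⟩ := hu; exact hemem c1 a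
    have hM2sub : ∀ u ∈ M2, u ∈ N c2 := by
      intro u hu
      simp only [hM2, Finset.mem_map, RelEmbedding.coe_toEmbedding] at hu
      obtain ⟨a, _, rfl⟩ := hu; exact hemem c2 a
    have hdisj : Disjoint M1 M2 := by
      rw [Finset.disjoint_left]
      intro u hu1 hu2
      have h1 := ((hmemN c1 u).mp (hM1sub u hu1)).1
      have h2 := ((hmemN c2 u).mp (hM2sub u hu2)).1
      exact hc12 (h1 ▸ h2 ▸ rfl)
    have hvnot : v ∉ M1 ∪ M2 := by
      intro hvm
      rcases Finset.mem_union.mp hvm with h | h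
      · exact ((hmemN c1 v).mp (hM1sub v h)).2 rfl
      · exact ((hmemN c2 v).mp (hM2sub v h)).2 rfl
    have hcardW : (insert v (M1 ∪ M2)).card =
        maxSub (F' c1) {c1, c2} + maxSub (F' c2) {c1, c2} + 1 := by
      rw [Finset.card_insert_of_notMem hvnot, Finset.card_union_of_disjoint hdisj,
        hM1, hM2, Finset.card_map, Finset.card_map, hcard1, hcard2]
    rw [← hcardW]
    apply card_le_maxSub
    -- goodness of the union
    have hcross : ∀ u ∈ M1, ∀ w ∈ M2, u ≠ w → F u w ∈ ({c1, c2} : Finset (Fin 3)) := by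
      intro u hu w hw huw
      have hu1 := (hmemN c1 u).mp (hM1sub u hu)
      have hw2 := (hmemN c2 w).mp (hM2sub w hw)
      have := hG v u w (Ne.symm hu1.2) (Ne.symm hw2.2) huw
      rcases this with h | h | h
      · exact absurd (hu1.1 ▸ hw2.1 ▸ h) hc12
      · rw [← h, hu1.1]; simp
      · rw [← h, hw2.1]; simp
    have hinM : ∀ c, ∀ Zc : Finset (Fin (N c).card),
        (∀ a ∈ Zc, ∀ b ∈ Zc, a ≠ b → F' c a b ∈ ({c1, c2} : Finset (Fin 3))) →
        ∀ u ∈ Zc.map (e c).toEmbedding, ∀ w ∈ Zc.map (e c).toEmbedding, u ≠ w →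
          F u w ∈ ({c1, c2} : Finset (Fin 3)) := by
      intro c Zc hZc u hu w hw huw
      simp only [Finset.mem_map, RelEmbedding.coe_toEmbedding] at hu hw
      obtain ⟨a, ha, rfl⟩ := hu
      obtain ⟨b, hb, rfl⟩ := hw
      exact hZc a ha b hb (fun h => huw (congrArg _ h))
    intro u hu w hw huw
    rcases Finset.mem_insert.mp hu with rfl | hu'
    · rcases Finset.mem_union.mp ((Finset.mem_insert.mp hw).resolve_left (Ne.symm huw)) with h | h
      · have := (hmemN c1 w).mp (hM1sub w h); rw [this.1]; simp
      · have := (hmemN c2 w).mp (hM2sub w h); rw [this.1]; simp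
    · rcases Finset.mem_insert.mp hw with rfl | hw'
      · rcases Finset.mem_union.mp hu' with h | h
        · have := (hmemN c1 u).mp (hM1sub u h); rw [hsym u v, this.1]; simp
        · have := (hmemN c2 u).mp (hM2sub u h); rw [hsym u v, this.1]; simp
      · rcases Finset.mem_union.mp hu' with h1 | h1 <;> rcases Finset.mem_union.mp hw' with h2 | h2
        · exact hinM c1 Z1 hZ1 u h1 w h2 huw
        · exact hcross u h1 w h2 huw
        · rw [hsym u w]; exact hcross w h2 u h1 (Ne.symm huw)
        · exact hinM c2 Z2 hZ2 u h1 w h2 huw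
  -- cardinality decomposition
  have hfilt : ∀ c : Fin 3, (Finset.univ.filter (fun u : Fin m => u ≠ v)).filter
      (fun u => F v u = c) = N c := by
    intro c; ext u
    simp only [Finset.mem_filter, Finset.mem_univ, true_and, hN]
    tauto
  have hTcard : (Finset.univ.filter (fun u : Fin m => u ≠ v)).card = m - 1 := by
    rw [Finset.filter_ne', Finset.card_erase_of_mem (Finset.mem_univ v)]
    simp
  have hfib := Finset.card_eq_sum_card_fiberwise
    (f := fun u => F v u) (s := Finset.univ.filter (fun u : Fin m => u ≠ v))
    (t := Finset.univ) (fun x _ => Finset.mem_univ _)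
  have hsum : (N 0).card + (N 1).card + (N 2).card = m - 1 := by
    rw [hTcard] at hfib
    simp only [Fin.sum_univ_three, hfilt] at hfib
    omega
  -- product enumeration
  have hprod : ∀ {k : ℕ} (G : Fin k → Fin k → Fin 3),
      ∏ S ∈ Finset.powersetCard 2 (Finset.univ : Finset (Fin 3)), maxSub G S
        = maxSub G {0,1} * (maxSub G {0,2} * maxSub G {1,2}) := by
    intro k G
    have h3 : Finset.powersetCard 2 (Finset.univ : Finset (Fin 3))
        = {{0,1},{0,2},{1,2}} := by decide
    rw [h3, Finset.prod_insert (by decide), Finset.prod_insert (by decide),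
      Finset.prod_singleton]
  -- induction hypothesis per part
  have hIH : ∀ c : Fin 3, (N c).card ≤
      maxSub (F' c) {0,1} * (maxSub (F' c) {0,2} * maxSub (F' c) {1,2}) := by
    intro c
    have hlt : (N c).card < m := by
      have hsub : N c ⊆ Finset.univ.filter (fun u : Fin m => u ≠ v) := by
        intro u hu
        simp only [Finset.mem_filter, Finset.mem_univ, true_and]
        exact ((hmemN c u).mp hu).2
      have := Finset.card_le_card hsub
      omega
    have := IH (N c).card hlt (F' c) (hsym' c) (hG' c)
    rwa [hprod (F' c)] at this
  -- final arithmetic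
  rw [hprod F]
  have h01 := boundA 0 1 (by decide)
  have h02 := boundA 0 2 (by decide)
  have h12 := boundA 1 2 (by decide)
  have hB1 := boundB 2 ({0,1} : Finset (Fin 3))
  have hB2 := boundB 1 ({0,2} : Finset (Fin 3))
  have hB3 := boundB 0 ({1,2} : Finset (Fin 3))
  have key := arith_key (maxSub F {0,1}) (maxSub F {0,2}) (maxSub F {1,2})
    (maxSub (F' 0) {0,1}) (maxSub (F' 0) {0,2}) (maxSub (F' 0) {1,2})
    (maxSub (F' 1) {0,1}) (maxSub (F' 1) {0,2}) (maxSub (F' 1) {1,2})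
    (maxSub (F' 2) {0,1}) (maxSub (F' 2) {0,2}) (maxSub (F' 2) {1,2})
    h01 hB1 h02 hB2 h12 hB3
  have hn0 := hIH 0
  have hn1 := hIH 1
  have hn2 := hIH 2
  have hm' : m = 1 + ((N 0).card + (N 1).card + (N 2).card) := by omega
  nlinarith [key, hn0, hn1, hn2]

end Main

/-- For any Gallai 3-coloring `F` of `E(K_m)`, the product over the three
2-element color sets `S` of `maxSub F S` is at least `m`. -/
theorem gallai_three_product (m : ℕ) (F : Fin m → Fin m → Fin 3)
    (hsym : ∀ u v, F u v = F v u) (hG : IsRainbowFree F) :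
    m ≤ ∏ S ∈ Finset.powersetCard 2 (Finset.univ : Finset (Fin 3)), maxSub F S :=
  gallai_aux m F hsym hG
end

section
/- For any Gallai r-coloring F of E(K_n) and 2 ≤ s ≤ r, the product over all s-element subsets S of the color set R of g(F,S) is at least n^{C(r-2, s-2)}. -/
open Finset NNReal

theorem pow_add_le_mul_prod_add {ι : Type*} {s : Finset ι} {x y : ι → ℝ≥0} {m p q : ℝ≥0}
    (hp : p ^ #s ≤ m * ∏ i ∈ s, x i) (hq : q ^ #s ≤ m * ∏ i ∈ s, y i) :
    (p + q) ^ #s ≤ m * ∏ i ∈ s, (x i + y i) := by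
  rcases eq_or_ne p 0 with rfl | hp0
  · exact (zero_add q).symm ▸ hq.trans (by gcongr; exact le_add_self)
  rcases eq_or_ne q 0 with rfl | hq0
  · exact (add_zero p).symm ▸ hp.trans (by gcongr; exact le_self_add)
  set α := p / (p + q)
  set β := q / (p + q)
  have hαβ : α + β = 1 := by rw [← add_div, div_self (by positivity)]
  have hαβ' : (α : ℝ) + β = 1 := by exact_mod_cast hαβ
  have hpoint : ∀ i ∈ s, (x i / p) ^ (α : ℝ) * (y i / q) ^ (β : ℝ) ≤ (x i + y i) / (p + q) :=
    fun i _ => (geom_mean_le_arith_mean2_weighted α β _ _ hαβ).trans_eq (by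
      simp only [α, β]; field_simp)
  have hprod := prod_le_prod (fun _ _ => zero_le) hpoint
  rw [prod_mul_distrib, finsetProd_rpow, finsetProd_rpow, prod_div_distrib,
    prod_div_distrib, prod_div_distrib, prod_const, prod_const, prod_const] at hprod
  have hx : 1 ≤ m * (∏ i ∈ s, x i) / p ^ #s := (one_le_div₀ (by positivity)).2 hp
  have hy : 1 ≤ m * (∏ i ∈ s, y i) / q ^ #s := (one_le_div₀ (by positivity)).2 hq
  refine (one_le_div₀ (by positivity)).1 ?_
  calc (1 : ℝ≥0)
        ≤ (m * (∏ i ∈ s, x i) / p ^ #s) ^ (α : ℝ) * (m * (∏ i ∈ s, y i) / q ^ #s) ^ (β : ℝ) :=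
        one_le_mul (one_le_rpow hx α.2) (one_le_rpow hy β.2)
    _ = m * (((∏ i ∈ s, x i) / p ^ #s) ^ (α : ℝ) * ((∏ i ∈ s, y i) / q ^ #s) ^ (β : ℝ)) := by
        rw [mul_div_assoc, mul_div_assoc, mul_rpow, mul_rpow, mul_mul_mul_comm,
          ← rpow_add' (by simp [hαβ']), hαβ', rpow_one]
    _ ≤ m * ((∏ i ∈ s, (x i + y i)) / (p + q) ^ #s) := by gcongr
    _ = m * (∏ i ∈ s, (x i + y i)) / (p + q) ^ #s := (mul_div_assoc ..).symm

theorem pow_add_le_prod_of_le_add {ι : Type*} [DecidableEq ι] {T A : Finset ι} (hAT : A ⊆ T)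
    {x y z : ι → ℕ} {p q : ℕ} (hxz : ∀ i ∈ T, x i ≤ z i) (hyz : ∀ i ∈ T, y i ≤ z i)
    (hxyz : ∀ i ∈ A, x i + y i ≤ z i)
    (hp : p ^ #A ≤ ∏ i ∈ T, x i) (hq : q ^ #A ≤ ∏ i ∈ T, y i) :
    (p + q) ^ #A ≤ ∏ i ∈ T, z i := by
  have hsplit (w : ι → ℕ) : ∏ i ∈ T, w i = (∏ i ∈ T \ A, w i) * ∏ i ∈ A, w i :=
    (prod_sdiff hAT).symm
  have hp' : p ^ #A ≤ (∏ i ∈ T \ A, z i) * ∏ i ∈ A, x i := by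
    refine hp.trans ((hsplit x).trans_le ?_)
    gcongr with i hi
    exact hxz i (mem_sdiff.1 hi).1
  have hq' : q ^ #A ≤ (∏ i ∈ T \ A, z i) * ∏ i ∈ A, y i := by
    refine hq.trans ((hsplit y).trans_le ?_)
    gcongr with i hi
    exact hyz i (mem_sdiff.1 hi).1
  have hsum : (p + q) ^ #A ≤ (∏ i ∈ T \ A, z i) * ∏ i ∈ A, (x i + y i) := by
    have := pow_add_le_mul_prod_add (s := A) (x := fun i => (x i : ℝ≥0))
      (y := fun i => (y i : ℝ≥0)) (m := (∏ i ∈ T \ A, z i : ℕ)) (p := p) (q := q)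
      (by exact_mod_cast hp') (by exact_mod_cast hq')
    exact_mod_cast this
  calc (p + q) ^ #A ≤ (∏ i ∈ T \ A, z i) * ∏ i ∈ A, (x i + y i) := hsum
    _ ≤ (∏ i ∈ T \ A, z i) * ∏ i ∈ A, z i := by gcongr with i hi; exact hxyz i hi
    _ = ∏ i ∈ T, z i := (hsplit z).symm

theorem card_filter_superset_powersetCard {α : Type*} [DecidableEq α] {U P : Finset α}
    (hPU : P ⊆ U) {s : ℕ} (hPs : #P ≤ s) :
    #{S ∈ powersetCard s U | P ⊆ S} = (#U - #P).choose (s - #P) := by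
  rw [← card_sdiff_of_subset hPU, ← card_powersetCard]
  refine card_bij' (fun S _ => S \ P) (fun T _ => T ∪ P) ?_ ?_ ?_ ?_
  · intro S hS
    simp only [mem_filter, mem_powersetCard] at hS ⊢
    exact ⟨sdiff_subset_sdiff hS.1.1 le_rfl, by rw [card_sdiff_of_subset hS.2, hS.1.2]⟩
  · intro T hT
    simp only [mem_filter, mem_powersetCard] at hT ⊢
    refine ⟨⟨union_subset (hT.1.trans sdiff_subset) hPU, ?_⟩, subset_union_right⟩
    rw [card_union_of_disjoint (disjoint_of_subset_left hT.1 sdiff_disjoint), hT.2]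
    omega
  · intro S hS
    exact sdiff_union_of_subset (mem_filter.1 hS).2
  · intro T hT
    exact union_sdiff_cancel_right
      (disjoint_of_subset_left (mem_powersetCard.1 hT).1 sdiff_disjoint)

section GallaiCut

variable {α C : Type*} {F : α → α → C}

def HasTwoColoredCut [DecidableEq α] (F : α → α → C) (V : Finset α) : Prop :=
  ∃ a b : C, ∃ U ⊂ V, U.Nonempty ∧ ∀ u ∈ U, ∀ w ∈ V \ U, F u w = a ∨ F u w = b

def ReachAvoiding (F : α → α → C) (V : Finset α) (a b : C) : α → α → Prop :=
  Relation.ReflTransGen fun x y => x ∈ V ∧ y ∈ V ∧ F x y ≠ a ∧ F x y ≠ b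

namespace ReachAvoiding

variable {V U : Finset α} {a b : C} {x x' y z z' : α}

lemma symm (hsym : ∀ u v, F u v = F v u) (h : ReachAvoiding F V a b x y) :
    ReachAvoiding F V a b y x :=
  Relation.ReflTransGen.mono (fun u v ⟨hv, hu, ha, hb⟩ => ⟨hu, hv, hsym u v ▸ ha, hsym u v ▸ hb⟩)
    y x h.swap

lemma mem_right (hx : x ∈ V) (h : ReachAvoiding F V a b x y) : y ∈ V := by
  induction h with
  | refl => exact hx
  | tail _ hstep _ => exact hstep.2.1

lemma eq_or_eq_of_not (hx : x ∈ V) (hy : y ∈ V) (h : ¬ ReachAvoiding F V a b x y) :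
    F x y = a ∨ F x y = b := by
  by_contra! hc
  exact h (.single ⟨hx, hy, hc⟩)

lemma color_eq_of_not (hsym : ∀ u v, F u v = F v u) (hG : IsRainbowFree F) (hz : z ∈ V)
    (hzx : ¬ ReachAvoiding F V a b z x) (hxy : ReachAvoiding F V a b x y) : F z x = F z y := by
  induction hxy with
  | refl => rfl
  | @tail c y hxc hstep ih =>
    obtain ⟨hc, hy, hca, hcb⟩ := hstep
    have hzc : ¬ ReachAvoiding F V a b z c := fun h => hzx (h.trans (symm hsym hxc))
    have hzy : ¬ ReachAvoiding F V a b z y := fun h =>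
      hzc (h.trans (symm hsym (.single ⟨hc, hy, hca, hcb⟩)))
    rw [ih]
    rcases eq_or_ne c y with rfl | hcy
    · rfl
    have hzc' : z ≠ c := by rintro rfl; exact hzc .refl
    have hzy' : z ≠ y := by rintro rfl; exact hzy .refl
    rcases hG z c y hzc' hzy' hcy with h | h | h
    · exact h
    · rcases eq_or_eq_of_not hz hc hzc with h' | h' <;> simp_all
    · rcases eq_or_eq_of_not hz hy hzy with h' | h' <;> simp_all

lemma color_eq_of_reach (hsym : ∀ u v, F u v = F v u) (hG : IsRainbowFree F) (hx : x ∈ V)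
    (hz : z ∈ V) (hxz : ¬ ReachAvoiding F V a b x z) (hxx' : ReachAvoiding F V a b x x')
    (hzz' : ReachAvoiding F V a b z z') : F x z = F x' z' := by
  have hz'x : ¬ ReachAvoiding F V a b z' x := fun h => hxz (symm hsym (hzz'.trans h))
  rw [color_eq_of_not hsym hG hx hxz hzz', hsym,
    color_eq_of_not hsym hG (hzz'.mem_right hz) hz'x hxx', hsym]

lemma mem_of_cut [DecidableEq α] (hcross : ∀ u ∈ U, ∀ w ∈ V \ U, F u w = a ∨ F u w = b)
    (h : ReachAvoiding F V a b x y) (hx : x ∈ U) : y ∈ U := by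
  induction h with
  | refl => exact hx
  | @tail c y _ hstep ih =>
    by_contra hy
    obtain ⟨-, hyV, hca, hcb⟩ := hstep
    rcases hcross c ih y (mem_sdiff.2 ⟨hyV, hy⟩) with h | h
    exacts [hca h, hcb h]

lemma color_eq_of_forall_exists (hsym : ∀ u v, F u v = F v u) (hG : IsRainbowFree F) {v : α}
    (hv : v ∉ V)
    (hout : ∀ x ∈ V, ∃ y ∈ V, ¬ ReachAvoiding F V a b x y)
    (hreach : ∀ x ∈ V, ∃ y, ReachAvoiding F V a b x y ∧ F v y ≠ a ∧ F v y ≠ b)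
    (hx : x ∈ V) (hy : y ∈ V) (hxab : F v x ≠ a ∧ F v x ≠ b) (hyab : F v y ≠ a ∧ F v y ≠ b) :
    F v x = F v y := by
  have key : ∀ {x y}, x ∈ V → y ∈ V → ¬ ReachAvoiding F V a b x y →
      F v x ≠ a ∧ F v x ≠ b → F v y ≠ a ∧ F v y ≠ b → F v x = F v y := by
    intro x y hx hy hxy hxab hyab
    have hxy' : x ≠ y := by rintro rfl; exact hxy .refl
    rcases hG v x y (by rintro rfl; exact hv hx) (by rintro rfl; exact hv hy) hxy' with h | h | h
    · exact h
    · rcases eq_or_eq_of_not hx hy hxy with h' | h' <;> simp_all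
    · rcases eq_or_eq_of_not hx hy hxy with h' | h' <;> simp_all
  by_cases hxy : ReachAvoiding F V a b x y
  · obtain ⟨w, hw, hxw⟩ := hout x hx
    obtain ⟨z, hwz, hzab⟩ := hreach w hw
    have hz := hwz.mem_right hw
    have hxz : ¬ ReachAvoiding F V a b x z := fun h => hxw (h.trans (symm hsym hwz))
    have hyz : ¬ ReachAvoiding F V a b y z := fun h => hxz (hxy.trans h)
    rw [key hx hz hxz hxab hzab, key hy hz hyz hyab hzab]
  · exact key hx hy hxy hxab hyab

end ReachAvoiding

variable [DecidableEq α] {V U : Finset α} {a b c : C} {v x y : α}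

lemma hasTwoColoredCut_insert_of_subset (hv : v ∉ V) (hUV : U ⊆ V) (hU : U.Nonempty)
    (hvU : ∀ u ∈ U, F u v = a ∨ F u v = b) (hcross : ∀ u ∈ U, ∀ w ∈ V \ U, F u w = a ∨ F u w = b) :
    HasTwoColoredCut F (insert v V) := by
  refine ⟨a, b, U, ssubset_of_subset_of_ne (hUV.trans (subset_insert v V)) ?_, hU, ?_⟩
  · rintro rfl
    exact hv (hUV (mem_insert_self v V))
  · intro u hu w hw
    rw [insert_sdiff_of_notMem _ (fun h => hv (hUV h)), mem_insert] at hw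
    rcases hw with rfl | hw
    exacts [hvU u hu, hcross u hu w hw]

lemma hasTwoColoredCut_insert_of_forall_eq (hv : v ∉ V) (hV : V.Nonempty)
    (h : ∀ w ∈ V, F v w = c) : HasTwoColoredCut F (insert v V) := by
  refine ⟨c, c, {v}, ?_, singleton_nonempty v, ?_⟩
  · obtain ⟨w, hw⟩ := hV
    exact (ssubset_iff_of_subset (singleton_subset_iff.2 (mem_insert_self v V))).2
      ⟨w, mem_insert_of_mem hw, fun h => hv (mem_singleton.1 h ▸ hw)⟩
  · intro u hu w hw
    rw [mem_singleton.1 hu]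
    rw [insert_sdiff_of_mem _ (mem_singleton_self v), mem_sdiff] at hw
    exact Or.inl (h w hw.1)

open ReachAvoiding in
lemma hasTwoColoredCut_insert_of_forall_reach (hsym : ∀ u v, F u v = F v u) (hv : v ∉ V)
    (hx : x ∈ V) (h : ∀ y, ReachAvoiding F V a b x y → F v y = a ∨ F v y = b) :
    HasTwoColoredCut F (insert v V) := by
  classical
  refine hasTwoColoredCut_insert_of_subset (U := V.filter (ReachAvoiding F V a b x))
    (a := a) (b := b) hv
    (filter_subset _ _) ⟨x, mem_filter.2 ⟨hx, .refl⟩⟩ (fun u hu => ?_) (fun u hu w hw => ?_)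
  · rw [hsym]
    exact h u (mem_filter.1 hu).2
  · obtain ⟨hu, hxu⟩ := mem_filter.1 hu
    obtain ⟨hw, hxw⟩ := mem_sdiff.1 hw
    replace hxw : ¬ ReachAvoiding F V a b x w := fun h => hxw (mem_filter.2 ⟨hw, h⟩)
    exact eq_or_eq_of_not hu hw fun huw => hxw (hxu.trans huw)

open ReachAvoiding in
/- A vertex `z` outside the class of `y` with `F v z = c` sees `y` in the color `F v y`, as the
triangle `v z y` is not rainbow. Hence the class of `y` is joined to the rest of `V` in that single
color and to `v` in the colors `c` and `F v y`. -/
lemma hasTwoColoredCut_insert_of_exists_reach (hsym : ∀ u v, F u v = F v u) (hG : IsRainbowFree F)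
    (hv : v ∉ V) (hout : ∀ x ∈ V, ∃ y ∈ V, ¬ ReachAvoiding F V a b x y) (hca : c ≠ a) (hcb : c ≠ b)
    (hreach : ∀ x ∈ V, ∃ z, ReachAvoiding F V a b x z ∧ F v z = c)
    (hy : y ∈ V) (hvy : F v y = a ∨ F v y = b) : HasTwoColoredCut F (insert v V) := by
  classical
  have hce : c ≠ F v y := by rcases hvy with h | h <;> rwa [h]
  have hne : ∀ {z}, z ∈ V → v ≠ z := fun hz h => hv (h ▸ hz)
  set U := V.filter (ReachAvoiding F V a b y)
  have hcross : ∀ u ∈ U, ∀ w ∈ V \ U, F u w = F v y := by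
    intro u hu w hw
    obtain ⟨hu, hyu⟩ := mem_filter.1 hu
    obtain ⟨hw, hyw⟩ := mem_sdiff.1 hw
    replace hyw : ¬ ReachAvoiding F V a b y w := fun h => hyw (mem_filter.2 ⟨hw, h⟩)
    obtain ⟨z, hwz, hvz⟩ := hreach w hw
    have hz := hwz.mem_right hw
    have hyz : ¬ ReachAvoiding F V a b y z := fun h => hyw (h.trans (symm hsym hwz))
    have hzy : F y z = F v y := by
      have hzy : z ≠ y := by rintro rfl; exact hyz .refl
      rcases hG v z y (hne hz) (hne hy) hzy with h | h | h
      · exact absurd (hvz ▸ h) hce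
      · rcases eq_or_eq_of_not hy hz hyz with h' | h' <;>
          rw [hsym, ← h, hvz] at h' <;> contradiction
      · rw [hsym, h]
    rw [← hzy, color_eq_of_reach hsym hG hy hz hyz hyu (symm hsym hwz)]
  have hvU : ∀ u ∈ U, F u v = c ∨ F u v = F v y := by
    intro u hu
    obtain ⟨w, hw, hyw⟩ := hout y hy
    obtain ⟨z, hwz, hvz⟩ := hreach w hw
    have hz := hwz.mem_right hw
    have hzU : z ∉ U := fun h => hyw ((mem_filter.1 h).2.trans (symm hsym hwz))
    have huz := hcross u hu z (mem_sdiff.2 ⟨hz, hzU⟩)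
    have hzu : z ≠ u := by rintro rfl; exact hzU hu
    rw [hsym]
    rcases hG v z u (hne hz) (hne (mem_filter.1 hu).1) hzu with h | h | h
    · exact Or.inl (h ▸ hvz)
    · rw [hvz, hsym, huz] at h; exact absurd h hce
    · rw [h, hsym, huz]; exact Or.inr rfl
  exact hasTwoColoredCut_insert_of_subset hv (filter_subset _ _) ⟨y, mem_filter.2 ⟨hy, .refl⟩⟩ hvU
    fun u hu w hw => Or.inr (hcross u hu w hw)

open ReachAvoiding in
theorem HasTwoColoredCut.insert (hsym : ∀ u v, F u v = F v u) (hG : IsRainbowFree F) (hv : v ∉ V)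
    (hcut : HasTwoColoredCut F V) : HasTwoColoredCut F (insert v V) := by
  obtain ⟨a, b, U, hUV, ⟨u₀, hu₀⟩, hcross⟩ := hcut
  have hout : ∀ x ∈ V, ∃ y ∈ V, ¬ ReachAvoiding F V a b x y := by
    intro x hx
    obtain ⟨w, hwV, hwU⟩ := exists_of_ssubset hUV
    by_cases hxU : x ∈ U
    · exact ⟨w, hwV, fun h => hwU (mem_of_cut hcross h hxU)⟩
    · exact ⟨u₀, hUV.subset hu₀, fun h => hxU (mem_of_cut hcross (symm hsym h) hu₀)⟩
  by_cases hclass : ∃ x ∈ V, ∀ y, ReachAvoiding F V a b x y → F v y = a ∨ F v y = b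
  · obtain ⟨x, hx, h⟩ := hclass
    exact hasTwoColoredCut_insert_of_forall_reach hsym hv hx h
  push Not at hclass
  obtain ⟨y₀, hu₀y₀, hy₀⟩ := hclass u₀ (hUV.subset hu₀)
  have hcol : ∀ y ∈ V, F v y ≠ a ∧ F v y ≠ b → F v y = F v y₀ := fun y hy hyab =>
    color_eq_of_forall_exists hsym hG hv hout hclass hy (hu₀y₀.mem_right (hUV.subset hu₀)) hyab hy₀
  by_cases hall : ∀ y ∈ V, F v y = F v y₀
  · exact hasTwoColoredCut_insert_of_forall_eq hv ⟨u₀, hUV.subset hu₀⟩ hall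
  push Not at hall
  obtain ⟨y, hy, hyc⟩ := hall
  refine hasTwoColoredCut_insert_of_exists_reach hsym hG hv hout hy₀.1 hy₀.2 (fun x hx => ?_) hy ?_
  · obtain ⟨z, hxz, hzab⟩ := hclass x hx
    exact ⟨z, hxz, hcol z (hxz.mem_right hx) hzab⟩
  · by_contra! h
    exact hyc (hcol y hy h)

theorem hasTwoColoredCut_of_two_le_card (hsym : ∀ u v, F u v = F v u) (hG : IsRainbowFree F)
    (hV : 2 ≤ #V) : HasTwoColoredCut F V := by
  induction V using Finset.induction_on with
  | empty => simp at hV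
  | insert v V hv ih =>
    rw [card_insert_of_notMem hv] at hV
    obtain hV | hV : 2 ≤ #V ∨ #V = 1 := by omega
    · exact (ih hV).insert hsym hG hv
    · obtain ⟨u, rfl⟩ := card_eq_one.1 hV
      exact hasTwoColoredCut_insert_of_forall_eq hv (singleton_nonempty u)
        fun w hw => by rw [mem_singleton.1 hw]

end GallaiCut

section MaxSubOn

variable {α C : Type*} [DecidableEq α] [DecidableEq C] {F : α → α → C} {S : Finset C}
  {U V Z : Finset α}

abbrev IsColoredIn (F : α → α → C) (S : Finset C) (Z : Finset α) : Prop :=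
  ∀ u ∈ Z, ∀ v ∈ Z, u ≠ v → F u v ∈ S

def maxSubOn (F : α → α → C) (V : Finset α) (S : Finset C) : ℕ :=
  (V.powerset.filter (IsColoredIn F S)).sup card

lemma maxSub_eq_maxSubOn_univ {m r : ℕ} (F : Fin m → Fin m → Fin r) (S : Finset (Fin r)) :
    maxSub F S = maxSubOn F univ S := by
  unfold maxSub maxSubOn
  convert rfl

lemma card_le_maxSubOn (hZV : Z ⊆ V) (hZ : IsColoredIn F S Z) : #Z ≤ maxSubOn F V S :=
  le_sup (mem_filter.2 ⟨mem_powerset.2 hZV, hZ⟩)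

lemma exists_card_eq_maxSubOn (F : α → α → C) (V : Finset α) (S : Finset C) :
    ∃ Z ⊆ V, IsColoredIn F S Z ∧ #Z = maxSubOn F V S := by
  obtain ⟨Z, hZ, hmax⟩ := exists_mem_eq_sup (V.powerset.filter (IsColoredIn F S))
    ⟨∅, mem_filter.2 ⟨empty_mem_powerset V, by simp [IsColoredIn]⟩⟩ card
  obtain ⟨hZV, hZ⟩ := mem_filter.1 hZ
  exact ⟨Z, mem_powerset.1 hZV, hZ, by rw [maxSubOn]; convert hmax.symm⟩

lemma maxSubOn_mono (hUV : U ⊆ V) : maxSubOn F U S ≤ maxSubOn F V S :=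
  sup_mono (filter_subset_filter _ (powerset_mono.2 hUV))

lemma one_le_maxSubOn (hV : V.Nonempty) : 1 ≤ maxSubOn F V S := by
  obtain ⟨v, hv⟩ := hV
  simpa using card_le_maxSubOn (F := F) (S := S) (singleton_subset_iff.2 hv)
    (by simp [IsColoredIn])

lemma maxSubOn_add_maxSubOn_sdiff_le {a b : C} (hsym : ∀ u v, F u v = F v u)
    (hUV : U ⊆ V) (ha : a ∈ S) (hb : b ∈ S)
    (hcross : ∀ u ∈ U, ∀ w ∈ V \ U, F u w = a ∨ F u w = b) :
    maxSubOn F U S + maxSubOn F (V \ U) S ≤ maxSubOn F V S := by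
  obtain ⟨Z₁, hZ₁U, hZ₁, h₁⟩ := exists_card_eq_maxSubOn F U S
  obtain ⟨Z₂, hZ₂W, hZ₂, h₂⟩ := exists_card_eq_maxSubOn F (V \ U) S
  have hcross' : ∀ u ∈ Z₁, ∀ w ∈ Z₂, F u w ∈ S := fun u hu w hw => by
    rcases hcross u (hZ₁U hu) w (hZ₂W hw) with h | h <;> rw [h] <;> assumption
  rw [← h₁, ← h₂, ← card_union_of_disjoint (disjoint_sdiff.mono hZ₁U hZ₂W)]
  refine card_le_maxSubOn (union_subset (hZ₁U.trans hUV) (hZ₂W.trans sdiff_subset)) ?_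
  intro u hu w hw huw
  rcases mem_union.1 hu with hu | hu <;> rcases mem_union.1 hw with hw | hw
  · exact hZ₁ u hu w hw huw
  · exact hcross' u hu w hw
  · exact hsym u w ▸ hcross' w hw u hu
  · exact hZ₂ u hu w hw huw

end MaxSubOn

theorem card_pow_le_prod_maxSubOn {α C : Type*} [DecidableEq α] [Fintype C] [DecidableEq C]
    {F : α → α → C} (hsym : ∀ u v, F u v = F v u) (hG : IsRainbowFree F) {s : ℕ} (hs : 2 ≤ s)
    (hsC : s ≤ Fintype.card C) (V : Finset α) :
    #V ^ (Fintype.card C - 2).choose (s - 2) ≤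
      ∏ S ∈ powersetCard s univ, maxSubOn F V S := by
  induction V using Finset.strongInduction with | H V ih =>
  have hK : (Fintype.card C - 2).choose (s - 2) ≠ 0 := (Nat.choose_pos (by omega)).ne'
  rcases lt_or_ge #V 2 with hV | hV
  · obtain rfl | hne := V.eq_empty_or_nonempty
    · simp [zero_pow hK]
    · rw [show #V = 1 by have := hne.card_pos; omega, one_pow]
      exact one_le_prod' fun S _ => one_le_maxSubOn hne
  obtain ⟨a, b, U, hUV, hU, hcross⟩ := hasTwoColoredCut_of_two_le_card hsym hG hV
  obtain ⟨P, habP, -, hP⟩ := exists_subsuperset_card_eq (subset_univ {a, b})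
    (card_le_two : #{a, b} ≤ 2) (by rw [card_univ]; omega)
  have hA : #{S ∈ powersetCard s univ | P ⊆ S} = (Fintype.card C - 2).choose (s - 2) := by
    rw [card_filter_superset_powersetCard (subset_univ P) (by omega), hP, card_univ]
  have h := pow_add_le_prod_of_le_add (filter_subset (P ⊆ ·) _)
    (fun S _ => maxSubOn_mono hUV.subset) (fun S _ => maxSubOn_mono sdiff_subset)
    (fun S hS => maxSubOn_add_maxSubOn_sdiff_le hsym hUV.subset
      ((mem_filter.1 hS).2 (habP (mem_insert_self a {b})))
      ((mem_filter.1 hS).2 (habP (mem_insert_of_mem (mem_singleton_self b)))) hcross)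
    (hA ▸ ih U hUV) (hA ▸ ih (V \ U) (sdiff_ssubset hUV.subset hU))
  rwa [hA, ← card_union_of_disjoint disjoint_sdiff, union_sdiff_of_subset hUV.subset] at h

/-- For any Gallai `r`-coloring `F` of `E(K_n)` and `2 ≤ s ≤ r`, the product
over all `s`-element color sets `S` of `maxSub F S` is at least
`n^{C(r-2, s-2)}`. -/
theorem gallai_general_product (r s n : ℕ) (hs : 2 ≤ s) (hsr : s ≤ r)
    (F : Fin n → Fin n → Fin r)
    (hsym : ∀ u v, F u v = F v u) (hG : IsRainbowFree F) :
    n ^ ((r - 2).choose (s - 2)) ≤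
      ∏ S ∈ Finset.powersetCard s (Finset.univ : Finset (Fin r)), maxSub F S := by
  have h := card_pow_le_prod_maxSubOn hsym hG hs (by rwa [Fintype.card_fin]) (univ : Finset (Fin n))
  rw [card_univ, Fintype.card_fin, Fintype.card_fin] at h
  simpa only [maxSub_eq_maxSubOn_univ] using h
end

section
/- In any Gallai r-coloring F of E(K_m) and any s with 2 ≤ s ≤ r, there is a set S of s colors with g(F,S) ≥ m^{C(s,2)/C(r,2)}. -/
/-!
Write `g_W(S)` for the size of the largest subset of `W` spanning only colors of `S`, and
`K = C(r-2, s-2)`.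
We show `|W|^K ≤ ∏_{|S| = s} g_W(S)` by induction on `W`. A Gallai-colored vertex set with at
least two vertices splits as `W = U ∪ (W \ U)` with all crossing edges colored `a` or `b` (the
weak form of Gallai's theorem). For the `K` color sets `S ⊇ {a, b}` we get
`g_U(S) + g_{W \ U}(S) ≤ g_W(S)`, for the others `g_W(S)` dominates both terms, and Mahler's
inequality (superadditivity of the geometric mean) closes the induction. The largest factor of
the product at `W = V(K_m)` is then at least `m^{K / C(r, s)} = m^{C(s,2) / C(r,2)}`.
-/

open Finset

namespace IsRainbowFree

variable {V C : Type*} {F : V → V → C}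

theorem apex_colors_eq (hG : IsRainbowFree F) {w p q : V} {a b : C}
    (hwp : w ≠ p) (hwq : w ≠ q) (hpq : p ≠ q) (hp : F w p ≠ a ∧ F w p ≠ b)
    (hq : F w q ≠ a ∧ F w q ≠ b) (hpq' : F p q = a ∨ F p q = b) : F w p = F w q := by
  have := hG w p q hwp hwq hpq
  grind

theorem color_propagates (hG : IsRainbowFree F) {w x u v : V} {c d e : C}
    (hwx : w ≠ x) (hwv : w ≠ v) (huv : u ≠ v)
    (hx : F w x = d) (hu : F w u = c) (hxu : F x u = c) (hv : F w v = c) (hcd : c ≠ d)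
    (hce : c ≠ e) (hxv : F x v = d ∨ F x v = e) (huv' : F u v = d ∨ F u v = e) :
    F x v = d ∧ F u v = d := by
  have hxv' : x ≠ v := by rintro rfl; exact hcd (hv ▸ hx)
  have hxu' : x ≠ u := by rintro rfl; exact hcd (hu ▸ hx)
  have := hG w x v hwx hwv hxv'
  have := hG x u v hxu' hxv' huv
  grind

end IsRainbowFree

section Cut

variable {V C : Type*} [DecidableEq V] {F : V → V → C}

def IsBicoloredCut (F : V → V → C) (W U : Finset V) (a b : C) : Prop :=
  U.Nonempty ∧ U ⊂ W ∧ ∀ u ∈ U, ∀ v ∈ W \ U, F u v = a ∨ F u v = b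

theorem IsBicoloredCut.sdiff (hsym : ∀ u v, F u v = F v u) {W U : Finset V} {a b : C}
    (h : IsBicoloredCut F W U a b) : IsBicoloredCut F W (W \ U) a b := by
  obtain ⟨hU, hUW, hcross⟩ := h
  refine ⟨sdiff_nonempty.2 (not_subset_of_ssubset hUW), sdiff_ssubset hUW.subset hU, ?_⟩
  intro u hu v hv
  rw [Finset.sdiff_sdiff_eq_self hUW.subset] at hv
  rw [hsym]
  exact hcross v hv u hu

theorem IsBicoloredCut.cross (hsym : ∀ u v, F u v = F v u) {W U : Finset V} {a b : C}
    (h : IsBicoloredCut F W U a b) {p q : V} (hp : p ∈ W) (hq : q ∈ W) (hpq : p ∈ U ↔ q ∉ U) :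
    F p q = a ∨ F p q = b := by
  by_cases hpU : p ∈ U
  · exact h.2.2 p hpU q (mem_sdiff.2 ⟨hq, hpq.1 hpU⟩)
  · rw [hsym]
    exact h.2.2 q (not_not.1 (mt hpq.2 hpU)) p (mem_sdiff.2 ⟨hp, hpU⟩)

theorem isBicoloredCut_insert_of_subset (hsym : ∀ u v, F u v = F v u) {W X : Finset V} {w : V}
    {a b : C} (hw : w ∉ W) (hX : X.Nonempty) (hXW : X ⊆ W)
    (hcross : ∀ x ∈ X, ∀ v ∈ W \ X, F x v = a ∨ F x v = b)
    (hwX : ∀ x ∈ X, F w x = a ∨ F w x = b) :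
    IsBicoloredCut F (insert w W) X a b := by
  refine ⟨hX, Finset.ssubset_of_subset_of_ssubset hXW (ssubset_insert hw), ?_⟩
  intro x hx v hv
  rw [insert_sdiff_of_notMem _ (fun h => hw (hXW h)), mem_insert] at hv
  rcases hv with rfl | hv
  · rw [hsym]; exact hwX x hx
  · exact hcross x hx v hv

theorem isBicoloredCut_insert_singleton {W : Finset V} {w : V} {a b : C} (hw : w ∉ W)
    (hW : W.Nonempty) (hwW : ∀ v ∈ W, F w v = a ∨ F w v = b) :
    IsBicoloredCut F (insert w W) {w} a b := by
  obtain ⟨v, hv⟩ := hW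
  refine ⟨singleton_nonempty w, ?_, ?_⟩
  · refine (ssubset_iff_of_subset (by simp)).2 ⟨v, mem_insert_of_mem hv, ?_⟩
    rw [mem_singleton]
    exact ne_of_mem_of_not_mem hv hw
  · intro u hu x hx
    rw [mem_singleton.1 hu]
    grind

theorem IsBicoloredCut.third_color_unique (hG : IsRainbowFree F) {W U : Finset V}
    {w z₁ z₂ : V} {a b : C} (hU : IsBicoloredCut F W U a b) (hw : w ∉ W)
    (hz₁ : z₁ ∈ U) (hz₂ : z₂ ∈ W \ U) (h₁ : F w z₁ ≠ a ∧ F w z₁ ≠ b)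
    (h₂ : F w z₂ ≠ a ∧ F w z₂ ≠ b) {z : V} (hz : z ∈ W) (h : F w z ≠ a ∧ F w z ≠ b) :
    F w z = F w z₁ := by
  have hne : ∀ {p}, p ∈ W → w ≠ p := fun hp hwp => hw (hwp ▸ hp)
  have hz₁W := hU.2.1.subset hz₁
  have h₁₂ := hG.apex_colors_eq (hne hz₁W) (hne (mem_sdiff.1 hz₂).1)
    (ne_of_mem_of_not_mem hz₁ (mem_sdiff.1 hz₂).2) h₁ h₂ (hU.2.2 z₁ hz₁ z₂ hz₂)
  by_cases hzU : z ∈ U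
  · rw [h₁₂]
    exact hG.apex_colors_eq (hne hz) (hne (mem_sdiff.1 hz₂).1)
      (ne_of_mem_of_not_mem hzU (mem_sdiff.1 hz₂).2) h h₂ (hU.2.2 z hzU z₂ hz₂)
  · exact (hG.apex_colors_eq (hne hz₁W) (hne hz) (ne_of_mem_of_not_mem hz₁ hzU) h₁ h
      (hU.2.2 z₁ hz₁ z (mem_sdiff.2 ⟨hz, hzU⟩))).symm

theorem exists_pair_of_not_bicolored [DecidableEq C] (hG : IsRainbowFree F) {W : Finset V}
    {w : V} {a b c d : C} (hw : w ∉ W) (hd : d = a ∨ d = b)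
    (hc : ∀ z ∈ W, F w z = a ∨ F w z = b ∨ F w z = c)
    (h : ¬ ∀ x ∈ W.filter (F w · = d), ∀ v ∈ W \ W.filter (F w · = d), F x v = a ∨ F x v = b) :
    ∃ x ∈ W, ∃ u ∈ W, F w x = d ∧ F w u = c ∧ F x u = c := by
  push Not at h
  obtain ⟨x, hx, u, hu, hua, hub⟩ := h
  simp only [mem_filter, mem_sdiff] at hx hu
  have hxu : x ≠ u := by rintro rfl; exact hu.2 hx
  have := hG w x u (fun h => hw (h ▸ hx.1)) (fun h => hw (h ▸ hu.1)) hxu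
  have := hc u hu.1
  refine ⟨x, hx.1, u, hu.1, hx.2, ?_⟩
  grind

/- Propagating `a` from `wx` and `b` from `wy` (`IsRainbowFree.color_propagates`) forces the edge
`uu'` to have both colors. If `u` and `u'` lie on the same side of the cut, the hypotheses of the
propagation are first obtained from a `c`-neighbour `q` of `w` on the other side. -/
theorem IsBicoloredCut.false_of_pairs (hsym : ∀ u v, F u v = F v u) (hG : IsRainbowFree F)
    {W U : Finset V} {w z₁ z₂ x u y u' : V} {a b c : C} (hU : IsBicoloredCut F W U a b)
    (hw : w ∉ W) (hz₁ : z₁ ∈ U) (hz₂ : z₂ ∈ W \ U) (hc₁ : F w z₁ = c) (hc₂ : F w z₂ = c)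
    (hab : a ≠ b) (hca : c ≠ a) (hcb : c ≠ b)
    (hx : x ∈ W) (hu : u ∈ W) (hxa : F w x = a) (huc : F w u = c) (hxu : F x u = c)
    (hy : y ∈ W) (hu' : u' ∈ W) (hyb : F w y = b) (hu'c : F w u' = c) (hyu' : F y u' = c) :
    False := by
  have hne : ∀ {p}, p ∈ W → w ≠ p := fun hp hwp => hw (hwp ▸ hp)
  have hside : ∀ {p q}, p ∈ W → q ∈ W → F p q = c → (p ∈ U ↔ q ∈ U) := by
    intro p q hp hq hpq
    by_contra h
    rcases hU.cross hsym hp hq (by tauto) with h' | h' <;> grind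
  have hxu_side := hside hx hu hxu
  have hyu'_side := hside hy hu' hyu'
  obtain ⟨huu', hu_u', hx_u', hy_u⟩ : u ≠ u' ∧ (F u u' = a ∨ F u u' = b) ∧
      (F x u' = a ∨ F x u' = b) ∧ (F y u = a ∨ F y u = b) := by
    by_cases hs : u ∈ U ↔ u' ∈ U
    · obtain ⟨q, hq, hqc, hqs⟩ : ∃ q ∈ W, F w q = c ∧ (u ∈ U ↔ q ∉ U) := by
        by_cases huU : u ∈ U
        · exact ⟨z₂, (mem_sdiff.1 hz₂).1, hc₂, by simp [huU, (mem_sdiff.1 hz₂).2]⟩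
        · exact ⟨z₁, hU.2.1.subset hz₁, hc₁, by simp [huU, hz₁]⟩
      have huq : u ≠ q := by rintro rfl; tauto
      have hu'q : u' ≠ q := by rintro rfl; tauto
      obtain ⟨hxq, huq'⟩ := hG.color_propagates (hne hx) (hne hq) huq hxa huc hxu hqc hca hcb
        (hU.cross hsym hx hq (by tauto)) (hU.cross hsym hu hq hqs)
      obtain ⟨hyq, hu'q'⟩ := hG.color_propagates (hne hy) (hne hq) hu'q hyb hu'c hyu' hqc hcb hca
        (hU.cross hsym hy hq (by tauto)).symm (hU.cross hsym hu' hq (by tauto)).symm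
      have huu' : u ≠ u' := by rintro rfl; exact hab (huq'.symm.trans hu'q')
      have hxu' : x ≠ u' := by rintro rfl; exact hca (hu'c.symm.trans hxa)
      have hyu : y ≠ u := by rintro rfl; exact hcb (huc.symm.trans hyb)
      have hxq' : x ≠ q := by rintro rfl; exact hca (hqc.symm.trans hxa)
      have hyq' : y ≠ q := by rintro rfl; exact hcb (hqc.symm.trans hyb)
      have := hG u u' q huu' huq hu'q
      have := hG x u' q hxu' hxq' hu'q
      have := hG y u q hyu hyq' huq
      grind
    · exact ⟨by rintro rfl; tauto, hU.cross hsym hu hu' (by tauto),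
        hU.cross hsym hx hu' (by tauto), hU.cross hsym hy hu (by tauto)⟩
  have ha := hG.color_propagates (hne hx) (hne hu') huu' hxa huc hxu hu'c hca hcb hx_u' hu_u'
  have hb := hG.color_propagates (hne hy) (hne hu) huu'.symm hyb hu'c hyu' huc hcb hca
    hy_u.symm (hsym u' u ▸ hu_u'.symm)
  exact hab (ha.2.symm.trans (hsym u u' ▸ hb.2))

theorem IsBicoloredCut.exists_insert_of_three_colors (hsym : ∀ u v, F u v = F v u)
    (hG : IsRainbowFree F) {W U : Finset V} {w z₁ z₂ : V} {a b c : C}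
    (hU : IsBicoloredCut F W U a b) (hw : w ∉ W) (hz₁ : z₁ ∈ U) (hz₂ : z₂ ∈ W \ U)
    (hc₁ : F w z₁ = c) (hc₂ : F w z₂ = c) (hca : c ≠ a) (hcb : c ≠ b)
    (hc : ∀ z ∈ W, F w z = a ∨ F w z = b ∨ F w z = c) :
    ∃ X a' b', IsBicoloredCut F (insert w W) X a' b' := by
  classical
  have hW : W.Nonempty := ⟨z₁, hU.2.1.subset hz₁⟩
  by_cases hac : ∀ z ∈ W, F w z = a ∨ F w z = c
  · exact ⟨{w}, a, c, isBicoloredCut_insert_singleton hw hW hac⟩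
  by_cases hbc : ∀ z ∈ W, F w z = b ∨ F w z = c
  · exact ⟨{w}, b, c, isBicoloredCut_insert_singleton hw hW hbc⟩
  push Not at hac hbc
  obtain ⟨y, hy, hya, hyc⟩ := hac
  obtain ⟨x, hx, hxb, hxc⟩ := hbc
  have hyb : F w y = b := by grind
  have hxa : F w x = a := by grind
  set A := W.filter (F w · = a)
  set B := W.filter (F w · = b)
  by_cases hA : ∀ x ∈ A, ∀ v ∈ W \ A, F x v = a ∨ F x v = b
  · exact ⟨A, a, b, isBicoloredCut_insert_of_subset hsym hw ⟨x, mem_filter.2 ⟨hx, hxa⟩⟩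
      (filter_subset _ _) hA fun z hz => Or.inl (mem_filter.1 hz).2⟩
  by_cases hB : ∀ x ∈ B, ∀ v ∈ W \ B, F x v = a ∨ F x v = b
  · exact ⟨B, a, b, isBicoloredCut_insert_of_subset hsym hw ⟨y, mem_filter.2 ⟨hy, hyb⟩⟩
      (filter_subset _ _) hB fun z hz => Or.inr (mem_filter.1 hz).2⟩
  obtain ⟨x', hx', u, hu, h₁⟩ := exists_pair_of_not_bicolored hG hw (Or.inl rfl) hc hA
  obtain ⟨y', hy', u', hu', h₂⟩ := exists_pair_of_not_bicolored hG hw (Or.inr rfl) hc hB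
  exact (hU.false_of_pairs hsym hG hw hz₁ hz₂ hc₁ hc₂ (fun h => hxb (hxa.trans h)) hca hcb
    hx' hu h₁.1 h₁.2.1 h₁.2.2 hy' hu' h₂.1 h₂.2.1 h₂.2.2).elim

theorem IsBicoloredCut.exists_insert (hsym : ∀ u v, F u v = F v u) (hG : IsRainbowFree F)
    {W U : Finset V} {w : V} {a b : C} (hU : IsBicoloredCut F W U a b) (hw : w ∉ W) :
    ∃ X a' b', IsBicoloredCut F (insert w W) X a' b' := by
  by_cases h₁ : ∀ x ∈ U, F w x = a ∨ F w x = b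
  · exact ⟨U, a, b, isBicoloredCut_insert_of_subset hsym hw hU.1 hU.2.1.subset hU.2.2 h₁⟩
  have hU' := hU.sdiff hsym
  by_cases h₂ : ∀ x ∈ W \ U, F w x = a ∨ F w x = b
  · exact ⟨W \ U, a, b, isBicoloredCut_insert_of_subset hsym hw hU'.1 sdiff_subset hU'.2.2 h₂⟩
  push Not at h₁ h₂
  obtain ⟨z₁, hz₁, hz₁'⟩ := h₁
  obtain ⟨z₂, hz₂, hz₂'⟩ := h₂
  have hc := fun z hz h => hU.third_color_unique hG hw hz₁ hz₂ hz₁' hz₂' (z := z) hz h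
  refine hU.exists_insert_of_three_colors hsym hG hw hz₁ hz₂ rfl
    (hc z₂ (mem_sdiff.1 hz₂).1 hz₂') hz₁'.1 hz₁'.2 fun z hz => ?_
  by_cases h : F w z ≠ a ∧ F w z ≠ b
  · exact Or.inr (Or.inr (hc z hz h))
  · tauto

theorem exists_isBicoloredCut (hsym : ∀ u v, F u v = F v u) (hG : IsRainbowFree F)
    {W : Finset V} (hW : 2 ≤ #W) : ∃ U a b, IsBicoloredCut F W U a b := by
  induction W using Finset.induction_on with
  | empty => simp at hW
  | insert w W hw ih =>
    rw [card_insert_of_notMem hw] at hW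
    obtain hW1 | hW2 : #W = 1 ∨ 2 ≤ #W := by omega
    · obtain ⟨v, rfl⟩ := card_eq_one.1 hW1
      exact ⟨{w}, F w v, F w v, isBicoloredCut_insert_singleton hw (singleton_nonempty v)
        (by simp)⟩
    · obtain ⟨U, a, b, hU⟩ := ih hW2
      exact hU.exists_insert hsym hG hw

end Cut

section Means

variable {ι : Type*}

theorem prod_le_mean_pow {s : Finset ι} (hs : s.Nonempty) {z : ι → ℝ}
    (hz : ∀ i ∈ s, 0 ≤ z i) : ∏ i ∈ s, z i ≤ ((∑ i ∈ s, z i) / #s) ^ #s := by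
  have hn : (#s : ℝ) ≠ 0 := by exact_mod_cast hs.card_pos.ne'
  have hamgm := Real.geom_mean_le_arith_mean_weighted s (fun _ => (#s : ℝ)⁻¹) z
    (fun _ _ => by positivity) (by simp [hn]) hz
  rw [Real.finsetProd_rpow s z hz, ← mul_sum, inv_mul_eq_div] at hamgm
  calc ∏ i ∈ s, z i = ((∏ i ∈ s, z i) ^ (#s : ℝ)⁻¹) ^ #s :=
        (Real.rpow_inv_natCast_pow (prod_nonneg hz) hs.card_pos.ne').symm
    _ ≤ ((∑ i ∈ s, z i) / #s) ^ #s := by gcongr; positivity [prod_nonneg hz]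

theorem le_mul_mean_of_pow_le {s : Finset ι} (hs : s.Nonempty) {h t : ι → ℝ}
    (hh : ∀ i ∈ s, 0 ≤ h i) (ht : ∀ i ∈ s, 0 < t i) {c p G : ℝ} (hp : 0 ≤ p)
    (hG : 0 ≤ G) (hGt : G ^ #s = c * ∏ i ∈ s, t i) (hph : p ^ #s ≤ c * ∏ i ∈ s, h i) :
    p ≤ G * ((∑ i ∈ s, h i / t i) / #s) := by
  have hq : ∀ i ∈ s, 0 ≤ h i / t i := fun i hi => div_nonneg (hh i hi) (ht i hi).le
  refine (pow_le_pow_iff_left₀ hp (by positivity [sum_nonneg hq]) hs.card_pos.ne').1 ?_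
  calc p ^ #s ≤ c * ∏ i ∈ s, h i := hph
    _ = (∏ i ∈ s, h i / t i) * G ^ #s := by
        rw [hGt, prod_div_distrib]
        field_simp [(prod_pos ht).ne']
    _ ≤ ((∑ i ∈ s, h i / t i) / #s) ^ #s * G ^ #s := by
        gcongr
        exact prod_le_mean_pow hs hq
    _ = (G * ((∑ i ∈ s, h i / t i) / #s)) ^ #s := by ring

/- Mahler's inequality, with both sides raised to the power `#s` and scaled by `c`. -/
theorem add_pow_card_le_mul_prod_add {s : Finset ι} (hs : s.Nonempty) {f g : ι → ℝ}
    (hf : ∀ i ∈ s, 0 < f i) (hg : ∀ i ∈ s, 0 < g i) {c p q : ℝ} (hc : 0 ≤ c) (hp : 0 ≤ p)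
    (hq : 0 ≤ q) (hpf : p ^ #s ≤ c * ∏ i ∈ s, f i) (hqg : q ^ #s ≤ c * ∏ i ∈ s, g i) :
    (p + q) ^ #s ≤ c * ∏ i ∈ s, (f i + g i) := by
  have ht : ∀ i ∈ s, 0 < f i + g i := fun i hi => add_pos (hf i hi) (hg i hi)
  have hct : 0 ≤ c * ∏ i ∈ s, (f i + g i) := mul_nonneg hc (prod_nonneg fun i hi => (ht i hi).le)
  set G := (c * ∏ i ∈ s, (f i + g i)) ^ (#s : ℝ)⁻¹
  have hGt : G ^ #s = c * ∏ i ∈ s, (f i + g i) :=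
    Real.rpow_inv_natCast_pow hct hs.card_pos.ne'
  have hfrac : ∑ i ∈ s, f i / (f i + g i) + ∑ i ∈ s, g i / (f i + g i) = #s := by
    rw [← sum_add_distrib, card_eq_sum_ones, Nat.cast_sum, Nat.cast_one]
    exact sum_congr rfl fun i hi => by rw [← add_div, div_self (ht i hi).ne']
  have hpq := add_le_add
    (le_mul_mean_of_pow_le hs (fun i hi => (hf i hi).le) ht hp (by positivity) hGt hpf)
    (le_mul_mean_of_pow_le hs (fun i hi => (hg i hi).le) ht hq (by positivity) hGt hqg)
  rw [← mul_add, ← add_div, hfrac, div_self (by exact_mod_cast hs.card_pos.ne'), mul_one] at hpq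
  calc (p + q) ^ #s ≤ G ^ #s := by gcongr
    _ = c * ∏ i ∈ s, (f i + g i) := hGt

theorem pow_card_le_prod_of_split [DecidableEq ι] {P A : Finset ι} (hAP : A ⊆ P)
    (hA : A.Nonempty) {x y z : ι → ℝ} (hx : ∀ i ∈ P, 0 < x i) (hy : ∀ i ∈ P, 0 < y i)
    (hxz : ∀ i ∈ P \ A, x i ≤ z i) (hyz : ∀ i ∈ P \ A, y i ≤ z i)
    (hxyz : ∀ i ∈ A, x i + y i ≤ z i) {p q : ℝ} (hp : 0 ≤ p) (hq : 0 ≤ q)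
    (hpx : p ^ #A ≤ ∏ i ∈ P, x i) (hqy : q ^ #A ≤ ∏ i ∈ P, y i) :
    (p + q) ^ #A ≤ ∏ i ∈ P, z i := by
  rw [← prod_sdiff hAP] at hpx hqy ⊢
  have hz : ∀ i ∈ P \ A, 0 ≤ z i := fun i hi => (hx i (mem_sdiff.1 hi).1).le.trans (hxz i hi)
  have hxA : ∀ i ∈ A, 0 < x i := fun i hi => hx i (hAP hi)
  have hyA : ∀ i ∈ A, 0 < y i := fun i hi => hy i (hAP hi)
  calc (p + q) ^ #A ≤ (∏ i ∈ P \ A, z i) * ∏ i ∈ A, (x i + y i) := by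
        refine add_pow_card_le_mul_prod_add hA hxA hyA (prod_nonneg hz) hp hq ?_ ?_
        · refine hpx.trans (mul_le_mul_of_nonneg_right (prod_le_prod ?_ hxz) ?_)
          exacts [fun i hi => (hx i (mem_sdiff.1 hi).1).le, prod_nonneg fun i hi => (hxA i hi).le]
        · refine hqy.trans (mul_le_mul_of_nonneg_right (prod_le_prod ?_ hyz) ?_)
          exacts [fun i hi => (hy i (mem_sdiff.1 hi).1).le, prod_nonneg fun i hi => (hyA i hi).le]
    _ ≤ (∏ i ∈ P \ A, z i) * ∏ i ∈ A, z i :=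
        mul_le_mul_of_nonneg_left (prod_le_prod (fun i hi => (add_pos (hxA i hi) (hyA i hi)).le)
          hxyz) (prod_nonneg hz)

end Means

section MaxSubIn

variable {V C : Type*} [DecidableEq V] [DecidableEq C] (F : V → V → C)

def maxSubIn (W : Finset V) (S : Finset C) : ℕ :=
  (W.powerset.filter fun Z => ∀ u ∈ Z, ∀ v ∈ Z, u ≠ v → F u v ∈ S).sup card

variable {F}

theorem card_le_maxSubIn {W Z : Finset V} {S : Finset C} (hZW : Z ⊆ W)
    (hZ : ∀ u ∈ Z, ∀ v ∈ Z, u ≠ v → F u v ∈ S) : #Z ≤ maxSubIn F W S :=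
  le_sup (f := card) (mem_filter.2 ⟨mem_powerset.2 hZW, hZ⟩)

theorem exists_card_eq_maxSubIn (W : Finset V) (S : Finset C) :
    ∃ Z ⊆ W, (∀ u ∈ Z, ∀ v ∈ Z, u ≠ v → F u v ∈ S) ∧ #Z = maxSubIn F W S := by
  have hne : (W.powerset.filter fun Z => ∀ u ∈ Z, ∀ v ∈ Z, u ≠ v → F u v ∈ S).Nonempty :=
    ⟨∅, by simp⟩
  obtain ⟨Z, hZ, hcard⟩ := exists_mem_eq_sup _ hne card
  rw [mem_filter, mem_powerset] at hZ
  exact ⟨Z, hZ.1, hZ.2, hcard.symm⟩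

theorem maxSubIn_mono {U W : Finset V} (hUW : U ⊆ W) (S : Finset C) :
    maxSubIn F U S ≤ maxSubIn F W S := by
  obtain ⟨Z, hZU, hZ, hcard⟩ := exists_card_eq_maxSubIn (F := F) U S
  exact hcard ▸ card_le_maxSubIn (hZU.trans hUW) hZ

theorem one_le_maxSubIn {W : Finset V} (hW : W.Nonempty) (S : Finset C) :
    1 ≤ maxSubIn F W S := by
  obtain ⟨v, hv⟩ := hW
  simpa using card_le_maxSubIn (F := F) (S := S) (singleton_subset_iff.2 hv)
    fun u hu x hx hux => absurd ((mem_singleton.1 hu).trans (mem_singleton.1 hx).symm) hux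

theorem IsBicoloredCut.maxSubIn_add_le (hsym : ∀ u v, F u v = F v u) {W U : Finset V}
    {a b : C} (hU : IsBicoloredCut F W U a b) {S : Finset C} (ha : a ∈ S) (hb : b ∈ S) :
    maxSubIn F U S + maxSubIn F (W \ U) S ≤ maxSubIn F W S := by
  obtain ⟨Z₁, hZ₁, hcol₁, h₁⟩ := exists_card_eq_maxSubIn (F := F) U S
  obtain ⟨Z₂, hZ₂, hcol₂, h₂⟩ := exists_card_eq_maxSubIn (F := F) (W \ U) S
  have hcross : ∀ u ∈ Z₁, ∀ v ∈ Z₂, F u v ∈ S := fun u hu v hv => by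
    rcases hU.2.2 u (hZ₁ hu) v (hZ₂ hv) with h | h <;> rw [h] <;> assumption
  rw [← h₁, ← h₂, ← card_union_of_disjoint (disjoint_of_subset_left hZ₁
    (disjoint_of_subset_right hZ₂ disjoint_sdiff))]
  refine card_le_maxSubIn (union_subset (hZ₁.trans hU.2.1.subset) (hZ₂.trans sdiff_subset)) ?_
  simp only [mem_union]
  rintro u (hu | hu) v (hv | hv) huv
  · exact hcol₁ u hu v hv huv
  · exact hcross u hu v hv
  · exact hsym u v ▸ hcross v hv u hu
  · exact hcol₂ u hu v hv huv

theorem pow_card_le_prod_maxSubIn [Fintype C] (hsym : ∀ u v, F u v = F v u)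
    (hG : IsRainbowFree F) {s : ℕ} (hs : 2 ≤ s) (hsC : s ≤ Fintype.card C) (W : Finset V) :
    (#W : ℝ) ^ (Fintype.card C - 2).choose (s - 2) ≤
      ∏ S ∈ powersetCard s univ, (maxSubIn F W S : ℝ) := by
  induction W using Finset.strongInduction with
  | H W ih =>
  have hK : (Fintype.card C - 2).choose (s - 2) ≠ 0 := (Nat.choose_pos (by omega)).ne'
  obtain rfl | hW := W.eq_empty_or_nonempty
  · simp [zero_pow hK, prod_nonneg]
  have hpos : ∀ {X : Finset V}, X.Nonempty → ∀ S, (0 : ℝ) < maxSubIn F X S :=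
    fun hX S => by exact_mod_cast one_le_maxSubIn hX S
  obtain hW1 | hW2 : #W = 1 ∨ 2 ≤ #W := by have := hW.card_pos; omega
  · rw [hW1, Nat.cast_one, one_pow]
    exact one_le_prod fun S _ => by exact_mod_cast one_le_maxSubIn hW S
  obtain ⟨U, a, b, hU⟩ := exists_isBicoloredCut hsym hG hW2
  obtain ⟨T, habT, -, hT⟩ := exists_subsuperset_card_eq (subset_univ {a, b})
    (card_le_two (a := a) (b := b)) (by rw [card_univ]; omega)
  have hA := card_filter_powersetCard_subset T univ s (subset_univ T) (by omega)
  rw [hT, card_univ] at hA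
  rw [← hA]
  have hU' := hU.sdiff hsym
  rw [← card_sdiff_add_card_eq_card hU.2.1.subset, Nat.cast_add, add_comm]
  refine pow_card_le_prod_of_split (filter_subset _ _) (card_pos.1 (by omega))
    (fun S _ => hpos hU.1 S) (fun S _ => hpos hU'.1 S)
    (fun S _ => by exact_mod_cast maxSubIn_mono hU.2.1.subset S)
    (fun S _ => by exact_mod_cast maxSubIn_mono (F := F) sdiff_subset S) (fun S hS => ?_)
    (Nat.cast_nonneg _) (Nat.cast_nonneg _) (hA ▸ ih U hU.2.1) (hA ▸ ih _ hU'.2.1)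
  have hTS := (mem_filter.1 hS).2
  exact_mod_cast hU.maxSubIn_add_le hsym (hTS (habT (by simp))) (hTS (habT (by simp)))

end MaxSubIn

theorem maxSub_eq_maxSubIn {m r : ℕ} (F : Fin m → Fin m → Fin r) (S : Finset (Fin r)) :
    maxSub F S = maxSubIn F univ S := by
  unfold maxSub maxSubIn
  congr

theorem rpow_div_le_of_pow_le_pow {x y : ℝ} (hx : 0 ≤ x) (hy : 0 ≤ y) {k n : ℕ} (hn : n ≠ 0)
    (h : x ^ k ≤ y ^ n) : x ^ ((k : ℝ) / n) ≤ y :=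
  calc x ^ ((k : ℝ) / n) = (x ^ k) ^ (n⁻¹ : ℝ) := by
        rw [div_eq_mul_inv, Real.rpow_mul hx, Real.rpow_natCast]
    _ ≤ (y ^ n) ^ (n⁻¹ : ℝ) := by gcongr
    _ = y := Real.pow_rpow_inv_natCast hy hn

theorem choose_two_div_choose_two {r s : ℕ} (hs : 2 ≤ s) (hsr : s ≤ r) :
    (s.choose 2 : ℝ) / r.choose 2 = ((r - 2).choose (s - 2) : ℝ) / r.choose s := by
  have h := Nat.choose_mul (n := r) hs
  rw [div_eq_div_iff (by exact_mod_cast (Nat.choose_pos (hs.trans hsr)).ne')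
    (by exact_mod_cast (Nat.choose_pos hsr).ne')]
  exact_mod_cast (mul_comm _ _).trans (h.trans (mul_comm _ _))

/-- In any Gallai `r`-coloring `F` of `E(K_m)` and any `s` with `2 ≤ s ≤ r`,
there is a set `S` of `s` colors with `maxSub F S ≥ m^{C(s,2)/C(r,2)}`. -/
theorem gallai_weak_lower (r s m : ℕ) (hs : 2 ≤ s) (hsr : s ≤ r)
    (F : Fin m → Fin m → Fin r)
    (hsym : ∀ u v, F u v = F v u) (hG : IsRainbowFree F) :
    ∃ S ∈ Finset.powersetCard s (Finset.univ : Finset (Fin r)),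
      (m : ℝ) ^ ((s.choose 2 : ℝ) / (r.choose 2 : ℝ)) ≤ (maxSub F S : ℝ) := by
  have hprod := pow_card_le_prod_maxSubIn hsym hG hs (by simpa using hsr) (univ : Finset (Fin m))
  simp only [card_univ, Fintype.card_fin] at hprod
  obtain ⟨S, hS, hmax⟩ := exists_max_image (powersetCard s univ) (maxSubIn F univ)
    (powersetCard_nonempty.2 (by simpa using hsr))
  have hpow : (m : ℝ) ^ (r - 2).choose (s - 2) ≤ (maxSubIn F univ S : ℝ) ^ r.choose s :=
    calc _ ≤ _ := hprod
      _ ≤ ∏ _ ∈ powersetCard s univ, (maxSubIn F univ S : ℝ) :=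
          prod_le_prod (fun _ _ => Nat.cast_nonneg _) fun T hT => by exact_mod_cast hmax T hT
      _ = _ := by rw [prod_const, card_powersetCard, card_univ, Fintype.card_fin]
  refine ⟨S, hS, ?_⟩
  rw [choose_two_div_choose_two hs hsr, maxSub_eq_maxSubIn]
  exact rpow_div_le_of_pow_le_pow (Nat.cast_nonneg _) (Nat.cast_nonneg _)
    (Nat.choose_pos hsr).ne' hpow
end

section
/- Let r ≥ 2 and let nonnegative weights w_P be given for each pair P of an r-element set R, with total weight w = Σ_P w_P. If s < r-1 and some weight w_P differs from w/C(r,2) by at least F ≥ 0, then there exists S ⊆ R with |S| = s such that Σ_{P⊆S} w_P ≥ (C(s,2)/C(r,2))·w + C(s,2)·F/(r·C(r,2)²). -/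
open Finset


section
variable {α : Type*} [DecidableEq α] [Fintype α]

omit [Fintype α] in
lemma wd_count_sub (s : ℕ) (U T : Finset α) (hTU : T ⊆ U) (hts : T.card ≤ s) :
    ((powersetCard s U).filter (fun S => T ⊆ S)).card
      = (U.card - T.card).choose (s - T.card) := by
  rw [← card_sdiff_of_subset hTU, ← Finset.card_powersetCard (s - T.card) (U \ T)]
  apply Finset.card_bij' (fun S _ => S \ T) (fun S' _ => S' ∪ T)
  · intro S hS
    simp only [mem_filter, mem_powersetCard] at hS
    obtain ⟨⟨hSU, hSc⟩, hTS⟩ := hS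
    rw [mem_powersetCard]
    exact ⟨sdiff_subset_sdiff hSU le_rfl, by rw [card_sdiff_of_subset hTS, hSc]⟩
  · intro S' hS'
    rw [mem_powersetCard] at hS'
    obtain ⟨hsub, hcard⟩ := hS'
    have hdisj : Disjoint S' T := disjoint_left.mpr fun a ha => (mem_sdiff.mp (hsub ha)).2
    simp only [mem_filter, mem_powersetCard]
    refine ⟨⟨union_subset (hsub.trans sdiff_subset) hTU, ?_⟩, subset_union_right⟩
    rw [card_union_of_disjoint hdisj, hcard]
    omega
  · intro S hS
    simp only [mem_filter, mem_powersetCard] at hS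
    exact sdiff_union_of_subset hS.2
  · intro S' hS'
    rw [mem_powersetCard] at hS'
    have hdisj : Disjoint S' T := disjoint_left.mpr fun a ha => (mem_sdiff.mp (hS'.1 ha)).2
    exact union_sdiff_cancel_right hdisj

lemma wd_cell_card (s : ℕ) (T E : Finset α) (hd : Disjoint T E) (hts : T.card ≤ s) :
    ((powersetCard s (univ : Finset α)).filter (fun S => T ⊆ S ∧ Disjoint S E)).card
      = (Fintype.card α - T.card - E.card).choose (s - T.card) := by
  have hset : (powersetCard s (univ : Finset α)).filter (fun S => T ⊆ S ∧ Disjoint S E)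
      = (powersetCard s (univ \ E)).filter (fun S => T ⊆ S) := by
    ext S
    simp only [mem_filter, mem_powersetCard, subset_sdiff, subset_univ, true_and]
    tauto
  have hTU : T ⊆ univ \ E := fun a ha => mem_sdiff.mpr ⟨mem_univ a, disjoint_left.mp hd ha⟩
  rw [hset, wd_count_sub s _ T hTU hts, card_sdiff_of_subset (subset_univ E), card_univ]
  congr 1
  omega

omit [Fintype α] in
lemma wd_cell_zero_lt (s : ℕ) (U : Finset α) (T E : Finset α) (h : s < T.card) :
    ((powersetCard s U).filter (fun S => T ⊆ S ∧ Disjoint S E)).card = 0 := by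
  rw [Finset.card_eq_zero, Finset.filter_eq_empty_iff]
  intro S hS
  rw [mem_powersetCard] at hS
  rintro ⟨hTS, -⟩
  exact absurd (Finset.card_le_card hTS) (by omega)

omit [Fintype α] in
lemma wd_cell_zero_mem (s : ℕ) (U : Finset α) (T E : Finset α) (e : α) (heT : e ∈ T) (heE : e ∈ E) :
    ((powersetCard s U).filter (fun S => T ⊆ S ∧ Disjoint S E)).card = 0 := by
  rw [Finset.card_eq_zero, Finset.filter_eq_empty_iff]
  rintro S hS ⟨hTS, hdis⟩
  exact disjoint_left.mp hdis (hTS heT) heE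

omit [Fintype α] in
lemma wd_split (F : Finset (Finset α)) (x y : α) (κb κ1 κn : ℝ) :
    ∑ S ∈ F, (if x ∈ S then (if y ∈ S then κb else κ1) else (if y ∈ S then κ1 else κn))
    = κb * (F.filter (fun S => x ∈ S ∧ y ∈ S)).card
      + κ1 * (F.filter (fun S => x ∈ S ∧ y ∉ S)).card
      + κ1 * (F.filter (fun S => ¬ x ∈ S ∧ y ∈ S)).card
      + κn * (F.filter (fun S => ¬ x ∈ S ∧ y ∉ S)).card := by
  have key : ∀ (p : Finset α → Prop) [DecidablePred p] (c : ℝ),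
      (∀ S, p S → (if x ∈ S then (if y ∈ S then κb else κ1) else (if y ∈ S then κ1 else κn)) = c) →
      ∑ S ∈ F.filter p, (if x ∈ S then (if y ∈ S then κb else κ1) else (if y ∈ S then κ1 else κn))
        = c * (F.filter p).card := by
    intro p _ c hc
    rw [Finset.sum_congr rfl (fun S hS => hc S (Finset.mem_filter.mp hS).2), Finset.sum_const,
      nsmul_eq_mul, mul_comm]
  rw [← Finset.sum_filter_add_sum_filter_not F (fun S => x ∈ S),
    ← Finset.sum_filter_add_sum_filter_not (F.filter (fun S => x ∈ S)) (fun S => y ∈ S),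
    ← Finset.sum_filter_add_sum_filter_not (F.filter (fun S => ¬ x ∈ S)) (fun S => y ∈ S),
    filter_filter, filter_filter, filter_filter, filter_filter]
  rw [key (fun S => x ∈ S ∧ y ∈ S) κb (by intro S h; simp [h.1, h.2]),
    key (fun S => x ∈ S ∧ ¬ y ∈ S) κ1 (by intro S h; simp [h.1, h.2]),
    key (fun S => ¬ x ∈ S ∧ y ∈ S) κ1 (by intro S h; simp [h.1, h.2]),
    key (fun S => ¬ x ∈ S ∧ ¬ y ∈ S) κn (by intro S h; simp [h.1, h.2])]
  ring

end


namespace WD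
def a4 (r s : ℕ) : ℕ := (r-4).choose (s-2)
def m3 (r s : ℕ) : ℕ := (r-3).choose (s-2)
def n2 (r s : ℕ) : ℕ := (r-2).choose (s-2)
def c3 (r s : ℕ) : ℕ := if 3 ≤ s then (r-3).choose (s-3) else 0
def c4 (r s : ℕ) : ℕ := if 4 ≤ s then (r-4).choose (s-4) else 0
def b4 (r s : ℕ) : ℕ := if 3 ≤ s then (r-4).choose (s-3) else 0
end WD

lemma wd_key (r s : ℕ) (hs : 2 ≤ s) (hsr : s + 2 ≤ r) (x y : Fin r) (hxy : x ≠ y)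
    (κb κ1 κn : ℕ)
    (hAB : κb * WD.c3 r s + κ1 * WD.m3 r s
         = κb * WD.c4 r s + 2 * (κ1 * WD.b4 r s) + κn * WD.a4 r s)
    (P : Finset (Fin r)) (hP : P ∈ powersetCard 2 (univ : Finset (Fin r))) :
    ∑ S ∈ (powersetCard s (univ : Finset (Fin r))).filter (fun S => P ⊆ S),
      (if x ∈ S then (if y ∈ S then (κb:ℝ) else (κ1:ℝ)) else (if y ∈ S then (κ1:ℝ) else (κn:ℝ)))
    = if P = ({x,y} : Finset (Fin r)) then ((κb * WD.n2 r s : ℕ) : ℝ)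
      else ((κb * WD.c3 r s + κ1 * WD.m3 r s : ℕ) : ℝ) := by
  have hP2 : P.card = 2 := (mem_powersetCard.mp hP).2
  rw [wd_split]
  rw [filter_filter, filter_filter, filter_filter, filter_filter]
  -- rewrite the four cell filters into (T ⊆ S ∧ Disjoint S E) form
  have cellb : (powersetCard s (univ : Finset (Fin r))).filter (fun S => P ⊆ S ∧ (x ∈ S ∧ y ∈ S))
      = (powersetCard s (univ : Finset (Fin r))).filter
          (fun S => insert x (insert y P) ⊆ S ∧ Disjoint S (∅ : Finset (Fin r))) := by
    apply filter_congr; intro S _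
    simp [insert_subset_iff]; tauto
  have cellx : (powersetCard s (univ : Finset (Fin r))).filter (fun S => P ⊆ S ∧ (x ∈ S ∧ y ∉ S))
      = (powersetCard s (univ : Finset (Fin r))).filter
          (fun S => insert x P ⊆ S ∧ Disjoint S ({y} : Finset (Fin r))) := by
    apply filter_congr; intro S _
    simp [insert_subset_iff, disjoint_singleton_right]; tauto
  have celly : (powersetCard s (univ : Finset (Fin r))).filter (fun S => P ⊆ S ∧ (¬ x ∈ S ∧ y ∈ S))
      = (powersetCard s (univ : Finset (Fin r))).filter
          (fun S => insert y P ⊆ S ∧ Disjoint S ({x} : Finset (Fin r))) := by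
    apply filter_congr; intro S _
    simp [insert_subset_iff, disjoint_singleton_right]; tauto
  have celln : (powersetCard s (univ : Finset (Fin r))).filter (fun S => P ⊆ S ∧ (¬ x ∈ S ∧ y ∉ S))
      = (powersetCard s (univ : Finset (Fin r))).filter
          (fun S => P ⊆ S ∧ Disjoint S ({x, y} : Finset (Fin r))) := by
    apply filter_congr; intro S _
    simp [disjoint_insert_right, disjoint_singleton_right]
  rw [cellb, cellx, celly, celln]
  have hcardfin : Fintype.card (Fin r) = r := Fintype.card_fin r
  by_cases hxP : x ∈ P <;> by_cases hyP : y ∈ P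
  · -- P = {x,y}
    have hPeq : P = ({x,y} : Finset (Fin r)) := by
      refine (Finset.eq_of_subset_of_card_le (insert_subset hxP (singleton_subset_iff.2 hyP)) ?_).symm
      rw [hP2, card_insert_of_notMem (by simp [hxy]), card_singleton]
    rw [if_pos hPeq]
    have e1 : insert x (insert y P) = P := by
      rw [Finset.insert_eq_self.mpr (by simp [hPeq]), Finset.insert_eq_self.mpr (by simp [hPeq])]
    rw [e1]
    rw [wd_cell_card s P ∅ (disjoint_empty_right P) (by omega)]
    rw [wd_cell_zero_mem s univ _ _ y (mem_insert_of_mem hyP) (mem_singleton_self y)]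
    rw [wd_cell_zero_mem s univ _ _ x (mem_insert_of_mem hxP) (mem_singleton_self x)]
    rw [wd_cell_zero_mem s univ _ _ x hxP (mem_insert_self x {y})]
    rw [hcardfin, hP2]
    simp [WD.n2]
  · -- P = {x,z} : A-class through x
    have hPne : P ≠ ({x,y} : Finset (Fin r)) := by
      intro h; exact hyP (h ▸ mem_insert_of_mem (mem_singleton_self y))
    rw [if_neg hPne]
    have e1 : insert x (insert y P) = insert y P := by
      rw [Finset.insert_comm, Finset.insert_eq_self.mpr hxP]
    have hyc : (insert y P).card = 3 := by rw [card_insert_of_notMem hyP, hP2]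
    have hbval : ((powersetCard s (univ : Finset (Fin r))).filter
        (fun S => insert x (insert y P) ⊆ S ∧ Disjoint S (∅ : Finset (Fin r)))).card = WD.c3 r s := by
      rw [e1]
      rcases le_or_gt 3 s with h3 | h3
      · rw [wd_cell_card s _ ∅ (disjoint_empty_right _) (by omega), hcardfin, hyc]
        simp [WD.c3, h3]
      · rw [wd_cell_zero_lt s univ _ _ (by omega), WD.c3, if_neg (by omega)]
    have e2 : insert x P = P := Finset.insert_eq_self.mpr hxP
    have hxval : ((powersetCard s (univ : Finset (Fin r))).filter
        (fun S => insert x P ⊆ S ∧ Disjoint S ({y} : Finset (Fin r)))).card = WD.m3 r s := by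
      rw [e2, wd_cell_card s P {y} (disjoint_singleton_right.mpr hyP) (by omega),
        hcardfin, hP2, card_singleton]
      show (r - 2 - 1).choose (s-2) = WD.m3 r s
      rw [WD.m3]
      congr 1
    rw [hbval, hxval]
    rw [wd_cell_zero_mem s univ _ _ x (mem_insert_of_mem hxP) (mem_singleton_self x)]
    rw [wd_cell_zero_mem s univ _ _ x hxP (mem_insert_self x {y})]
    push_cast
    ring
  · -- P = {y,z} : A-class through y
    have hPne : P ≠ ({x,y} : Finset (Fin r)) := by
      intro h; exact hxP (h ▸ mem_insert_self x {y})
    rw [if_neg hPne]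
    have e1 : insert x (insert y P) = insert x P := by
      rw [Finset.insert_eq_self.mpr hyP]
    have hxc : (insert x P).card = 3 := by rw [card_insert_of_notMem hxP, hP2]
    have hbval : ((powersetCard s (univ : Finset (Fin r))).filter
        (fun S => insert x (insert y P) ⊆ S ∧ Disjoint S (∅ : Finset (Fin r)))).card = WD.c3 r s := by
      rw [e1]
      rcases le_or_gt 3 s with h3 | h3
      · rw [wd_cell_card s _ ∅ (disjoint_empty_right _) (by omega), hcardfin, hxc]
        simp [WD.c3, h3]
      · rw [wd_cell_zero_lt s univ _ _ (by omega), WD.c3, if_neg (by omega)]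
    have e2 : insert y P = P := Finset.insert_eq_self.mpr hyP
    have hyval : ((powersetCard s (univ : Finset (Fin r))).filter
        (fun S => insert y P ⊆ S ∧ Disjoint S ({x} : Finset (Fin r)))).card = WD.m3 r s := by
      rw [e2, wd_cell_card s P {x} (disjoint_singleton_right.mpr hxP) (by omega),
        hcardfin, hP2, card_singleton]
      show (r - 2 - 1).choose (s-2) = WD.m3 r s
      rw [WD.m3]
      congr 1
    rw [hbval, hyval]
    rw [wd_cell_zero_mem s univ _ _ y (mem_insert_of_mem hyP) (mem_singleton_self y)]
    rw [wd_cell_zero_mem s univ _ _ y hyP (mem_insert_of_mem (mem_singleton_self y))]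
    push_cast
    ring
  · -- B-class
    have hPne : P ≠ ({x,y} : Finset (Fin r)) := by
      intro h; exact hxP (h ▸ mem_insert_self x {y})
    rw [if_neg hPne]
    have hyc : (insert y P).card = 3 := by rw [card_insert_of_notMem hyP, hP2]
    have hxc : (insert x (insert y P)).card = 4 := by
      rw [card_insert_of_notMem (by simp [hxy, hxP]), hyc]
    have hxc' : (insert x P).card = 3 := by rw [card_insert_of_notMem hxP, hP2]
    have hyc' : (insert y P).card = 3 := hyc
    have hbval : ((powersetCard s (univ : Finset (Fin r))).filter
        (fun S => insert x (insert y P) ⊆ S ∧ Disjoint S (∅ : Finset (Fin r)))).card = WD.c4 r s := by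
      rcases le_or_gt 4 s with h4 | h4
      · rw [wd_cell_card s _ ∅ (disjoint_empty_right _) (by omega), hcardfin, hxc]
        simp [WD.c4, h4]
      · rw [wd_cell_zero_lt s univ _ _ (by omega), WD.c4, if_neg (by omega)]
    have hxval : ((powersetCard s (univ : Finset (Fin r))).filter
        (fun S => insert x P ⊆ S ∧ Disjoint S ({y} : Finset (Fin r)))).card = WD.b4 r s := by
      rcases le_or_gt 3 s with h3 | h3
      · rw [wd_cell_card s _ {y} (disjoint_singleton_right.mpr (by simp [Ne.symm hxy, hyP]))
          (by omega), hcardfin, hxc', card_singleton]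
        rw [WD.b4, if_pos h3]
        congr 1
      · rw [wd_cell_zero_lt s univ _ _ (by omega), WD.b4, if_neg (by omega)]
    have hyval : ((powersetCard s (univ : Finset (Fin r))).filter
        (fun S => insert y P ⊆ S ∧ Disjoint S ({x} : Finset (Fin r)))).card = WD.b4 r s := by
      rcases le_or_gt 3 s with h3 | h3
      · rw [wd_cell_card s _ {x} (disjoint_singleton_right.mpr (by simp [hxy, hxP]))
          (by omega), hcardfin, hyc', card_singleton]
        rw [WD.b4, if_pos h3]
        congr 1
      · rw [wd_cell_zero_lt s univ _ _ (by omega), WD.b4, if_neg (by omega)]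
    have hnval : ((powersetCard s (univ : Finset (Fin r))).filter
        (fun S => P ⊆ S ∧ Disjoint S ({x, y} : Finset (Fin r)))).card = WD.a4 r s := by
      have hd : Disjoint P ({x,y} : Finset (Fin r)) := by
        rw [disjoint_insert_right, disjoint_singleton_right]
        exact ⟨hxP, hyP⟩
      rw [wd_cell_card s P {x,y} hd (by omega), hcardfin, hP2,
        card_insert_of_notMem (by simp [hxy]), card_singleton]
      rw [WD.a4]
      congr 1
    rw [hbval, hxval, hyval, hnval]
    have hc := congrArg (Nat.cast : ℕ → ℝ) hAB
    push_cast
    push_cast at hc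
    linarith


lemma wd_swap (r s : ℕ) (κ w : Finset (Fin r) → ℝ) :
    ∑ S ∈ powersetCard s (univ : Finset (Fin r)), κ S * ∑ P ∈ powersetCard 2 S, w P
    = ∑ P ∈ powersetCard 2 (univ : Finset (Fin r)),
        (∑ S ∈ (powersetCard s (univ : Finset (Fin r))).filter (fun S => P ⊆ S), κ S) * w P := by
  have h : ∀ S ∈ powersetCard s (univ : Finset (Fin r)),
      κ S * ∑ P ∈ powersetCard 2 S, w P
      = ∑ P ∈ powersetCard 2 (univ : Finset (Fin r)), if P ⊆ S then κ S * w P else 0 := by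
    intro S hS
    rw [Finset.mul_sum, ← Finset.sum_filter]
    apply Finset.sum_congr ?_ (fun _ _ => rfl)
    ext P
    simp only [mem_powersetCard, mem_filter, subset_univ, true_and]
    tauto
  rw [Finset.sum_congr rfl h, Finset.sum_comm]
  apply Finset.sum_congr rfl
  intro P hP
  rw [Finset.sum_mul]
  exact (Finset.sum_filter _ _).symm

lemma wd_exists (r s : ℕ) (hs : 2 ≤ s) (hsr2 : s + 2 ≤ r)
    (w : Finset (Fin r) → ℝ) (W : ℝ)
    (hW : W = ∑ P ∈ powersetCard 2 (univ : Finset (Fin r)), w P)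
    (x y : Fin r) (hxy : x ≠ y) (κb κ1 κn : ℕ)
    (hAB : κb * WD.c3 r s + κ1 * WD.m3 r s
         = κb * WD.c4 r s + 2 * (κ1 * WD.b4 r s) + κn * WD.a4 r s)
    (S0 : Finset (Fin r)) (hS0 : S0 ∈ powersetCard s (univ : Finset (Fin r)))
    (hS0pos : (0:ℝ) < (if x ∈ S0 then (if y ∈ S0 then (κb:ℝ) else (κ1:ℝ))
        else (if y ∈ S0 then (κ1:ℝ) else (κn:ℝ))))
    (T : ℝ)
    (hnum : ∀ K : ℝ, 0 ≤ K →
        K * (s.choose 2 : ℝ) = ((κb * WD.n2 r s : ℕ) : ℝ)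
            + ((κb * WD.c3 r s + κ1 * WD.m3 r s : ℕ) : ℝ) * ((r.choose 2 : ℝ) - 1) →
        K * T ≤ ((κb * WD.n2 r s : ℕ) : ℝ) * w {x,y}
            + ((κb * WD.c3 r s + κ1 * WD.m3 r s : ℕ) : ℝ) * (W - w {x,y})) :
    ∃ S ∈ powersetCard s (univ : Finset (Fin r)), T ≤ ∑ P ∈ powersetCard 2 S, w P := by
  by_contra hcon
  push_neg at hcon
  set κ : Finset (Fin r) → ℝ := fun S =>
    (if x ∈ S then (if y ∈ S then (κb:ℝ) else (κ1:ℝ)) else (if y ∈ S then (κ1:ℝ) else (κn:ℝ)))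
    with hκ
  have hκnn : ∀ S, 0 ≤ κ S := by
    intro S
    rw [hκ]
    dsimp only
    split_ifs <;> positivity
  set K : ℝ := ∑ S ∈ powersetCard s (univ : Finset (Fin r)), κ S with hKdef
  have hK0 : 0 ≤ K := Finset.sum_nonneg fun S _ => hκnn S
  set A : ℝ := ((κb * WD.n2 r s : ℕ) : ℝ) with hA
  set B : ℝ := ((κb * WD.c3 r s + κ1 * WD.m3 r s : ℕ) : ℝ) with hB
  have hxymem : ({x,y} : Finset (Fin r)) ∈ powersetCard 2 (univ : Finset (Fin r)) := by
    rw [mem_powersetCard]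
    exact ⟨subset_univ _, by rw [card_insert_of_notMem (by simp [hxy]), card_singleton]⟩
  have hcardP : (powersetCard 2 (univ : Finset (Fin r))).card = r.choose 2 := by
    rw [Finset.card_powersetCard, card_univ, Fintype.card_fin]
  -- generic evaluation of the RHS of wd_swap
  have heval : ∀ v : Finset (Fin r) → ℝ,
      ∑ P ∈ powersetCard 2 (univ : Finset (Fin r)),
        (∑ S ∈ (powersetCard s (univ : Finset (Fin r))).filter (fun S => P ⊆ S), κ S) * v P
      = B * (∑ P ∈ powersetCard 2 (univ : Finset (Fin r)), v P) + (A - B) * v {x,y} := by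
    intro v
    have hstep : ∀ P ∈ powersetCard 2 (univ : Finset (Fin r)),
        (∑ S ∈ (powersetCard s (univ : Finset (Fin r))).filter (fun S => P ⊆ S), κ S) * v P
        = B * v P + (if P = ({x,y} : Finset (Fin r)) then (A - B) * v P else 0) := by
      intro P hP
      rw [hκ]
      rw [wd_key r s hs hsr2 x y hxy κb κ1 κn hAB P hP]
      split_ifs with h
      · ring
      · ring
    rw [Finset.sum_congr rfl hstep, Finset.sum_add_distrib, ← Finset.mul_sum,
      Finset.sum_ite_eq' _ ({x,y} : Finset (Fin r)), if_pos hxymem]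
  -- identity for w
  have hid1 : ∑ S ∈ powersetCard s (univ : Finset (Fin r)),
      κ S * ∑ P ∈ powersetCard 2 S, w P = B * W + (A - B) * w {x,y} := by
    rw [wd_swap r s κ w, heval w, hW]
  -- identity for constant 1
  have hid2 : K * (s.choose 2 : ℝ) = A + B * ((r.choose 2 : ℝ) - 1) := by
    have h1 : ∑ S ∈ powersetCard s (univ : Finset (Fin r)),
        κ S * ∑ P ∈ powersetCard 2 S, (fun _ => (1:ℝ)) P
        = B * (∑ P ∈ powersetCard 2 (univ : Finset (Fin r)), (fun _ => (1:ℝ)) P)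
          + (A - B) * (1:ℝ) := by
      rw [wd_swap r s κ (fun _ => (1:ℝ)), heval (fun _ => (1:ℝ))]
    simp only [Finset.sum_const, nsmul_eq_mul, mul_one] at h1
    rw [hcardP] at h1
    have h2 : ∀ S ∈ powersetCard s (univ : Finset (Fin r)),
        κ S * ((powersetCard 2 S).card : ℝ) = κ S * (s.choose 2 : ℝ) := by
      intro S hS
      rw [Finset.card_powersetCard, (mem_powersetCard.mp hS).2]
    rw [Finset.sum_congr rfl h2, ← Finset.sum_mul] at h1
    rw [hKdef]
    linarith
  -- strict inequality
  have hlt : ∑ S ∈ powersetCard s (univ : Finset (Fin r)),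
      κ S * ∑ P ∈ powersetCard 2 S, w P < K * T := by
    rw [hKdef, Finset.sum_mul]
    apply Finset.sum_lt_sum
    · intro S hS
      exact mul_le_mul_of_nonneg_left (le_of_lt (hcon S hS)) (hκnn S)
    · exact ⟨S0, hS0, by
        apply mul_lt_mul_of_pos_left (hcon S0 hS0)
        simpa only [hκ] using hS0pos⟩
  have := hnum K hK0 hid2
  rw [hid1] at hlt
  linarith [this, hlt]


lemma wd_G1 (r s : ℕ) (hs : 2 ≤ s) (hsr2 : s + 2 ≤ r) :
    WD.n2 r s = WD.c3 r s + WD.m3 r s := by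
  rcases le_or_gt 3 s with h3 | h3
  · obtain ⟨k, rfl⟩ : ∃ k, s = k + 3 := ⟨s - 3, by omega⟩
    obtain ⟨j, rfl⟩ : ∃ j, r = k + 5 + j := ⟨r - (k+5), by omega⟩
    unfold WD.n2 WD.c3 WD.m3
    rw [if_pos h3]
    have e1 : k + 5 + j - 2 = (k + 2 + j) + 1 := by omega
    have e2 : k + 3 - 2 = k + 1 := by omega
    have e3 : k + 5 + j - 3 = k + 2 + j := by omega
    have e4 : k + 3 - 3 = k := by omega
    rw [e1, e2, e3, e4, Nat.choose_succ_succ']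
  · have h2 : s = 2 := by omega
    subst h2
    simp [WD.n2, WD.c3, WD.m3]

lemma wd_G2 (r s : ℕ) (hs : 2 ≤ s) (hsr2 : s + 2 ≤ r) :
    WD.c3 r s = WD.c4 r s + WD.b4 r s := by
  rcases le_or_gt 4 s with h4 | h4
  · obtain ⟨k, rfl⟩ : ∃ k, s = k + 4 := ⟨s - 4, by omega⟩
    obtain ⟨j, rfl⟩ : ∃ j, r = k + 6 + j := ⟨r - (k+6), by omega⟩
    unfold WD.c3 WD.c4 WD.b4
    rw [if_pos (by omega), if_pos h4, if_pos (by omega)]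
    have e1 : k + 6 + j - 3 = (k + 2 + j) + 1 := by omega
    have e2 : k + 4 - 3 = k + 1 := by omega
    have e3 : k + 6 + j - 4 = k + 2 + j := by omega
    have e4 : k + 4 - 4 = k := by omega
    rw [e1, e2, e3, e4, Nat.choose_succ_succ']
  · rcases le_or_gt 3 s with h3 | h3
    · have h2 : s = 3 := by omega
      subst h2
      simp [WD.c3, WD.c4, WD.b4]
    · have h2 : s = 2 := by omega
      subst h2
      simp [WD.c3, WD.c4, WD.b4]

lemma wd_G3 (r s : ℕ) (hs : 2 ≤ s) (hsr2 : s + 2 ≤ r) :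
    WD.m3 r s = WD.b4 r s + WD.a4 r s := by
  rcases le_or_gt 3 s with h3 | h3
  · obtain ⟨k, rfl⟩ : ∃ k, s = k + 3 := ⟨s - 3, by omega⟩
    obtain ⟨j, rfl⟩ : ∃ j, r = k + 5 + j := ⟨r - (k+5), by omega⟩
    unfold WD.m3 WD.b4 WD.a4
    rw [if_pos h3]
    have e1 : k + 5 + j - 3 = (k + 1 + j) + 1 := by omega
    have e2 : k + 3 - 2 = k + 1 := by omega
    have e3 : k + 5 + j - 4 = k + 1 + j := by omega
    have e4 : k + 3 - 3 = k := by omega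
    rw [e1, e2, e3, e4, Nat.choose_succ_succ']
  · have h2 : s = 2 := by omega
    subst h2
    simp [WD.m3, WD.b4, WD.a4]

lemma wd_G4 (r s : ℕ) (hs : 2 ≤ s) (hsr2 : s + 2 ≤ r) :
    WD.c3 r s * (r - s) = (s - 2) * WD.m3 r s := by
  rcases le_or_gt 3 s with h3 | h3
  · obtain ⟨k, rfl⟩ : ∃ k, s = k + 3 := ⟨s - 3, by omega⟩
    obtain ⟨j, rfl⟩ : ∃ j, r = k + 5 + j := ⟨r - (k+5), by omega⟩
    unfold WD.c3 WD.m3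
    rw [if_pos h3]
    have e1 : k + 5 + j - 3 = k + 2 + j := by omega
    have e2 : k + 3 - 2 = k + 1 := by omega
    have e3 : k + 3 - 3 = k := by omega
    have e4 : k + 5 + j - (k + 3) = j + 2 := by omega
    rw [e1, e2, e3, e4]
    have := Nat.choose_succ_right_eq (k + 2 + j) k
    have e5 : k + 2 + j - k = j + 2 := by omega
    rw [e5] at this
    rw [← this]
    exact Nat.mul_comm _ _
  · have h2 : s = 2 := by omega
    subst h2
    simp [WD.c3]

lemma wd_G5 (r s : ℕ) (hs : 2 ≤ s) (hsr2 : s + 2 ≤ r) :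
    WD.b4 r s * (r - s - 1) = (s - 2) * WD.a4 r s := by
  rcases le_or_gt 3 s with h3 | h3
  · obtain ⟨k, rfl⟩ : ∃ k, s = k + 3 := ⟨s - 3, by omega⟩
    obtain ⟨j, rfl⟩ : ∃ j, r = k + 5 + j := ⟨r - (k+5), by omega⟩
    unfold WD.b4 WD.a4
    rw [if_pos h3]
    have e1 : k + 5 + j - 4 = k + 1 + j := by omega
    have e2 : k + 3 - 2 = k + 1 := by omega
    have e3 : k + 3 - 3 = k := by omega
    have e4 : k + 5 + j - (k + 3) - 1 = j + 1 := by omega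
    rw [e1, e2, e3, e4]
    have := Nat.choose_succ_right_eq (k + 1 + j) k
    have e5 : k + 1 + j - k = j + 1 := by omega
    rw [e5] at this
    rw [← this]
    exact Nat.mul_comm _ _
  · have h2 : s = 2 := by omega
    subst h2
    simp [WD.b4]

lemma wd_C2_ge (r : ℕ) (hr : 2 ≤ r) : r - 1 ≤ r.choose 2 := by
  rw [Nat.choose_two_right]
  rw [Nat.le_div_iff_mul_le (by norm_num)]
  calc (r-1) * 2 ≤ (r-1) * r := by
        apply Nat.mul_le_mul_left
        omega
    _ = r * (r-1) := by ring

lemma wd_mainp (r s : ℕ) (hs : 2 ≤ s) (hsr2 : s + 2 ≤ r) :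
    (WD.a4 r s * WD.c3 r s + 0 * WD.m3 r s) * r.choose 2 + WD.a4 r s * WD.m3 r s
      ≤ r * (r.choose 2)^2 * (WD.a4 r s * WD.m3 r s) := by
  have hG4 := wd_G4 r s hs hsr2
  have hc3 : WD.c3 r s ≤ (s - 2) * WD.m3 r s := by
    calc WD.c3 r s ≤ WD.c3 r s * (r - s) := Nat.le_mul_of_pos_right _ (by omega)
      _ = (s - 2) * WD.m3 r s := hG4
  have hC2 : 1 ≤ r.choose 2 := Nat.choose_pos (by omega)
  have hsr : s - 2 + 1 ≤ r := by omega
  have e0 : WD.a4 r s * WD.c3 r s + 0 * WD.m3 r s = WD.a4 r s * WD.c3 r s := by ring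
  rw [e0]
  calc WD.a4 r s * WD.c3 r s * r.choose 2 + WD.a4 r s * WD.m3 r s
      ≤ (WD.a4 r s * ((s-2) * WD.m3 r s)) * r.choose 2 + (WD.a4 r s * WD.m3 r s) * r.choose 2 := by
        have h2 := Nat.mul_le_mul_right (r.choose 2) (Nat.mul_le_mul_left (WD.a4 r s) hc3)
        have h3 : WD.a4 r s * WD.m3 r s ≤ (WD.a4 r s * WD.m3 r s) * r.choose 2 :=
          Nat.le_mul_of_pos_right _ (by omega)
        exact Nat.add_le_add h2 h3
    _ = ((s - 2) + 1) * ((WD.a4 r s * WD.m3 r s) * r.choose 2) := by ring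
    _ ≤ r * ((WD.a4 r s * WD.m3 r s) * r.choose 2) := Nat.mul_le_mul_right _ hsr
    _ ≤ r * ((WD.a4 r s * WD.m3 r s) * ((r.choose 2)^2)) := by
        apply Nat.mul_le_mul_left
        apply Nat.mul_le_mul_left
        calc r.choose 2 = r.choose 2 * 1 := by ring
          _ ≤ r.choose 2 * r.choose 2 := Nat.mul_le_mul_left _ hC2
          _ = (r.choose 2)^2 := by ring
    _ = r * (r.choose 2)^2 * (WD.a4 r s * WD.m3 r s) := by ring

lemma wd_mainm (r s : ℕ) (hs : 2 ≤ s) (hsr2 : s + 2 ≤ r) :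
    (WD.b4 r s * WD.c3 r s + (WD.a4 r s + WD.b4 r s) * WD.m3 r s) * r.choose 2
        + WD.a4 r s * WD.m3 r s
      ≤ r * (r.choose 2)^2 * (WD.a4 r s * WD.m3 r s) := by
  have hG4 := wd_G4 r s hs hsr2
  have hG5 := wd_G5 r s hs hsr2
  have hc3 : WD.c3 r s ≤ (s - 2) * WD.m3 r s := by
    calc WD.c3 r s ≤ WD.c3 r s * (r - s) := Nat.le_mul_of_pos_right _ (by omega)
      _ = (s - 2) * WD.m3 r s := hG4
  have hb4 : WD.b4 r s ≤ (s - 2) * WD.a4 r s := by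
    calc WD.b4 r s ≤ WD.b4 r s * (r - s - 1) := Nat.le_mul_of_pos_right _ (by omega)
      _ = (s - 2) * WD.a4 r s := hG5
  have hC2 : 1 ≤ r.choose 2 := Nat.choose_pos (by omega)
  have hC2r : r - 1 ≤ r.choose 2 := wd_C2_ge r (by omega)
  -- c0 ≤ ((s-2)^2 + (s-1)) * (a4 * m3)
  have hc0 : WD.b4 r s * WD.c3 r s + (WD.a4 r s + WD.b4 r s) * WD.m3 r s
      ≤ ((s-2)^2 + (s-1)) * (WD.a4 r s * WD.m3 r s) := by
    have h1 : WD.b4 r s * WD.c3 r s ≤ ((s-2) * WD.a4 r s) * ((s-2) * WD.m3 r s) :=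
      Nat.mul_le_mul hb4 hc3
    have h2 : (WD.a4 r s + WD.b4 r s) * WD.m3 r s
        ≤ (WD.a4 r s + (s-2) * WD.a4 r s) * WD.m3 r s :=
      Nat.mul_le_mul_right _ (by omega)
    calc WD.b4 r s * WD.c3 r s + (WD.a4 r s + WD.b4 r s) * WD.m3 r s
        ≤ ((s-2) * WD.a4 r s) * ((s-2) * WD.m3 r s)
          + (WD.a4 r s + (s-2) * WD.a4 r s) * WD.m3 r s := by omega
      _ = ((s-2)^2 + (s-1)) * (WD.a4 r s * WD.m3 r s) := by
          have : s - 1 = (s - 2) + 1 := by omega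
          rw [this]; ring
  -- key scalar inequality : ((s-2)^2 + s) ≤ r * (r.choose 2)
  have hkey : (s-2)^2 + s ≤ r * r.choose 2 := by
    obtain ⟨m, rfl⟩ : ∃ m, s = m + 2 := ⟨s - 2, by omega⟩
    obtain ⟨j, rfl⟩ : ∃ j, r = m + 4 + j := ⟨r - (m+4), by omega⟩
    have h1 : (m + 4 + j) * (m + 3 + j) ≤ (m+4+j) * (m+4+j).choose 2 := by
      apply Nat.mul_le_mul_left
      have := wd_C2_ge (m+4+j) (by omega)
      omega
    have h2 : (m + 2 - 2)^2 + (m+2) ≤ (m + 4 + j) * (m + 3 + j) := by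
      have e : m + 2 - 2 = m := by omega
      rw [e]
      nlinarith
    omega
  calc (WD.b4 r s * WD.c3 r s + (WD.a4 r s + WD.b4 r s) * WD.m3 r s) * r.choose 2
        + WD.a4 r s * WD.m3 r s
      ≤ (((s-2)^2 + (s-1)) * (WD.a4 r s * WD.m3 r s)) * r.choose 2
        + (WD.a4 r s * WD.m3 r s) * r.choose 2 := by
        have h2 := Nat.mul_le_mul_right (r.choose 2) hc0
        have h3 : WD.a4 r s * WD.m3 r s ≤ (WD.a4 r s * WD.m3 r s) * r.choose 2 :=
          Nat.le_mul_of_pos_right _ (by omega)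
        exact Nat.add_le_add h2 h3
    _ = ((s-2)^2 + s) * ((WD.a4 r s * WD.m3 r s) * r.choose 2) := by
        have e : (s-2)^2 + s = ((s-2)^2 + (s-1)) + 1 := by omega
        rw [e]
        ring
    _ ≤ (r * r.choose 2) * ((WD.a4 r s * WD.m3 r s) * r.choose 2) :=
        Nat.mul_le_mul_right _ hkey
    _ = r * (r.choose 2)^2 * (WD.a4 r s * WD.m3 r s) := by ring

open Finset in
/-- Discrepancy: if `s < r-1` and some pair weight deviates from the average
`w/C(r,2)` by at least `F`, then some `s`-set `S` carries total internal weight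
at least `(C(s,2)/C(r,2))·w + C(s,2)·F/(r·C(r,2)²)`. -/
theorem weighted_discrepancy (r s : ℕ) (hr : 2 ≤ r) (hs : 2 ≤ s) (hsr : s < r - 1)
    (w : Finset (Fin r) → ℝ) (hw : ∀ P, 0 ≤ w P)
    (W F : ℝ)
    (hW : W = ∑ P ∈ powersetCard 2 (univ : Finset (Fin r)), w P)
    (hF : 0 ≤ F)
    (hdev : ∃ P ∈ powersetCard 2 (univ : Finset (Fin r)),
      F ≤ |w P - W / (r.choose 2 : ℝ)|) :
    ∃ S ∈ powersetCard s (univ : Finset (Fin r)),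
      (s.choose 2 : ℝ) / (r.choose 2 : ℝ) * W +
        (s.choose 2 : ℝ) * F / ((r : ℝ) * (r.choose 2 : ℝ) ^ 2) ≤
      ∑ P ∈ powersetCard 2 S, w P := by
  obtain ⟨P0, hP0mem, hP0dev⟩ := hdev
  have hP0card : P0.card = 2 := (mem_powersetCard.mp hP0mem).2
  obtain ⟨x, y, hxy, rfl⟩ := Finset.card_eq_two.mp hP0card
  have hsr2 : s + 2 ≤ r := by omega
  have hG1 := wd_G1 r s hs hsr2
  have hG2 := wd_G2 r s hs hsr2
  have hG3 := wd_G3 r s hs hsr2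
  have ha4pos : 0 < WD.a4 r s := Nat.choose_pos (by omega)
  have hm3pos : 0 < WD.m3 r s := Nat.choose_pos (by omega)
  have hC2pos : 0 < r.choose 2 := Nat.choose_pos (by omega)
  have hC2R : (0:ℝ) < (r.choose 2 : ℝ) := by exact_mod_cast hC2pos
  have hrR : (0:ℝ) < (r:ℝ) := by exact_mod_cast (by omega : 0 < r)
  set δ : ℝ := ((WD.a4 r s * WD.m3 r s : ℕ) : ℝ) with hδ
  have hδ0 : (0:ℝ) ≤ δ := by rw [hδ]; exact Nat.cast_nonneg _
  rcases abs_cases (w {x,y} - W / (r.choose 2 : ℝ)) with ⟨heq, hge⟩ | ⟨heq, hlt2⟩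
  · -- case + : avg + F ≤ w0
    have hdev' : W / (r.choose 2:ℝ) + F ≤ w {x,y} := by rw [heq] at hP0dev; linarith
    have hcard2 : ({x,y} : Finset (Fin r)).card = 2 := by
      rw [card_insert_of_notMem (by simp [hxy]), card_singleton]
    obtain ⟨S0, hS0sub, hS0sub2, hS0card⟩ :=
      Finset.exists_subsuperset_card_eq (n := s) (subset_univ ({x,y} : Finset (Fin r)))
        (by rw [hcard2]; exact hs)
        (by rw [card_univ, Fintype.card_fin]; omega)
    have hS0 : S0 ∈ powersetCard s (univ : Finset (Fin r)) :=
      mem_powersetCard.mpr ⟨hS0sub2, hS0card⟩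
    have hxS0 : x ∈ S0 := hS0sub (mem_insert_self x {y})
    have hyS0 : y ∈ S0 := hS0sub (mem_insert_of_mem (mem_singleton_self y))
    refine wd_exists r s hs hsr2 w W hW x y hxy (WD.a4 r s) 0 (WD.b4 r s) ?_ S0 hS0 ?_ _ ?_
    · rw [hG2]; ring
    · simp only [hxS0, hyS0, if_pos]
      exact_mod_cast ha4pos
    · intro K hK0 hKeq
      set B : ℝ := ((WD.a4 r s * WD.c3 r s + 0 * WD.m3 r s : ℕ) : ℝ) with hB
      have hABδ : ((WD.a4 r s * WD.n2 r s : ℕ) : ℝ) = B + δ := by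
        have h : WD.a4 r s * WD.n2 r s
            = (WD.a4 r s * WD.c3 r s + 0 * WD.m3 r s) + WD.a4 r s * WD.m3 r s := by
          rw [hG1]; ring
        rw [hB, hδ]
        exact_mod_cast congrArg (Nat.cast (R := ℝ)) h
      have hKeq' : K * (s.choose 2 : ℝ) = B * (r.choose 2 : ℝ) + δ := by
        rw [hKeq, hABδ]; ring
      have hmain : B * (r.choose 2:ℝ) + δ ≤ (r:ℝ) * (r.choose 2:ℝ)^2 * δ := by
        have h := wd_mainp r s hs hsr2
        rw [hB, hδ]
        exact_mod_cast h
      have hT : K * ((s.choose 2 : ℝ) / (r.choose 2 : ℝ) * W +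
          (s.choose 2 : ℝ) * F / ((r : ℝ) * (r.choose 2 : ℝ) ^ 2))
          = (K * (s.choose 2:ℝ)) * (W / (r.choose 2:ℝ))
            + (K * (s.choose 2:ℝ)) * (F / ((r:ℝ) * (r.choose 2:ℝ)^2)) := by ring
      rw [hT, hKeq', hABδ]
      have e1 : (B * (r.choose 2:ℝ) + δ) * (W / (r.choose 2:ℝ))
          = B * W + δ * (W / (r.choose 2:ℝ)) := by
        field_simp
      have e2 : ((r:ℝ) * (r.choose 2:ℝ)^2 * δ) * (F / ((r:ℝ) * (r.choose 2:ℝ)^2)) = δ * F := by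
        field_simp
      have e3 : (B * (r.choose 2:ℝ) + δ) * (F / ((r:ℝ) * (r.choose 2:ℝ)^2)) ≤ δ * F := by
        rw [← e2]
        apply mul_le_mul_of_nonneg_right hmain
        positivity
      have e4 : δ * (W / (r.choose 2:ℝ)) + δ * F ≤ δ * w {x,y} := by
        have h := mul_le_mul_of_nonneg_left hdev' hδ0
        linarith [h]
      have e5 : (B + δ) * w {x,y} + B * (W - w {x,y}) = B * W + δ * w {x,y} := by ring
      linarith [e1, e3, e4, e5]
  · -- case - : w0 ≤ avg - F
    have hdev' : w {x,y} ≤ W / (r.choose 2:ℝ) - F := by rw [heq] at hP0dev; linarith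
    have hcard2 : ({x,y} : Finset (Fin r)).card = 2 := by
      rw [card_insert_of_notMem (by simp [hxy]), card_singleton]
    obtain ⟨S0, hS0sub, hS0card⟩ :=
      Finset.exists_subset_card_eq
        (show s ≤ ((univ : Finset (Fin r)) \ {x,y}).card by
          rw [card_sdiff_of_subset (subset_univ _), card_univ, Fintype.card_fin, hcard2]; omega)
    have hS0 : S0 ∈ powersetCard s (univ : Finset (Fin r)) :=
      mem_powersetCard.mpr ⟨subset_univ _, hS0card⟩
    have hxS0 : x ∉ S0 := fun h => (mem_sdiff.mp (hS0sub h)).2 (mem_insert_self x {y})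
    have hyS0 : y ∉ S0 := fun h => (mem_sdiff.mp (hS0sub h)).2 (mem_insert_of_mem (mem_singleton_self y))
    refine wd_exists r s hs hsr2 w W hW x y hxy (WD.b4 r s)
      (WD.a4 r s + WD.b4 r s) (WD.a4 r s) ?_ S0 hS0 ?_ _ ?_
    · rw [hG2, hG3]; ring
    · simp only [hxS0, hyS0, if_neg, if_false]
      exact_mod_cast ha4pos
    · intro K hK0 hKeq
      set B : ℝ := ((WD.b4 r s * WD.c3 r s + (WD.a4 r s + WD.b4 r s) * WD.m3 r s : ℕ) : ℝ) with hB
      have hABδ : ((WD.b4 r s * WD.n2 r s : ℕ) : ℝ) = B - δ := by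
        have h : WD.b4 r s * WD.n2 r s + WD.a4 r s * WD.m3 r s
            = WD.b4 r s * WD.c3 r s + (WD.a4 r s + WD.b4 r s) * WD.m3 r s := by
          rw [hG1]; ring
        have h2 : ((WD.b4 r s * WD.n2 r s : ℕ) : ℝ) + δ = B := by
          rw [hB, hδ]
          exact_mod_cast congrArg (Nat.cast (R := ℝ)) h
        linarith [h2]
      have hKeq' : K * (s.choose 2 : ℝ) = B * (r.choose 2 : ℝ) - δ := by
        rw [hKeq, hABδ]; ring
      have hmain : B * (r.choose 2:ℝ) + δ ≤ (r:ℝ) * (r.choose 2:ℝ)^2 * δ := by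
        have h := wd_mainm r s hs hsr2
        rw [hB, hδ]
        exact_mod_cast h
      have hT : K * ((s.choose 2 : ℝ) / (r.choose 2 : ℝ) * W +
          (s.choose 2 : ℝ) * F / ((r : ℝ) * (r.choose 2 : ℝ) ^ 2))
          = (K * (s.choose 2:ℝ)) * (W / (r.choose 2:ℝ))
            + (K * (s.choose 2:ℝ)) * (F / ((r:ℝ) * (r.choose 2:ℝ)^2)) := by ring
      rw [hT, hKeq', hABδ]
      have e1 : (B * (r.choose 2:ℝ) - δ) * (W / (r.choose 2:ℝ))
          = B * W - δ * (W / (r.choose 2:ℝ)) := by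
        field_simp
      have e2 : ((r:ℝ) * (r.choose 2:ℝ)^2 * δ) * (F / ((r:ℝ) * (r.choose 2:ℝ)^2)) = δ * F := by
        field_simp
      have e3 : (B * (r.choose 2:ℝ) - δ) * (F / ((r:ℝ) * (r.choose 2:ℝ)^2)) ≤ δ * F := by
        rw [← e2]
        apply mul_le_mul_of_nonneg_right (by linarith [hmain])
        positivity
      have e4 : δ * w {x,y} ≤ δ * (W / (r.choose 2:ℝ)) - δ * F := by
        have h := mul_le_mul_of_nonneg_left hdev' hδ0
        linarith [h]
      have e5 : (B - δ) * w {x,y} + B * (W - w {x,y}) = B * W - δ * w {x,y} := by ring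
      linarith [e1, e3, e4, e5]
end

section
/- Let nonnegative weights w_P be given on the pairs of an r-element set R with total weight w, and for v ∈ R define d(v) = Σ_{P ∋ v} w_P. If some vertex v has |d(v) - 2w/r| ≥ F, then there exists S ⊆ R with |S| = r-1 and Σ_{P⊆S} w_P ≥ (C(r-1,2)/C(r,2))·w + F/r. -/
open Finset in
/-- If some vertex's weighted degree `d(v) = Σ_{P∋v} w_P` deviates from `2w/r` by
at least `F`, then some `(r-1)`-set `S` has internal weight at least
`(C(r-1,2)/C(r,2))·w + F/r`. -/
theorem degree_discrepancy (r : ℕ) (hr : 2 ≤ r)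
    (w : Finset (Fin r) → ℝ) (hw : ∀ P, 0 ≤ w P)
    (W F : ℝ)
    (hW : W = ∑ P ∈ powersetCard 2 (univ : Finset (Fin r)), w P)
    (hdev : ∃ v : Fin r,
      F ≤ |(∑ P ∈ (powersetCard 2 (univ : Finset (Fin r))).filter (fun P => v ∈ P), w P)
            - 2 * W / (r : ℝ)|) :
    ∃ S ∈ powersetCard (r - 1) (univ : Finset (Fin r)),
      ((r - 1).choose 2 : ℝ) / (r.choose 2 : ℝ) * W + F / (r : ℝ) ≤
        ∑ P ∈ powersetCard 2 S, w P := by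
  classical
  set d : Fin r → ℝ := fun v =>
    ∑ P ∈ (powersetCard 2 (univ : Finset (Fin r))).filter (fun P => v ∈ P), w P with hd
  have rpos : (0:ℝ) < (r:ℝ) := by
    have : 0 < r := lt_of_lt_of_le (by norm_num) hr
    exact_mod_cast this
  have hr2 : (2:ℝ) ≤ (r:ℝ) := by exact_mod_cast hr
  -- splitting lemma
  have hsplit : ∀ u : Fin r,
      W = d u + ∑ P ∈ powersetCard 2 ((univ : Finset (Fin r)).erase u), w P := by
    intro u
    have hfilt : (powersetCard 2 (univ : Finset (Fin r))).filter (fun P => u ∉ P)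
        = powersetCard 2 ((univ : Finset (Fin r)).erase u) := by
      ext P
      simp only [mem_filter, Finset.mem_powersetCard, Finset.subset_erase]
      tauto
    rw [hW, ← Finset.sum_filter_add_sum_filter_not
      (powersetCard 2 (univ : Finset (Fin r))) (fun P => u ∈ P) w, hfilt]
  -- total degree = 2W
  have hsum : ∑ u : Fin r, d u = 2 * W := by
    have h1 : ∀ u : Fin r, d u =
        ∑ P ∈ powersetCard 2 (univ : Finset (Fin r)), if u ∈ P then w P else 0 := by
      intro u; rw [hd]; exact Finset.sum_filter _ _
    calc ∑ u : Fin r, d u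
        = ∑ u : Fin r, ∑ P ∈ powersetCard 2 (univ : Finset (Fin r)),
            if u ∈ P then w P else 0 := Finset.sum_congr rfl (fun u _ => h1 u)
      _ = ∑ P ∈ powersetCard 2 (univ : Finset (Fin r)), ∑ u : Fin r,
            if u ∈ P then w P else 0 := Finset.sum_comm
      _ = ∑ P ∈ powersetCard 2 (univ : Finset (Fin r)), 2 * w P := by
          apply Finset.sum_congr rfl
          intro P hP
          have hcard : P.card = 2 := (Finset.mem_powersetCard.mp hP).2
          rw [Finset.sum_ite_mem, Finset.univ_inter, Finset.sum_const, hcard]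
          simp [two_mul]
      _ = 2 * W := by rw [hW, Finset.mul_sum]
  -- find a vertex of low degree
  have hlow : ∃ u : Fin r, d u ≤ 2 * W / r - F / r := by
    obtain ⟨v, hv⟩ := hdev
    by_cases hF : F ≤ 0
    · -- any vertex of at most average degree works
      have hne : (Finset.univ : Finset (Fin r)).Nonempty := ⟨v, Finset.mem_univ v⟩
      obtain ⟨u, _, hu⟩ := Finset.exists_le_of_sum_le hne
        (show ∑ u : Fin r, d u ≤ ∑ _u : Fin r, 2 * W / r by
          rw [hsum, Finset.sum_const, Finset.card_univ, Fintype.card_fin, nsmul_eq_mul,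
            mul_div_cancel₀ _ (ne_of_gt rpos)])
      refine ⟨u, hu.trans ?_⟩
      have : F / r ≤ 0 := div_nonpos_of_nonpos_of_nonneg hF (le_of_lt rpos)
      linarith
    · push_neg at hF
      rcases le_abs.mp hv with h | h
      · -- d v large: some other vertex is small
        have hvd : 2 * W / r + F ≤ d v := by
          have h' : F ≤ d v - 2 * W / r := h
          linarith
        set s := (Finset.univ : Finset (Fin r)).erase v with hs
        have hscard : s.card = r - 1 := by
          rw [hs, Finset.card_erase_of_mem (Finset.mem_univ v), Finset.card_univ,
            Fintype.card_fin]
        have hscardR : (s.card : ℝ) = (r:ℝ) - 1 := by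
          rw [hscard, Nat.cast_sub (le_trans (by norm_num) hr)]; norm_num
        have hsne : s.Nonempty := by
          rw [← Finset.card_pos, hscard]; omega
        have hsum' : ∑ u ∈ s, d u = 2 * W - d v := by
          have h2 := Finset.add_sum_erase Finset.univ d (Finset.mem_univ v)
          rw [hsum] at h2
          rw [hs]; linarith
        have r1pos : (0:ℝ) < (r:ℝ) - 1 := by linarith
        obtain ⟨u, _, hu⟩ := Finset.exists_le_of_sum_le hsne
          (show ∑ u ∈ s, d u ≤ ∑ _u ∈ s, (2 * W - d v) / ((r:ℝ) - 1) by
            rw [hsum', Finset.sum_const, nsmul_eq_mul, hscardR,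
              mul_div_cancel₀ _ (ne_of_gt r1pos)])
        refine ⟨u, hu.trans ?_⟩
        rw [div_le_iff₀ r1pos]
        have hA : 2 * W / r * r = 2 * W := div_mul_cancel₀ _ (ne_of_gt rpos)
        have hB : F / r * r = F := div_mul_cancel₀ _ (ne_of_gt rpos)
        have hBpos : 0 < F / r := div_pos hF rpos
        nlinarith
      · refine ⟨v, ?_⟩
        have h' : F ≤ -(d v - 2 * W / r) := h
        have hF' : F / r ≤ F := by
          rw [div_le_iff₀ rpos]; nlinarith
        linarith
  -- conclude
  obtain ⟨u, hu⟩ := hlow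
  refine ⟨(univ : Finset (Fin r)).erase u, ?_, ?_⟩
  · rw [Finset.mem_powersetCard]
    exact ⟨Finset.erase_subset _ _, by
      rw [Finset.card_erase_of_mem (Finset.mem_univ u), Finset.card_univ, Fintype.card_fin]⟩
  · have h1 := hsplit u
    have hr0 : (r:ℝ) ≠ 0 := ne_of_gt rpos
    have hr1 : (r:ℝ) - 1 ≠ 0 := by intro hc; nlinarith
    have hchoose : ((r - 1).choose 2 : ℝ) / (r.choose 2 : ℝ) = ((r:ℝ) - 2) / (r:ℝ) := by
      rw [Nat.cast_choose_two, Nat.cast_choose_two]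
      have hcast : ((r - 1 : ℕ) : ℝ) = (r:ℝ) - 1 := by
        rw [Nat.cast_sub (le_trans (by norm_num) hr)]; norm_num
      rw [hcast]
      field_simp
      ring
    rw [hchoose]
    have e : W - 2 * W / r = ((r:ℝ) - 2) / r * W := by field_simp
    linarith
end

section
/- Let nonnegative weights w_P on the pairs of an r-element set R have total weight w. Then either at least r/2 pairs P satisfy w_P ≥ w/r², or there exists S ⊆ R of size r-1 with Σ_{P⊆S} w_P ≥ (1 + 1/(4r·C(r,2)²))·(C(r-1,2)/C(r,2))·w. -/
/-!
Fewer than `r/2` heavy pairs cover fewer than `r` vertices, so some vertex `v` lies on light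
pairs only. The at most `r - 1` pairs through `v` then weigh at most `(r - 1) w / r²` together,
and deleting `v` leaves an `(r - 1)`-set of weight at least `(1 - (r - 1)/r²) w`, which beats the
required bound.
-/

open Finset

namespace Finset

variable {α : Type*} [DecidableEq α]

theorem exists_forall_notMem_of_two_mul_card_lt [Fintype α] {H : Finset (Finset α)}
    (hH : ∀ P ∈ H, #P ≤ 2) (hcard : 2 * #H < Fintype.card α) : ∃ v, ∀ P ∈ H, v ∉ P := by
  have hcover : #(H.biUnion id) < #(univ : Finset α) := by
    have := card_biUnion_le_card_mul H id 2 hH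
    rw [card_univ]
    lia
  obtain ⟨v, -, hv⟩ := exists_mem_notMem_of_card_lt_card hcover
  exact ⟨v, fun P hP hvP => hv (mem_biUnion.2 ⟨P, hP, hvP⟩)⟩

theorem filter_notMem_powersetCard (s : Finset α) (k : ℕ) (v : α) :
    {P ∈ s.powersetCard k | v ∉ P} = (s.erase v).powersetCard k := by
  ext P
  simp only [mem_filter, mem_powersetCard, subset_erase]
  tauto

theorem card_filter_mem_powersetCard {s : Finset α} {v : α} (hv : v ∈ s) {k : ℕ} (hk : 1 ≤ k) :
    #{P ∈ s.powersetCard k | v ∈ P} = (#s - 1).choose (k - 1) := by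
  simpa only [singleton_subset_iff, card_singleton] using
    card_filter_powersetCard_subset {v} s k (singleton_subset_iff.2 hv) hk

theorem sum_powersetCard_sub_le_sum_powersetCard_erase {s : Finset α} {v : α} (hv : v ∈ s)
    {k : ℕ} (hk : 1 ≤ k) {f : Finset α → ℝ} {c : ℝ}
    (hf : ∀ P ∈ s.powersetCard k, v ∈ P → f P ≤ c) :
    ∑ P ∈ s.powersetCard k, f P - (#s - 1).choose (k - 1) * c ≤
      ∑ P ∈ (s.erase v).powersetCard k, f P := by
  have hsplit := sum_filter_add_sum_filter_not (s.powersetCard k) (v ∈ ·) f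
  have hstar : ∑ P ∈ s.powersetCard k with v ∈ P, f P ≤ (#s - 1).choose (k - 1) * c := by
    calc ∑ P ∈ s.powersetCard k with v ∈ P, f P
        ≤ #{P ∈ s.powersetCard k | v ∈ P} • c :=
          sum_le_card_nsmul _ _ _ fun P hP => hf P (mem_filter.1 hP).1 (mem_filter.1 hP).2
      _ = (#s - 1).choose (k - 1) * c := by
          rw [card_filter_mem_powersetCard hv hk, nsmul_eq_mul]
  rw [filter_notMem_powersetCard] at hsplit
  linarith

end Finset

theorem one_add_mul_choose_two_div_choose_two_le {r : ℕ} (hr : 2 ≤ r) :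
    (1 + 1 / (4 * (r : ℝ) * (r.choose 2 : ℝ) ^ 2)) * (((r - 1).choose 2 : ℝ) / (r.choose 2 : ℝ))
      ≤ 1 - ((r : ℝ) - 1) / (r : ℝ) ^ 2 := by
  have hx : (2 : ℝ) ≤ r := by exact_mod_cast hr
  rw [Nat.cast_choose_two, Nat.cast_choose_two, Nat.cast_pred (by lia), ← sub_nonneg]
  set x : ℝ := (r : ℝ)
  have key : 1 - (x - 1) / x ^ 2 -
      (1 + 1 / (4 * x * (x * (x - 1) / 2) ^ 2)) * ((x - 1) * (x - 1 - 1) / 2 / (x * (x - 1) / 2))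
      = ((x + 1) * x ^ 2 * (x - 1) ^ 2 - (x - 2)) / (x ^ 4 * (x - 1) ^ 2) := by
    have : x - 1 ≠ 0 := by linarith
    field_simp
    ring
  rw [key]
  have hsq : 1 ≤ (x - 1) ^ 2 := by nlinarith
  have hcube : x ≤ (x + 1) * x ^ 2 := by nlinarith
  exact div_nonneg (by nlinarith) (by positivity)

open Finset in
/-- Either at least `r/2` pairs have weight at least `w/r²`, or some `(r-1)`-set
has internal weight at least `(1 + 1/(4r·C(r,2)²))·(C(r-1,2)/C(r,2))·w`. -/
theorem matching_discrepancy (r : ℕ) (hr : 2 ≤ r)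
    (w : Finset (Fin r) → ℝ) (hw : ∀ P, 0 ≤ w P)
    (W : ℝ)
    (hW : W = ∑ P ∈ powersetCard 2 (univ : Finset (Fin r)), w P) :
    ((r : ℝ) / 2 ≤
      (((powersetCard 2 (univ : Finset (Fin r))).filter
        fun P => W / (r : ℝ) ^ 2 ≤ w P).card : ℝ)) ∨
    ∃ S ∈ powersetCard (r - 1) (univ : Finset (Fin r)),
      (1 + 1 / (4 * (r : ℝ) * (r.choose 2 : ℝ) ^ 2)) *
        (((r - 1).choose 2 : ℝ) / (r.choose 2 : ℝ)) * W ≤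
      ∑ P ∈ powersetCard 2 S, w P := by
  set heavy := (powersetCard 2 (univ : Finset (Fin r))).filter fun P => W / (r : ℝ) ^ 2 ≤ w P
  rcases le_or_gt ((r : ℝ) / 2) #heavy with hmany | hfew
  · exact Or.inl hmany
  right
  replace hfew : 2 * #heavy < Fintype.card (Fin r) := by
    rw [Fintype.card_fin]; exact_mod_cast (by linarith : (2 * #heavy : ℝ) < r)
  obtain ⟨v, hv⟩ := exists_forall_notMem_of_two_mul_card_lt
    (fun P hP => (mem_powersetCard.1 (mem_filter.1 hP).1).2.le) hfew
  have hW0 : 0 ≤ W := hW ▸ sum_nonneg fun P _ => hw P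
  have hlight : ∀ P ∈ powersetCard 2 univ, v ∈ P → w P ≤ W / (r : ℝ) ^ 2 :=
    fun P hP hvP => le_of_not_ge fun h => hv P (mem_filter.2 ⟨hP, h⟩) hvP
  have hS := sum_powersetCard_sub_le_sum_powersetCard_erase (mem_univ v) one_le_two hlight
  simp only [← hW, card_univ, Fintype.card_fin, Nat.reduceSub, Nat.choose_one_right] at hS
  rw [Nat.cast_pred (by lia)] at hS
  refine ⟨univ.erase v, mem_powersetCard.2 ⟨erase_subset _ _, by simp⟩, ?_⟩
  calc _ ≤ (1 - ((r : ℝ) - 1) / (r : ℝ) ^ 2) * W :=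
        mul_le_mul_of_nonneg_right (one_add_mul_choose_two_div_choose_two_le hr) hW0
    _ = W - ((r : ℝ) - 1) * (W / (r : ℝ) ^ 2) := by ring
    _ ≤ _ := hS
end
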